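/- arXiv:math/0110030 — 7 statements merged into one kernel-verified Lean document; each statement's English description precedes it below -/
import Mathlib

section
/- Let (κ_n)_{n≥1} be the constant sequence κ_n = 1 (the classical cumulants of the Poisson distribution with parameter 1), let m_n = Σ_{σ ∈ Π_n} κ_σ (sum over all partitions of [n]), and let (c_n)_{n≥1} be the sequence determined by m_n = Σ_{σ ∈ NC_n} c_σ (sum over all noncrossing partitions of [n]). Then for every n ≥ 1, c_n equals the number of connected partitions of [n]. -/
open Finset

open scoped Classical

set_option maxHeartbeats 1000000

/-- A partition of `[n]` is noncrossing if there are no two distinct blocks `B₁, B₂`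
and elements `a, c ∈ B₁`, `b, d ∈ B₂` with `a < b < c < d`. -/
def IsNoncrossing {n : ℕ} (π : Finpartition (Finset.univ : Finset (Fin n))) : Prop :=
  ¬ ∃ B₁ ∈ π.parts, ∃ B₂ ∈ π.parts, B₁ ≠ B₂ ∧
      ∃ a ∈ B₁, ∃ b ∈ B₂, ∃ c ∈ B₁, ∃ d ∈ B₂, a < b ∧ b < c ∧ c < d

/-- `S` is a union of blocks of the partition `π`. -/
def IsUnionOfBlocks {n : ℕ} (π : Finpartition (Finset.univ : Finset (Fin n)))
    (S : Finset (Fin n)) : Prop :=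
  ∃ P ⊆ π.parts, S = P.sup id

/-- A partition of `[n]` is connected if no proper (nonempty) subinterval of `[n]`
is a union of blocks. -/
def IsConnectedPartition {n : ℕ} (π : Finpartition (Finset.univ : Finset (Fin n))) : Prop :=
  ∀ i j : Fin n, i ≤ j → Finset.Icc i j ≠ Finset.univ → ¬ IsUnionOfBlocks π (Finset.Icc i j)

/-- A partition of `[n]` is irreducible if no proper initial segment `{1,…,k}`, `1 ≤ k < n`,
is a union of blocks. -/
def IsIrreduciblePartition {n : ℕ} (π : Finpartition (Finset.univ : Finset (Fin n))) : Prop :=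
  ∀ k : Fin n, (k : ℕ) + 1 < n → ¬ IsUnionOfBlocks π (Finset.Iic k)

/-- An interval partition of `[n]` is a partition all of whose blocks are intervals
of consecutive integers. -/
def IsIntervalPartition {n : ℕ} (π : Finpartition (Finset.univ : Finset (Fin n))) : Prop :=
  ∀ B ∈ π.parts, ∃ i j : Fin n, B = Finset.Icc i j

/-- `a_π = ∏_{B ∈ π} a_{|B|}`. -/
noncomputable def partWeight {n : ℕ} (a : ℕ → ℝ)
    (π : Finpartition (Finset.univ : Finset (Fin n))) : ℝ :=
  ∏ B ∈ π.parts, a B.card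

namespace PCaux

variable {α : Type*} [LinearOrder α] [LocallyFiniteOrder α] [DecidableEq α] {s : Finset α}

/-- Noncrossing, for partitions of an arbitrary finset in a linear order. -/
def NC (P : Finpartition s) : Prop :=
  ¬ ∃ B₁ ∈ P.parts, ∃ B₂ ∈ P.parts, B₁ ≠ B₂ ∧
      ∃ a ∈ B₁, ∃ b ∈ B₂, ∃ c ∈ B₁, ∃ d ∈ B₂, a < b ∧ b < c ∧ c < d

omit [LocallyFiniteOrder α] in
lemma NC.eq_of {P : Finpartition s} (hP : NC P) {B₁ B₂ : Finset α} (h₁ : B₁ ∈ P.parts)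
    (h₂ : B₂ ∈ P.parts) {a b c d : α} (ha : a ∈ B₁) (hb : b ∈ B₂) (hc : c ∈ B₁) (hd : d ∈ B₂)
    (hab : a < b) (hbc : b < c) (hcd : c < d) : B₁ = B₂ := by
  by_contra hne
  exact hP ⟨B₁, h₁, B₂, h₂, hne, a, ha, b, hb, c, hc, d, hd, hab, hbc, hcd⟩

/-- `t` is a union of blocks of `P`. -/
def UB (P : Finpartition s) (t : Finset α) : Prop :=
  ∃ Q ⊆ P.parts, t = Q.sup id

omit [LocallyFiniteOrder α] in
lemma UB_iff {P : Finpartition s} {t : Finset α} (ht : t ⊆ s) :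
    UB P t ↔ ∀ p ∈ P.parts, ¬ Disjoint p t → p ⊆ t := by
  constructor
  · rintro ⟨Q, hQ, rfl⟩ p hp hdisj
    have hex : ∃ q ∈ Q, ¬ Disjoint p (id q) := by
      by_contra h
      push_neg at h
      exact hdisj (Finset.disjoint_sup_right.2 h)
    obtain ⟨q, hq, hpq⟩ := hex
    have hpq' : p = q := P.disjoint.elim hp (hQ hq) hpq
    subst hpq'
    exact Finset.le_sup (f := id) hq
  · intro h
    refine ⟨P.parts.filter (fun p => p ⊆ t), Finset.filter_subset _ _, ?_⟩
    have h1 : t ⊆ (P.parts.filter (fun p => p ⊆ t)).sup id := by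
      intro x hx
      obtain ⟨p, hp, hxp⟩ := P.exists_mem (ht hx)
      have hsub : p ⊆ t := h p hp (Finset.not_disjoint_iff.2 ⟨x, hxp, hx⟩)
      have hmem : p ∈ P.parts.filter (fun p => p ⊆ t) := Finset.mem_filter.2 ⟨hp, hsub⟩
      exact Finset.mem_sup.2 ⟨p, hmem, hxp⟩
    have h2 : (P.parts.filter (fun p => p ⊆ t)).sup id ⊆ t := by
      intro x hx
      obtain ⟨p, hp, hxp⟩ := Finset.mem_sup.1 hx
      exact (Finset.mem_filter.1 hp).2 hxp
    exact subset_antisymm h1 h2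

/-- Connected partition of a finset in a linear order: no proper nonempty induced
subinterval is a union of blocks. -/
def Conn (P : Finpartition s) : Prop :=
  ∀ i j : α, (s ∩ Finset.Icc i j).Nonempty → s ∩ Finset.Icc i j ≠ s →
    ¬ UB P (s ∩ Finset.Icc i j)

omit [LocallyFiniteOrder α] in
lemma sup_filter_of_le {π σ : Finpartition s} (h : π ≤ σ) {V : Finset α} (hV : V ∈ σ.parts) :
    ((π.parts.filter (· ⊆ V)).sup id) = V := by
  have h2 : (π.parts.filter (· ⊆ V)).sup id ⊆ V := by
    intro x hx
    obtain ⟨p, hp, hxp⟩ := Finset.mem_sup.1 hx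
    exact (Finset.mem_filter.1 hp).2 hxp
  have h1 : V ⊆ (π.parts.filter (· ⊆ V)).sup id := by
    intro x hx
    have hxs : x ∈ s := σ.le hV hx
    obtain ⟨p, hp, hxp⟩ := π.exists_mem hxs
    obtain ⟨W, hW, hpW⟩ := h hp
    have hWV : W = V := σ.eq_of_mem_parts hW hV (hpW hxp) hx
    have hpV : p ⊆ V := hWV ▸ hpW
    have hmem : p ∈ π.parts.filter (· ⊆ V) := Finset.mem_filter.2 ⟨hp, hpV⟩
    exact Finset.mem_sup.2 ⟨p, hmem, hxp⟩
  exact subset_antisymm h2 h1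

/-- Restriction of a partition to a union of blocks. -/
def restrict (π : Finpartition s) (V : Finset α)
    (h : ((π.parts.filter (· ⊆ V)).sup id) = V) : Finpartition V :=
  Finpartition.copy
    ⟨π.parts.filter (· ⊆ V), π.supIndep.subset (Finset.filter_subset _ _),
      rfl, fun hb => π.bot_notMem (Finset.filter_subset _ _ hb)⟩ h

omit [LocallyFiniteOrder α] in
@[simp] lemma restrict_parts (π : Finpartition s) (V : Finset α)
    (h : ((π.parts.filter (· ⊆ V)).sup id) = V) :
    (restrict π V h).parts = π.parts.filter (· ⊆ V) := rfl

/-- `σ` is the noncrossing-closure decomposition of `π`: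
`π ≤ σ` and the restriction of `π` to each block of `σ` is connected. -/
def Decomp (π σ : Finpartition s) : Prop :=
  ∃ h : π ≤ σ, ∀ V (hV : V ∈ σ.parts), Conn (restrict π V (sup_filter_of_le h hV))

/-- Split one block of a partition into two pieces. -/
def splitPart (σ : Finpartition s) (V t : Finset α) (hV : V ∈ σ.parts) (ht : t ⊆ V)
    (h1 : t.Nonempty) (h2 : (V \ t).Nonempty) : Finpartition s where
  parts := insert t (insert (V \ t) (σ.parts.erase V))
  supIndep := by
    rw [Finset.supIndep_iff_pairwiseDisjoint]
    have hdtv : Disjoint t (V \ t) := Finset.disjoint_sdiff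
    have hother : ∀ W ∈ σ.parts.erase V, Disjoint V W := fun W hW =>
      σ.disjoint hV (Finset.mem_of_mem_erase hW) (Ne.symm (Finset.ne_of_mem_erase hW))
    intro a ha b hb hab
    simp only [Finset.coe_insert, Set.mem_insert_iff, Finset.mem_coe] at ha hb
    rcases ha with rfl | rfl | ha <;> rcases hb with rfl | rfl | hb
    · exact absurd rfl hab
    · exact hdtv
    · exact (hother _ hb).mono_left ht
    · exact hdtv.symm
    · exact absurd rfl hab
    · exact (hother _ hb).mono_left Finset.sdiff_subset
    · exact (hother _ ha).symm.mono_right ht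
    · exact (hother _ ha).symm.mono_right Finset.sdiff_subset
    · exact σ.disjoint (Finset.mem_of_mem_erase ha) (Finset.mem_of_mem_erase hb) hab
  sup_parts := by
    rw [Finset.sup_insert, Finset.sup_insert, ← sup_assoc]
    have htv : (id t : Finset α) ⊔ id (V \ t) = V := by
      simp only [id]
      rw [Finset.sup_eq_union, Finset.union_sdiff_of_subset ht]
    rw [htv]
    have : V ⊔ (σ.parts.erase V).sup id = (insert V (σ.parts.erase V)).sup id := by
      rw [Finset.sup_insert]; rfl
    rw [this, Finset.insert_erase hV, σ.sup_parts]
  bot_notMem := by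
    simp only [Finset.mem_insert]
    rintro (h | h | h)
    · exact h1.ne_empty (by simpa [Finset.bot_eq_empty] using h.symm)
    · exact h2.ne_empty (by simpa [Finset.bot_eq_empty] using h.symm)
    · exact σ.bot_notMem (Finset.mem_of_mem_erase h)

omit [LocallyFiniteOrder α] in
lemma splitPart_ne (σ : Finpartition s) {V t : Finset α} (hV : V ∈ σ.parts) (ht : t ⊆ V)
    (h1 : t.Nonempty) (h2 : (V \ t).Nonempty) :
    t ≠ V ∧ t ∉ σ.parts ∧ V \ t ∉ σ.parts ∧ t ≠ V \ t := by
  obtain ⟨x, hx⟩ := h1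
  obtain ⟨y, hy⟩ := h2
  have htV : t ≠ V := by
    rintro rfl
    exact (Finset.mem_sdiff.1 hy).2 (Finset.mem_sdiff.1 hy).1
  refine ⟨htV, ?_, ?_, ?_⟩
  · intro hmem
    exact htV (σ.disjoint.elim hmem hV (Finset.not_disjoint_iff.2 ⟨x, hx, ht hx⟩))
  · intro hmem
    have hne : V \ t ≠ V := by
      intro h
      exact (Finset.mem_sdiff.1 (h ▸ (ht hx))).2 hx
    exact hne (σ.disjoint.elim hmem hV
      (Finset.not_disjoint_iff.2 ⟨y, hy, (Finset.mem_sdiff.1 hy).1⟩))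
  · intro h
    exact (Finset.mem_sdiff.1 (h ▸ hx)).2 hx

omit [LocallyFiniteOrder α] in
lemma splitPart_card (σ : Finpartition s) (V t : Finset α) (hV : V ∈ σ.parts) (ht : t ⊆ V)
    (h1 : t.Nonempty) (h2 : (V \ t).Nonempty) :
    (splitPart σ V t hV ht h1 h2).parts.card = σ.parts.card + 1 := by
  obtain ⟨htV, htp, hvtp, htvt⟩ := splitPart_ne σ hV ht h1 h2
  have hc : (splitPart σ V t hV ht h1 h2).parts = insert t (insert (V \ t) (σ.parts.erase V)) :=
    rfl
  rw [hc, Finset.card_insert_of_notMem, Finset.card_insert_of_notMem,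
    Finset.card_erase_of_mem hV]
  · have : 1 ≤ σ.parts.card := Finset.card_pos.2 ⟨V, hV⟩
    omega
  · exact fun h => hvtp (Finset.mem_of_mem_erase h)
  · simp only [Finset.mem_insert]
    rintro (h | h)
    · exact htvt h
    · exact htp (Finset.mem_of_mem_erase h)

omit [LocallyFiniteOrder α] in
lemma le_splitPart {π σ : Finpartition s} (hle : π ≤ σ) (V t : Finset α) (hV : V ∈ σ.parts)
    (ht : t ⊆ V) (h1 : t.Nonempty) (h2 : (V \ t).Nonempty)
    (hsplit : ∀ p ∈ π.parts, ¬ Disjoint p t → p ⊆ t) :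
    π ≤ splitPart σ V t hV ht h1 h2 := by
  intro p hp
  obtain ⟨W, hW, hpW⟩ := hle hp
  by_cases hWV : W = V
  · subst hWV
    by_cases hdp : Disjoint p t
    · exact ⟨W \ t, Finset.mem_insert_of_mem (Finset.mem_insert_self _ _),
        Finset.subset_sdiff.2 ⟨hpW, hdp⟩⟩
    · exact ⟨t, Finset.mem_insert_self _ _, hsplit p hp hdp⟩
  · exact ⟨W, Finset.mem_insert_of_mem (Finset.mem_insert_of_mem
      (Finset.mem_erase.2 ⟨hWV, hW⟩)), hpW⟩

lemma NC_splitPart {σ : Finpartition s} (hσ : NC σ) (V : Finset α) (i j : α)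
    (hV : V ∈ σ.parts) (ht : V ∩ Finset.Icc i j ⊆ V) (h1 : (V ∩ Finset.Icc i j).Nonempty)
    (h2 : (V \ (V ∩ Finset.Icc i j)).Nonempty) :
    NC (splitPart σ V (V ∩ Finset.Icc i j) hV ht h1 h2) := by
  set t := V ∩ Finset.Icc i j with htdef
  rintro ⟨B₁, hB₁, B₂, hB₂, hne, a, ha, b, hb, c, hc, d, hd, hab, hbc, hcd⟩
  have hmem : ∀ B, B ∈ (splitPart σ V t hV ht h1 h2).parts →
      B = t ∨ B = V \ t ∨ B ∈ σ.parts.erase V := by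
    intro B hB
    have : B ∈ insert t (insert (V \ t) (σ.parts.erase V)) := hB
    simpa [Finset.mem_insert] using this
  have hIcc : ∀ x ∈ t, i ≤ x ∧ x ≤ j := by
    intro x hx
    have := (Finset.mem_inter.1 hx).2
    exact Finset.mem_Icc.1 this
  -- a point of V between two points of t lies in t
  have hbetween : ∀ x ∈ V, ∀ u ∈ t, ∀ v ∈ t, u ≤ x → x ≤ v → x ∈ t := by
    intro x hx u hu v hv hux hxv
    exact Finset.mem_inter.2 ⟨hx, Finset.mem_Icc.2
      ⟨(hIcc u hu).1.trans hux, hxv.trans (hIcc v hv).2⟩⟩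
  rcases hmem _ hB₁ with rfl | rfl | hE₁ <;> rcases hmem _ hB₂ with rfl | rfl | hE₂
  · exact hne rfl
  · -- B₁ = t, B₂ = V \ t : b ∈ V between a and c, so b ∈ t, contradiction
    exact (Finset.mem_sdiff.1 hb).2
      (hbetween b (Finset.mem_sdiff.1 hb).1 a ha c hc hab.le hbc.le)
  · -- B₁ = t ⊆ V, B₂ ∈ erase: crossing in σ
    have := hσ.eq_of hV (Finset.mem_of_mem_erase hE₂) (ht ha) hb (ht hc) hd hab hbc hcd
    exact (Finset.ne_of_mem_erase hE₂) this.symm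
  · -- B₁ = V \ t, B₂ = t : c ∈ V between b and d
    exact (Finset.mem_sdiff.1 hc).2
      (hbetween c (Finset.mem_sdiff.1 hc).1 b hb d hd hbc.le hcd.le)
  · exact hne rfl
  · have := hσ.eq_of hV (Finset.mem_of_mem_erase hE₂) (Finset.mem_sdiff.1 ha).1 hb
      (Finset.mem_sdiff.1 hc).1 hd hab hbc hcd
    exact (Finset.ne_of_mem_erase hE₂) this.symm
  · have := hσ.eq_of (Finset.mem_of_mem_erase hE₁) hV ha (ht hb) hc (ht hd) hab hbc hcd
    exact (Finset.ne_of_mem_erase hE₁) this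
  · have := hσ.eq_of (Finset.mem_of_mem_erase hE₁) hV ha (Finset.mem_sdiff.1 hb).1 hc
      (Finset.mem_sdiff.1 hd).1 hab hbc hcd
    exact (Finset.ne_of_mem_erase hE₁) this
  · exact hne (hσ.eq_of (Finset.mem_of_mem_erase hE₁) (Finset.mem_of_mem_erase hE₂)
      ha hb hc hd hab hbc hcd)

omit [LocallyFiniteOrder α] in
lemma NC_top : NC (⊤ : Finpartition s) := by
  rintro ⟨B₁, h₁, B₂, h₂, hne, -⟩
  have e₁ := Finset.mem_singleton.1 (Finpartition.parts_top_subset s h₁)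
  have e₂ := Finset.mem_singleton.1 (Finpartition.parts_top_subset s h₂)
  exact hne (e₁.trans e₂.symm)

omit [LocallyFiniteOrder α] in
lemma parts_top (hs : s.Nonempty) : (⊤ : Finpartition s).parts = {s} := by
  have hsub : (⊤ : Finpartition s).parts ⊆ {s} := Finpartition.parts_top_subset s
  have hne : (⊤ : Finpartition s).parts.Nonempty :=
    Finpartition.parts_nonempty _ (by simpa [Finset.bot_eq_empty] using hs.ne_empty)
  rcases Finset.subset_singleton_iff.1 hsub with h | h
  · rw [h] at hne; exact absurd hne (by simp)
  · exact h

/-- Existence of the noncrossing closure decomposition. -/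
lemma exists_decomp (π : Finpartition s) : ∃ σ : Finpartition s, NC σ ∧ Decomp π σ := by
  obtain ⟨σ, hσc, hmax⟩ := Finset.exists_max_image
    (Finset.univ.filter fun τ : Finpartition s => NC τ ∧ π ≤ τ)
    (fun τ => τ.parts.card)
    ⟨⊤, Finset.mem_filter.2 ⟨Finset.mem_univ _, NC_top, le_top⟩⟩
  obtain ⟨-, hNC, hle⟩ := Finset.mem_filter.1 hσc
  refine ⟨σ, hNC, hle, fun V hV => ?_⟩
  by_contra hC
  rw [Conn] at hC
  push_neg at hC
  obtain ⟨i, j, hne0, hneV, hUB⟩ := hC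
  set u := V ∩ Finset.Icc i j with hu
  have huV : u ⊆ V := Finset.inter_subset_left
  have h2 : (V \ u).Nonempty :=
    Finset.sdiff_nonempty.2 (fun h => hneV (subset_antisymm huV h))
  have hsplitcond : ∀ p ∈ π.parts, ¬ Disjoint p u → p ⊆ u := by
    have hchar := (UB_iff (P := restrict π V (sup_filter_of_le hle hV)) huV).1 hUB
    intro p hp hdp
    obtain ⟨x, hxp, hxu⟩ := Finset.not_disjoint_iff.1 hdp
    obtain ⟨W, hW, hpW⟩ := hle hp
    have hWV : W = V := σ.eq_of_mem_parts hW hV (hpW hxp) (huV hxu)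
    exact hchar p (Finset.mem_filter.2 ⟨hp, hWV ▸ hpW⟩) hdp
  have hτmem : splitPart σ V u hV huV hne0 h2 ∈
      Finset.univ.filter fun τ : Finpartition s => NC τ ∧ π ≤ τ :=
    Finset.mem_filter.2 ⟨Finset.mem_univ _, NC_splitPart hNC V i j hV huV hne0 h2,
      le_splitPart hle V u hV huV hne0 h2 hsplitcond⟩
  have := hmax _ hτmem
  rw [splitPart_card] at this
  omega

/-- Key uniqueness lemma: a decomposition is finer than any noncrossing coarsening. -/
lemma decomp_le {π σ τ : Finpartition s} (hd : Decomp π σ) (hτ : NC τ) (hπτ : π ≤ τ) :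
    σ ≤ τ := by
  obtain ⟨hle, hconn⟩ := hd
  intro B hB
  by_contra hcon
  push_neg at hcon
  have hBne : B.Nonempty := σ.nonempty_of_mem_parts hB
  have hBs : B ⊆ s := σ.le hB
  set hull : Finset α → Finset α :=
    fun T => B.filter fun x => (∃ a ∈ T ∩ B, a ≤ x) ∧ (∃ b ∈ T ∩ B, x ≤ b) with hhull
  set F := τ.parts.filter (fun T => (T ∩ B).Nonempty) with hFdef
  have hFne : F.Nonempty := by
    obtain ⟨x, hx⟩ := hBne
    obtain ⟨T, hT, hxT⟩ := τ.exists_mem (hBs hx)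
    exact ⟨T, Finset.mem_filter.2 ⟨hT, ⟨x, Finset.mem_inter.2 ⟨hxT, hx⟩⟩⟩⟩
  obtain ⟨T, hTF, hmin⟩ := F.exists_min_image (fun T => (hull T).card) hFne
  have hTparts : T ∈ τ.parts := (Finset.mem_filter.1 hTF).1
  have hTBne : (T ∩ B).Nonempty := (Finset.mem_filter.1 hTF).2
  set i := (T ∩ B).min' hTBne with hidef
  set j := (T ∩ B).max' hTBne with hjdef
  have hiTB : i ∈ T ∩ B := Finset.min'_mem _ _
  have hjTB : j ∈ T ∩ B := Finset.max'_mem _ _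
  have hullT_eq : hull T = B ∩ Finset.Icc i j := by
    ext x
    constructor
    · intro hx
      obtain ⟨hxB, ⟨⟨a, haTB, hax⟩, ⟨b, hbTB, hxb⟩⟩⟩ := Finset.mem_filter.1 hx
      exact Finset.mem_inter.2 ⟨hxB, Finset.mem_Icc.2
        ⟨(Finset.min'_le _ a haTB).trans hax, hxb.trans (Finset.le_max' _ b hbTB)⟩⟩
    · intro hx
      obtain ⟨hxB, hIcc⟩ := Finset.mem_inter.1 hx
      obtain ⟨hix, hxj⟩ := Finset.mem_Icc.1 hIcc
      exact Finset.mem_filter.2 ⟨hxB, ⟨⟨i, hiTB, hix⟩, ⟨j, hjTB, hxj⟩⟩⟩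
  have hTB_sub_hull : T ∩ B ⊆ hull T := by
    intro x hx
    refine Finset.mem_filter.2 ⟨(Finset.mem_inter.1 hx).2, ⟨⟨x, hx, le_refl x⟩, ⟨x, hx, le_refl x⟩⟩⟩
  by_cases hcase : ∀ x ∈ hull T, x ∈ T
  · -- hull T = T ∩ B = B ∩ Icc i j is a union of π-blocks inside B : contradicts Conn
    have hTB_eq : B ∩ Finset.Icc i j = T ∩ B := by
      apply subset_antisymm
      · intro x hx
        have hxhull : x ∈ hull T := by rw [hullT_eq]; exact hx
        exact Finset.mem_inter.2 ⟨hcase x hxhull, (Finset.mem_inter.1 hx).1⟩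
      · intro x hx
        rw [← hullT_eq]
        exact hTB_sub_hull hx
    have hij : i ≤ j := Finset.min'_le _ j hjTB
    have hne0 : (B ∩ Finset.Icc i j).Nonempty := by
      rw [hTB_eq]; exact hTBne
    have hneB : B ∩ Finset.Icc i j ≠ B := by
      intro h
      apply hcon T hTparts
      intro x hx
      have : x ∈ T ∩ B := by rw [← hTB_eq, h]; exact hx
      exact (Finset.mem_inter.1 this).1
    apply hconn B hB i j hne0 hneB
    rw [UB_iff Finset.inter_subset_left]
    intro p hp hdp
    obtain ⟨hpπ, hpB⟩ := Finset.mem_filter.1 hp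
    obtain ⟨x, hxp, hxu⟩ := Finset.not_disjoint_iff.1 hdp
    obtain ⟨T'', hT'', hpT''⟩ := hπτ hpπ
    have hxTB : x ∈ T ∩ B := by rw [← hTB_eq]; exact hxu
    have hT''T : T'' = T :=
      τ.eq_of_mem_parts hT'' hTparts (hpT'' hxp) (Finset.mem_inter.1 hxTB).1
    rw [hTB_eq]
    exact fun y hy => Finset.mem_inter.2 ⟨hT''T ▸ hpT'' hy, hpB hy⟩
  · push_neg at hcase
    obtain ⟨x, hxhull, hxT⟩ := hcase
    have hxB : x ∈ B := (Finset.mem_filter.1 hxhull).1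
    obtain ⟨T', hT', hxT'⟩ := τ.exists_mem (hBs hxB)
    have hTT' : T' ≠ T := fun h => hxT (h ▸ hxT')
    have hT'F : T' ∈ F := Finset.mem_filter.2 ⟨hT', ⟨x, Finset.mem_inter.2 ⟨hxT', hxB⟩⟩⟩
    have hxij : i ≤ x ∧ x ≤ j := by
      have := hullT_eq ▸ hxhull
      have h' := Finset.mem_inter.1 this
      exact Finset.mem_Icc.1 h'.2
    have hiT : i ∈ T := (Finset.mem_inter.1 hiTB).1
    have hjT : j ∈ T := (Finset.mem_inter.1 hjTB).1
    have hix : i < x := lt_of_le_of_ne hxij.1 (fun h => hxT (h ▸ hiT))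
    have hxj : x < j := lt_of_le_of_ne hxij.2 (fun h => hxT (h.symm ▸ hjT))
    have hkey : ∀ y ∈ T' ∩ B, i < y ∧ y < j := by
      intro y hy
      have hyT' : y ∈ T' := (Finset.mem_inter.1 hy).1
      have hyT : y ∉ T := fun hyT => hTT' (τ.eq_of_mem_parts hT' hTparts hyT' hyT)
      have hyi : y ≠ i := fun h => hyT (h ▸ hiT)
      have hyj : y ≠ j := fun h => hyT (h ▸ hjT)
      constructor
      · rcases lt_trichotomy i y with h | h | h
        · exact h
        · exact absurd h.symm hyi
        · -- y < i < x < j gives a crossing between T' and T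
          exact absurd (hτ.eq_of hT' hTparts hyT' hiT hxT' hjT h hix hxj) hTT'
      · rcases lt_trichotomy y j with h | h | h
        · exact h
        · exact absurd h hyj
        · -- i < x < j < y gives a crossing between T and T'
          exact absurd (hτ.eq_of hTparts hT' hiT hxT' hjT hyT' hix hxj h) (Ne.symm hTT')
    have hsub : hull T' ⊆ (hull T).erase i := by
      intro z hz
      obtain ⟨hzB, ⟨⟨a, haT'B, haz⟩, ⟨b, hbT'B, hzb⟩⟩⟩ := Finset.mem_filter.1 hz
      have hai := (hkey a haT'B).1
      have hbj := (hkey b hbT'B).2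
      refine Finset.mem_erase.2 ⟨?_, ?_⟩
      · exact fun h => absurd (h ▸ (hai.trans_le haz)) (lt_irrefl i)
      · exact Finset.mem_filter.2 ⟨hzB, ⟨⟨i, hiTB, (hai.trans_le haz).le⟩,
          ⟨j, hjTB, hzb.trans hbj.le⟩⟩⟩
    have hihull : i ∈ hull T := hTB_sub_hull hiTB
    have hlt : (hull T').card < (hull T).card := by
      calc (hull T').card ≤ ((hull T).erase i).card := Finset.card_le_card hsub
        _ < (hull T).card := Finset.card_erase_lt_of_mem hihull
    exact absurd (hmin T' hT'F) (not_le.2 hlt)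

noncomputable def cl (π : Finpartition s) : Finpartition s := (exists_decomp π).choose

lemma cl_NC (π : Finpartition s) : NC (cl π) := (exists_decomp π).choose_spec.1

lemma cl_decomp (π : Finpartition s) : Decomp π (cl π) := (exists_decomp π).choose_spec.2

lemma cl_unique {π σ : Finpartition s} (hσ : NC σ) (hd : Decomp π σ) : cl π = σ := by
  obtain ⟨hle, -⟩ := id hd
  obtain ⟨hle', -⟩ := id (cl_decomp π)
  exact le_antisymm (decomp_le (cl_decomp π) hσ hle) (decomp_le hd (cl_NC π) hle')

omit [LocallyFiniteOrder α] in
lemma bind_le (σ : Finpartition s) (Q : ∀ i ∈ σ.parts, Finpartition i) : σ.bind Q ≤ σ := by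
  intro b hb
  rw [Finpartition.mem_bind] at hb
  obtain ⟨V, hV, hbV⟩ := hb
  exact ⟨V, hV, (Q V hV).le hbV⟩

lemma restrict_bind (σ : Finpartition s)
    (F : (V : {x // x ∈ σ.parts}) → Finpartition (V : Finset α))
    (V : Finset α) (hV : V ∈ σ.parts)
    (h : (((σ.bind (fun V hV => F ⟨V, hV⟩)).parts.filter (· ⊆ V)).sup id) = V) :
    restrict (σ.bind (fun V hV => F ⟨V, hV⟩)) V h = F ⟨V, hV⟩ := by
  ext b
  rw [restrict_parts, Finset.mem_filter, Finpartition.mem_bind]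
  constructor
  · rintro ⟨⟨W, hW, hbW⟩, hbV⟩
    have hbne : b.Nonempty := (F ⟨W, hW⟩).nonempty_of_mem_parts hbW
    obtain ⟨x, hx⟩ := hbne
    have hWV : W = V := σ.eq_of_mem_parts hW hV ((F ⟨W, hW⟩).le hbW hx) (hbV hx)
    subst hWV
    exact hbW
  · intro hb
    exact ⟨⟨V, hV, hb⟩, (F ⟨V, hV⟩).le hb⟩

/-- The fiber of the closure map over `σ` is in bijection with the product of connected
partitions of the blocks of `σ`. -/
noncomputable def decompEquiv (σ : Finpartition s) :
    {π : Finpartition s // Decomp π σ} ≃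
      ((V : {x // x ∈ σ.parts}) → {Q : Finpartition (V : Finset α) // Conn Q}) where
  toFun := fun π V => ⟨restrict π.1 V (sup_filter_of_le π.2.choose V.2),
    π.2.choose_spec V V.2⟩
  invFun := fun F => ⟨σ.bind (fun V hV => (F ⟨V, hV⟩).1), by
    refine ⟨bind_le σ _, fun V hV => ?_⟩
    rw [restrict_bind σ (fun V => (F V).1) V hV]
    exact (F ⟨V, hV⟩).2⟩
  left_inv := by
    rintro ⟨π, hπ⟩
    apply Subtype.ext
    show σ.bind (fun V hV => restrict π V (sup_filter_of_le hπ.choose hV)) = π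
    ext b
    rw [Finpartition.mem_bind]
    constructor
    · rintro ⟨V, hV, hbV⟩
      exact (Finset.mem_filter.1 hbV).1
    · intro hb
      obtain ⟨V, hV, hbV⟩ := hπ.choose hb
      exact ⟨V, hV, Finset.mem_filter.2 ⟨hb, hbV⟩⟩
  right_inv := by
    intro F
    funext V
    apply Subtype.ext
    exact restrict_bind σ (fun W => (F W).1) V.1 V.2
      (sup_filter_of_le (bind_le σ (fun W hW => (F ⟨W, hW⟩).1)) V.2)

lemma card_decomp (σ : Finpartition s) :
    Fintype.card {π : Finpartition s // Decomp π σ} =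
      ∏ V ∈ σ.parts, Fintype.card {Q : Finpartition V // Conn Q} := by
  rw [Fintype.card_congr (decompEquiv σ), Fintype.card_pi]
  exact Finset.prod_coe_sort σ.parts (fun V => Fintype.card {Q : Finpartition V // Conn Q})

section Transport

variable {β : Type*} [LinearOrder β] [LocallyFiniteOrder β] [DecidableEq β]

/-- Transport a partition along an order embedding. -/
def mapFP (f : β ↪o α) {t : Finset β} (P : Finpartition t) :
    Finpartition (t.map f.toEmbedding) where
  parts := P.parts.map (Finset.mapEmbedding f.toEmbedding).toEmbedding
  supIndep := by
    rw [Finset.supIndep_iff_pairwiseDisjoint]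
    intro a ha b hb hab
    simp only [Finset.mem_coe, Finset.mem_map, RelEmbedding.coe_toEmbedding] at ha hb
    obtain ⟨p, hp, rfl⟩ := ha
    obtain ⟨q, hq, rfl⟩ := hb
    have hpq : p ≠ q := fun h => hab (by rw [h])
    have := P.disjoint hp hq hpq
    simp only [Finset.mapEmbedding_apply, id]
    exact (Finset.disjoint_map _).2 this
  sup_parts := by
    ext x
    simp only [Finset.mem_sup, Finset.mem_map, RelEmbedding.coe_toEmbedding,
      Finset.mapEmbedding_apply, id]
    constructor
    · rintro ⟨b, ⟨p, hp, rfl⟩, hx⟩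
      rw [Finset.mem_map] at hx
      obtain ⟨y, hy, rfl⟩ := hx
      have hyt : y ∈ t := by
        rw [← P.sup_parts]
        exact Finset.mem_sup.2 ⟨p, hp, hy⟩
      exact ⟨y, hyt, rfl⟩
    · rintro ⟨y, hyt, rfl⟩
      rw [← P.sup_parts] at hyt
      obtain ⟨p, hp, hy⟩ := Finset.mem_sup.1 hyt
      exact ⟨p.map f.toEmbedding, ⟨p, hp, rfl⟩, Finset.mem_map_of_mem _ hy⟩
  bot_notMem := by
    simp only [Finset.mem_map, RelEmbedding.coe_toEmbedding]
    rintro ⟨p, hp, hpe⟩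
    rw [Finset.mapEmbedding_apply] at hpe
    have he : p = ∅ := Finset.map_eq_empty.1 hpe
    rw [he] at hp
    exact P.bot_notMem hp

omit [LocallyFiniteOrder α] [LocallyFiniteOrder β] in
@[simp] lemma mapFP_parts (f : β ↪o α) {t : Finset β} (P : Finpartition t) {b : Finset α} :
    b ∈ (mapFP f P).parts ↔ ∃ p ∈ P.parts, p.map f.toEmbedding = b := by
  show b ∈ P.parts.map _ ↔ _
  simp only [Finset.mem_map, RelEmbedding.coe_toEmbedding, Finset.mapEmbedding_apply]

omit [LocallyFiniteOrder α] [LocallyFiniteOrder β] in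
lemma mapFP_bijective (f : β ↪o α) (t : Finset β) :
    Function.Bijective (fun P : Finpartition t => mapFP f P) := by
  constructor
  · intro P Q h
    have h' : mapFP f P = mapFP f Q := h
    ext b
    constructor
    · intro hb
      have : b.map f.toEmbedding ∈ (mapFP f Q).parts := by
        rw [← h']; exact mapFP_parts f P |>.2 ⟨b, hb, rfl⟩
      obtain ⟨q, hq, hqe⟩ := (mapFP_parts f Q).1 this
      rwa [← Finset.map_injective f.toEmbedding hqe]
    · intro hb
      have : b.map f.toEmbedding ∈ (mapFP f P).parts := by
        rw [h']; exact mapFP_parts f Q |>.2 ⟨b, hb, rfl⟩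
      obtain ⟨q, hq, hqe⟩ := (mapFP_parts f P).1 this
      rwa [← Finset.map_injective f.toEmbedding hqe]
  · intro Q
    have hsub : ∀ p ∈ Q.parts, p ⊆ t.map f.toEmbedding := fun p hp => Q.le hp
    refine ⟨⟨Q.parts.image (fun p => p.preimage f (f.injective.injOn)), ?_, ?_, ?_⟩, ?_⟩
    · rw [Finset.supIndep_iff_pairwiseDisjoint]
      intro a ha b hb hab
      simp only [Finset.mem_coe, Finset.mem_image] at ha hb
      obtain ⟨p, hp, rfl⟩ := ha
      obtain ⟨q, hq, rfl⟩ := hb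
      have hpq : p ≠ q := fun h => hab (by rw [h])
      have hd : Disjoint p q := Q.disjoint hp hq hpq
      exact Finset.disjoint_left.2 fun {x} hx hx' =>
        (Finset.disjoint_left.1 hd) (Finset.mem_preimage.1 hx) (Finset.mem_preimage.1 hx')
    · ext y
      simp only [Finset.mem_sup, Finset.mem_image, id]
      constructor
      · rintro ⟨b, ⟨p, hp, rfl⟩, hy⟩
        rw [Finset.mem_preimage] at hy
        have hmem : f y ∈ t.map f.toEmbedding := hsub p hp hy
        obtain ⟨z, hz, hzy⟩ := Finset.mem_map.1 hmem
        cases f.injective hzy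
        exact hz
      · intro hy
        have : f y ∈ t.map f.toEmbedding := Finset.mem_map_of_mem _ hy
        rw [← Q.sup_parts] at this
        obtain ⟨p, hp, hfy⟩ := Finset.mem_sup.1 this
        exact ⟨p.preimage f (f.injective.injOn), ⟨p, hp, rfl⟩, Finset.mem_preimage.2 hfy⟩
    · simp only [Finset.mem_image]
      rintro ⟨p, hp, hpe⟩
      obtain ⟨x, hx⟩ := Q.nonempty_of_mem_parts hp
      obtain ⟨y, hy, rfl⟩ := Finset.mem_map.1 (hsub p hp hx)
      have : y ∈ p.preimage f (f.injective.injOn) := Finset.mem_preimage.2 hx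
      rw [hpe] at this
      simp [Finset.bot_eq_empty] at this
    · -- mapFP of the preimage partition is Q
      ext b
      rw [mapFP_parts]
      constructor
      · rintro ⟨p', hp', rfl⟩
        simp only [Finset.mem_image] at hp'
        obtain ⟨p, hp, rfl⟩ := hp'
        have : (p.preimage f (f.injective.injOn)).map f.toEmbedding = p := by
          ext x
          simp only [Finset.mem_map, Finset.mem_preimage]
          constructor
          · rintro ⟨y, hy, rfl⟩; exact hy
          · intro hx
            obtain ⟨y, hy, rfl⟩ := Finset.mem_map.1 (hsub p hp hx)
            exact ⟨y, hx, rfl⟩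
        rwa [this]
      · intro hb
        refine ⟨b.preimage f (f.injective.injOn), Finset.mem_image_of_mem _ hb, ?_⟩
        ext x
        simp only [Finset.mem_map, Finset.mem_preimage]
        constructor
        · rintro ⟨y, hy, rfl⟩; exact hy
        · intro hx
          obtain ⟨y, hy, rfl⟩ := Finset.mem_map.1 (hsub b hb hx)
          exact ⟨y, hx, rfl⟩

omit [LocallyFiniteOrder α] [LocallyFiniteOrder β] in
lemma UB_mapFP (f : β ↪o α) {t : Finset β} (P : Finpartition t) {u : Finset β} (hu : u ⊆ t) :
    UB (mapFP f P) (u.map f.toEmbedding) ↔ UB P u := by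
  rw [UB_iff (Finset.map_subset_map.2 hu), UB_iff hu]
  constructor
  · intro h p hp hdp
    have := h (p.map f.toEmbedding) ((mapFP_parts f P).2 ⟨p, hp, rfl⟩)
      (fun hd => hdp ((Finset.disjoint_map _).1 hd))
    exact Finset.map_subset_map.1 this
  · intro h p' hp' hdp'
    obtain ⟨p, hp, rfl⟩ := (mapFP_parts f P).1 hp'
    exact Finset.map_subset_map.2 (h p hp (fun hd => hdp' ((Finset.disjoint_map _).2 hd)))

lemma map_inter_Icc (f : β ↪o α) (t : Finset β) (k l : β) :
    (t ∩ Finset.Icc k l).map f.toEmbedding =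
      (t.map f.toEmbedding) ∩ Finset.Icc (f k) (f l) := by
  ext x
  simp only [Finset.mem_map, Finset.mem_inter, Finset.mem_Icc]
  constructor
  · rintro ⟨y, ⟨hyt, hky, hyl⟩, rfl⟩
    exact ⟨⟨y, hyt, rfl⟩, f.le_iff_le.2 hky, f.le_iff_le.2 hyl⟩
  · rintro ⟨⟨y, hyt, rfl⟩, hky, hyl⟩
    exact ⟨y, ⟨hyt, f.le_iff_le.1 hky, f.le_iff_le.1 hyl⟩, rfl⟩

lemma conn_mapFP (f : β ↪o α) {t : Finset β} (P : Finpartition t) :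
    Conn (mapFP f P) ↔ Conn P := by
  constructor
  · intro hC k l hne hneq hUB
    have he := map_inter_Icc f t k l
    refine hC (f k) (f l) ?_ ?_ ?_
    · rw [← he]; exact hne.map
    · rw [← he]
      intro h
      exact hneq (Finset.map_injective f.toEmbedding h)
    · rw [← he]
      exact (UB_mapFP f P Finset.inter_subset_left).2 hUB
  · intro hC i j hne hneq hUB
    set W := t.map f.toEmbedding ∩ Finset.Icc i j with hWdef
    have hm := W.min'_mem hne
    have hM := W.max'_mem hne
    obtain ⟨k, hk, hfk⟩ := Finset.mem_map.1 (Finset.mem_inter.1 hm).1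
    obtain ⟨l, hl, hfl⟩ := Finset.mem_map.1 (Finset.mem_inter.1 hM).1
    have him : i ≤ f.toEmbedding k := by
      rw [hfk]; exact (Finset.mem_Icc.1 (Finset.mem_inter.1 hm).2).1
    have hjM : f.toEmbedding l ≤ j := by
      rw [hfl]; exact (Finset.mem_Icc.1 (Finset.mem_inter.1 hM).2).2
    have hW_eq : W = t.map f.toEmbedding ∩ Finset.Icc (f k) (f l) := by
      ext x
      constructor
      · intro hxW
        have hx := Finset.mem_inter.1 hxW
        have h1 : f.toEmbedding k ≤ x := by rw [hfk]; exact W.min'_le x hxW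
        have h2 : x ≤ f.toEmbedding l := by rw [hfl]; exact W.le_max' x hxW
        exact Finset.mem_inter.2 ⟨hx.1, Finset.mem_Icc.2 ⟨h1, h2⟩⟩
      · intro hx'
        obtain ⟨hxt, hIcc⟩ := Finset.mem_inter.1 hx'
        obtain ⟨hkx, hxl⟩ := Finset.mem_Icc.1 hIcc
        have hkx' : f.toEmbedding k ≤ x := hkx
        have hxl' : x ≤ f.toEmbedding l := hxl
        exact Finset.mem_inter.2 ⟨hxt, Finset.mem_Icc.2 ⟨him.trans hkx', hxl'.trans hjM⟩⟩
    have hkl : k ≤ l := by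
      have h3 : f.toEmbedding k ≤ f.toEmbedding l := by
        rw [hfk, hfl]; exact W.min'_le _ hM
      exact f.le_iff_le.1 h3
    have hu_eq : W = (t ∩ Finset.Icc k l).map f.toEmbedding := by
      rw [map_inter_Icc, ← hW_eq]
    refine hC k l ⟨k, Finset.mem_inter.2 ⟨hk, Finset.mem_Icc.2 ⟨le_refl k, hkl⟩⟩⟩ ?_ ?_
    · intro h
      exact hneq (by rw [hu_eq, h])
    · rw [← UB_mapFP f P Finset.inter_subset_left, ← hu_eq]
      exact hUB

end Transport

/-- Number of connected partitions of `[m]`. -/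
noncomputable def D (m : ℕ) : ℕ :=
  Fintype.card {Q : Finpartition (Finset.univ : Finset (Fin m)) // Conn Q}

lemma card_conn_map {β : Type*} [LinearOrder β] [LocallyFiniteOrder β] [DecidableEq β]
    (f : β ↪o α) (t : Finset β) (V : Finset α)
    (h : t.map f.toEmbedding = V) :
    Fintype.card {Q : Finpartition V // Conn Q} =
      Fintype.card {P : Finpartition t // Conn P} := by
  subst h
  refine (Fintype.card_congr (Equiv.ofBijective
    (fun P : {P : Finpartition t // Conn P} =>
      (⟨mapFP f P.1, (conn_mapFP f P.1).2 P.2⟩ :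
        {Q : Finpartition (t.map f.toEmbedding) // Conn Q})) ⟨?_, ?_⟩)).symm
  · intro P Q h
    exact Subtype.ext ((mapFP_bijective f t).1 (congrArg Subtype.val h))
  · rintro ⟨Q, hQ⟩
    obtain ⟨P, hP⟩ := (mapFP_bijective f t).2 Q
    have hc : Conn P := by
      apply (conn_mapFP f P).1
      show Conn ((fun P => mapFP f P) P)
      rw [hP]; exact hQ
    exact ⟨⟨P, hc⟩, Subtype.ext hP⟩

lemma univ_map_orderEmbOfFin {n : ℕ} (V : Finset (Fin n)) :
    (Finset.univ : Finset (Fin V.card)).map (V.orderEmbOfFin rfl).toEmbedding = V := by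
  ext x
  simp only [Finset.mem_map, Finset.mem_univ, true_and]
  constructor
  · rintro ⟨y, -, rfl⟩
    exact Finset.orderEmbOfFin_mem V rfl y
  · intro hx
    have : x ∈ Set.range (V.orderEmbOfFin rfl) := by
      rw [Finset.range_orderEmbOfFin]; exact hx
    obtain ⟨y, hy⟩ := this
    exact ⟨y, hy⟩

lemma card_conn_eq_D {n : ℕ} (V : Finset (Fin n)) :
    Fintype.card {Q : Finpartition V // Conn Q} = D V.card :=
  card_conn_map (V.orderEmbOfFin rfl) Finset.univ V (univ_map_orderEmbOfFin V)

lemma conn_iff {n : ℕ} (π : Finpartition (Finset.univ : Finset (Fin n))) :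
    Conn π ↔ IsConnectedPartition π := by
  constructor
  · intro h i j hij hne
    have := h i j (by rw [Finset.univ_inter]; exact Finset.nonempty_Icc.2 hij)
      (by rw [Finset.univ_inter]; exact hne)
    rwa [Finset.univ_inter] at this
  · intro h i j hne hneq
    rw [Finset.univ_inter] at hne hneq ⊢
    exact h i j (Finset.nonempty_Icc.1 hne) hneq

lemma NC_iff {n : ℕ} (π : Finpartition (Finset.univ : Finset (Fin n))) :
    NC π ↔ IsNoncrossing π := Iff.rfl

/-- The key counting identity. -/
lemma keyCount (n : ℕ) :
    Fintype.card (Finpartition (Finset.univ : Finset (Fin n))) =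
      ∑ σ ∈ Finset.univ.filter
          (fun σ : Finpartition (Finset.univ : Finset (Fin n)) => IsNoncrossing σ),
        ∏ V ∈ σ.parts, D V.card := by
  rw [← Finset.card_univ]
  rw [Finset.card_eq_sum_card_fiberwise (f := cl)
    (fun π _ => Finset.mem_filter.2 ⟨Finset.mem_univ _, (NC_iff _).1 (cl_NC π)⟩)]
  refine Finset.sum_congr rfl fun σ hσ => ?_
  have hNC : NC σ := (NC_iff _).2 (Finset.mem_filter.1 hσ).2
  have hfib : Finset.univ.filter (fun π => cl π = σ) =
      Finset.univ.filter (fun π => Decomp π σ) := by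
    apply Finset.filter_congr
    intro π _
    exact ⟨fun h => h ▸ cl_decomp π, fun h => cl_unique hNC h⟩
  rw [hfib, ← Fintype.card_subtype, card_decomp σ]
  exact Finset.prod_congr rfl fun V _ => card_conn_eq_D V

lemma eq_top_of_mem_card {n : ℕ} {σ : Finpartition (Finset.univ : Finset (Fin n))}
    {V : Finset (Fin n)} (hV : V ∈ σ.parts) (h : V.card = n) : σ = ⊤ := by
  have hVuniv : V = Finset.univ := Finset.eq_univ_of_card V (by rw [h, Fintype.card_fin])
  apply le_antisymm le_top
  intro b hb
  have : b = Finset.univ := Finset.mem_singleton.1 (Finpartition.parts_top_subset _ hb)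
  exact ⟨V, hV, by rw [this, hVuniv]⟩

end PCaux

/-- The free cumulants of the Poisson distribution with parameter `1` (classical cumulants
`κ_n = 1`) count connected partitions. -/
theorem free_cumulants_poisson_count_connected_partitions (c : ℕ → ℝ)
    (hfree : ∀ n : ℕ, 1 ≤ n →
      (∑ σ : Finpartition (Finset.univ : Finset (Fin n)),
          partWeight (fun _ => 1) σ)
        = ∑ σ ∈ Finset.univ.filter
            (fun σ : Finpartition (Finset.univ : Finset (Fin n)) => IsNoncrossing σ),
          partWeight c σ) :
    ∀ n : ℕ, 1 ≤ n →
      c n = Nat.card {π : Finpartition (Finset.univ : Finset (Fin n)) //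
        IsConnectedPartition π} := by
  have hDn : ∀ m : ℕ,
      (Nat.card {π : Finpartition (Finset.univ : Finset (Fin m)) //
        IsConnectedPartition π}) = PCaux.D m := by
    intro m
    rw [Nat.card_eq_fintype_card]
    exact Fintype.card_congr (Equiv.subtypeEquivRight fun π => (PCaux.conn_iff π).symm)
  intro n
  induction n using Nat.strong_induction_on with
  | _ n IH =>
    intro hn
    set NCf := Finset.univ.filter
      (fun σ : Finpartition (Finset.univ : Finset (Fin n)) => IsNoncrossing σ) with hNCf
    have huniv_ne : (Finset.univ : Finset (Fin n)).Nonempty :=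
      ⟨⟨0, hn⟩, Finset.mem_univ _⟩
    have htop : (⊤ : Finpartition (Finset.univ : Finset (Fin n))) ∈ NCf :=
      Finset.mem_filter.2 ⟨Finset.mem_univ _, (PCaux.NC_iff _).1 PCaux.NC_top⟩
    have hw : ∀ a : ℕ → ℝ,
        partWeight a (⊤ : Finpartition (Finset.univ : Finset (Fin n))) = a n := by
      intro a
      rw [partWeight, PCaux.parts_top huniv_ne, Finset.prod_singleton, Finset.card_univ,
        Fintype.card_fin]
    have h1 : (Fintype.card (Finpartition (Finset.univ : Finset (Fin n))) : ℝ) =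
        ∑ σ ∈ NCf, partWeight c σ := by
      rw [← hfree n hn]
      have : ∀ σ : Finpartition (Finset.univ : Finset (Fin n)),
          partWeight (fun _ => (1 : ℝ)) σ = 1 := by
        intro σ; rw [partWeight]; exact Finset.prod_const_one
      rw [Finset.sum_congr rfl (fun σ _ => this σ), Finset.sum_const, Finset.card_univ,
        nsmul_eq_mul, mul_one]
    have h2 : (Fintype.card (Finpartition (Finset.univ : Finset (Fin n))) : ℝ) =
        ∑ σ ∈ NCf, partWeight (fun k => (PCaux.D k : ℝ)) σ := by
      rw [PCaux.keyCount n, Nat.cast_sum]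
      refine Finset.sum_congr rfl fun σ _ => ?_
      rw [Nat.cast_prod, partWeight]
    rw [← Finset.add_sum_erase _ _ htop, hw c] at h1
    rw [← Finset.add_sum_erase _ _ htop, hw _] at h2
    have hS : ∑ σ ∈ NCf.erase ⊤, partWeight c σ =
        ∑ σ ∈ NCf.erase ⊤, partWeight (fun k => (PCaux.D k : ℝ)) σ := by
      refine Finset.sum_congr rfl fun σ hσ => ?_
      have hne : σ ≠ ⊤ := (Finset.mem_erase.1 hσ).1
      rw [partWeight, partWeight]
      refine Finset.prod_congr rfl fun V hV => ?_
      have hc1 : 1 ≤ V.card := Finset.card_pos.2 (σ.nonempty_of_mem_parts hV)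
      have hcle : V.card ≤ n := by
        have := Finset.card_le_univ V
        rwa [Fintype.card_fin] at this
      have hc2 : V.card < n := by
        rcases lt_or_eq_of_le hcle with h | h
        · exact h
        · exact absurd (PCaux.eq_top_of_mem_card hV h) hne
      have := IH V.card hc2 hc1
      rw [this, hDn V.card]
    rw [hS] at h1
    have hcn : c n = (PCaux.D n : ℝ) := by linarith [h1, h2]
    rw [hDn n]
    exact hcn
end

section
/- Let λ be a real number, let (κ_n)_{n≥1} be the constant sequence κ_n = λ (the classical cumulants of the Poisson distribution with parameter λ), let m_n = Σ_{σ ∈ Π_n} κ_σ (sum over all partitions of [n]), and let (c_n)_{n≥1} be the sequence determined by m_n = Σ_{σ ∈ NC_n} c_σ (sum over all noncrossing partitions of [n]). Then for every n ≥ 1, c_n = Σ_{π ∈ Π^conn_n} λ^{|π|}, where the sum is over all connected partitions π of [n] and |π| denotes the number of blocks of π. -/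
open Finset

open scoped Classical

set_option linter.unusedSectionVars false
set_option linter.unusedVariables false

namespace NCPoisson

variable {α : Type*} [LinearOrder α] [Fintype α] [DecidableEq α]

def IsUOB {s : Finset α} (σ : Finpartition s) (S : Finset α) : Prop :=
  ∀ p ∈ σ.parts, (p ∩ S).Nonempty → p ⊆ S

def ConvexIn (B S : Finset α) : Prop :=
  ∀ ⦃a⦄, a ∈ S → ∀ ⦃b⦄, b ∈ S → ∀ ⦃t⦄, t ∈ B → a ≤ t → t ≤ b → t ∈ S

def RelConnOn {s : Finset α} (σ : Finpartition s) (B : Finset α) : Prop :=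
  ∀ S : Finset α, S ⊆ B → S.Nonempty → S ≠ B → ConvexIn B S → ¬ IsUOB σ S

def RelNC {s : Finset α} (σ : Finpartition s) : Prop :=
  ¬ ∃ B₁ ∈ σ.parts, ∃ B₂ ∈ σ.parts, B₁ ≠ B₂ ∧
      ∃ a ∈ B₁, ∃ b ∈ B₂, ∃ c ∈ B₁, ∃ d ∈ B₂, a < b ∧ b < c ∧ c < d

theorem top_parts {s : Finset α} (hs : s.Nonempty) :
    (⊤ : Finpartition s).parts = {s} := by
  have h1 : (⊤ : Finpartition s).parts ⊆ {s} := Finpartition.parts_top_subset s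
  have h2 : (⊤ : Finpartition s).parts.Nonempty := by
    refine Finpartition.parts_nonempty _ ?_
    rw [Finset.bot_eq_empty]
    exact Finset.nonempty_iff_ne_empty.1 hs
  obtain ⟨t, ht⟩ := h2
  have := h1 ht
  rw [Finset.mem_singleton] at this
  subst this
  exact Finset.Subset.antisymm h1 (Finset.singleton_subset_iff.mpr ht)

theorem relNC_top {s : Finset α} : RelNC (⊤ : Finpartition s) := by
  rintro ⟨B₁, hB₁, B₂, hB₂, hne, -⟩
  exact hne (((Finpartition.parts_top_subsingleton s) hB₁ hB₂))

theorem le_of_relNC {s : Finset α} {σ π τ : Finpartition s} (hσπ : σ ≤ π)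
    (hconn : ∀ B ∈ π.parts, RelConnOn σ B) (hτ : RelNC τ) (hστ : σ ≤ τ) : π ≤ τ := by
  intro B hB
  have hBne : B.Nonempty := π.nonempty_of_mem_parts hB
  have hBs : B ⊆ s := π.le hB
  set 𝒯 := τ.parts.filter (fun T => (T ∩ B).Nonempty) with h𝒯
  have hpartmem : ∀ b ∈ B, τ.part b ∈ 𝒯 := fun b hb =>
    mem_filter.2 ⟨τ.part_mem.2 (hBs hb), ⟨b, mem_inter.2 ⟨τ.mem_part (hBs hb), hb⟩⟩⟩
  have htraces : ∀ T ∈ 𝒯, ∀ T' ∈ 𝒯, T = T' := by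
    by_contra h
    push_neg at h
    obtain ⟨T, hT, T', hT', hTT'⟩ := h
    -- pick trace with minimal hull
    set hull : Finset α → Finset α :=
      fun T => B.filter (fun x => ∃ u ∈ T ∩ B, ∃ v ∈ T ∩ B, u ≤ x ∧ x ≤ v) with hhull
    obtain ⟨T₀, hT₀, hmin⟩ := 𝒯.exists_min_image (fun T => (hull T).card) ⟨T, hT⟩
    have hT₀p : T₀ ∈ τ.parts := (mem_filter.1 hT₀).1
    have hne₀ : (T₀ ∩ B).Nonempty := (mem_filter.1 hT₀).2
    set m := (T₀ ∩ B).min' hne₀ with hm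
    set M := (T₀ ∩ B).max' hne₀ with hM
    have hmmem : m ∈ T₀ ∩ B := min'_mem _ _
    have hMmem : M ∈ T₀ ∩ B := max'_mem _ _
    -- convexity of T₀ ∩ B in B
    have hconv : ConvexIn B (T₀ ∩ B) := by
      intro a ha b hb t ht hat htb
      by_contra htT₀
      have htmem : t ∈ B := ht
      have htnot : t ∉ T₀ := fun hc => htT₀ (mem_inter.2 ⟨hc, ht⟩)
      set T₁ := τ.part t with hT₁
      have hT₁mem : T₁ ∈ 𝒯 := hpartmem t ht
      have hT₁p : T₁ ∈ τ.parts := (mem_filter.1 hT₁mem).1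
      have htT₁ : t ∈ T₁ := τ.mem_part (hBs ht)
      have hT₁ne : T₁ ≠ T₀ := fun hc => htnot (hc ▸ htT₁)
      have hmt : m < t := by
        have h1 : m ≤ t := le_trans (min'_le _ _ ha) hat
        rcases h1.lt_or_eq with h | h
        · exact h
        · exact absurd ((h ▸ (mem_inter.1 hmmem).1 : t ∈ T₀)) htnot
      have htM : t < M := by
        have h1 : t ≤ M := le_trans htb (le_max' _ _ hb)
        rcases h1.lt_or_eq with h | h
        · exact h
        · exact absurd ((h ▸ (mem_inter.1 hMmem).1 : t ∈ T₀)) htnot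
      -- all of T₁ lies between m and M
      have hbetween : ∀ c ∈ T₁, m ≤ c ∧ c ≤ M := by
        intro c hc
        constructor
        · by_contra hcm
          push_neg at hcm
          exact hτ ⟨T₁, hT₁p, T₀, hT₀p, hT₁ne, c, hc, m, (mem_inter.1 hmmem).1, t, htT₁,
            M, (mem_inter.1 hMmem).1, hcm, hmt, htM⟩
        · by_contra hcM
          push_neg at hcM
          exact hτ ⟨T₀, hT₀p, T₁, hT₁p, (Ne.symm hT₁ne), m, (mem_inter.1 hmmem).1, t, htT₁,
            M, (mem_inter.1 hMmem).1, c, hc, hmt, htM, hcM⟩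
      -- hull T₁ ⊂ hull T₀
      have hsub1 : hull T₁ ⊆ hull T₀ := by
        intro x hx
        rw [hhull, mem_filter] at hx ⊢
        obtain ⟨u, hu, v, hv, hux, hxv⟩ := hx.2
        exact ⟨hx.1, m, hmmem, M, hMmem,
          le_trans (hbetween u (mem_inter.1 hu).1).1 hux,
          le_trans hxv (hbetween v (mem_inter.1 hv).1).2⟩
      have hmhull : m ∈ hull T₀ := by
        rw [hhull, mem_filter]
        exact ⟨(mem_inter.1 hmmem).2, m, hmmem, m, hmmem, le_refl m, le_refl m⟩
      have hmnot : m ∉ hull T₁ := by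
        intro hc
        rw [hhull, mem_filter] at hc
        obtain ⟨-, u, hu, v, hv, hum, hmv⟩ := hc
        have hum' : m ≤ u := (hbetween u (mem_inter.1 hu).1).1
        have : u = m := le_antisymm hum hum'
        subst this
        exact hT₁ne (τ.eq_of_mem_parts hT₁p hT₀p (mem_inter.1 hu).1 (mem_inter.1 hmmem).1)
      have hsub : hull T₁ ⊂ hull T₀ :=
        ssubset_of_subset_of_ne hsub1 (fun hc => hmnot (hc ▸ hmhull))
      have := hmin T₁ hT₁mem
      exact absurd (card_lt_card hsub) (not_lt.2 this)
    -- T₀ ∩ B is a proper nonempty union of σ-parts, contradiction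
    have hTbad : ∃ Tb ∈ 𝒯, Tb ≠ T₀ := by
      rcases eq_or_ne T T₀ with rfl | h
      · exact ⟨T', hT', fun hc => hTT' hc.symm⟩
      · exact ⟨T, hT, h⟩
    obtain ⟨Tb, hTb, hTbne⟩ := hTbad
    obtain ⟨y, hy⟩ := (mem_filter.1 hTb).2
    have hSneB : T₀ ∩ B ≠ B := by
      intro hc
      have hyT : y ∈ T₀ ∩ B := by rw [hc]; exact (mem_inter.1 hy).2
      have : y ∈ T₀ := (mem_inter.1 hyT).1
      exact hTbne (τ.eq_of_mem_parts (mem_filter.1 hTb).1 hT₀p (mem_inter.1 hy).1 this)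
    refine hconn B hB (T₀ ∩ B) (inter_subset_right) hne₀ hSneB hconv ?_
    intro p hp hpS
    obtain ⟨x, hx⟩ := hpS
    have hxp : x ∈ p := (mem_inter.1 hx).1
    have hxT₀B : x ∈ T₀ ∩ B := (mem_inter.1 hx).2
    obtain ⟨T₁, hT₁p, hpT₁⟩ := hστ hp
    obtain ⟨B₁, hB₁p, hpB₁⟩ := hσπ hp
    have hT₁eq : T₁ = T₀ := τ.eq_of_mem_parts hT₁p hT₀p (hpT₁ hxp) (mem_inter.1 hxT₀B).1
    have hB₁eq : B₁ = B := π.eq_of_mem_parts hB₁p hB (hpB₁ hxp) (mem_inter.1 hxT₀B).2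
    intro z hz
    exact mem_inter.2 ⟨hT₁eq ▸ hpT₁ hz, hB₁eq ▸ hpB₁ hz⟩
  -- conclude
  obtain ⟨b₀, hb₀⟩ := hBne
  refine ⟨τ.part b₀, τ.part_mem.2 (hBs hb₀), ?_⟩
  intro b hb
  have := htraces (τ.part b) (hpartmem b hb) (τ.part b₀) (hpartmem b₀ hb₀)
  exact this ▸ τ.mem_part (hBs hb)

theorem split_step {s : Finset α} {π σ : Finpartition s} (hNC : RelNC π) (hσπ : σ ≤ π)
    {B : Finset α} (hB : B ∈ π.parts) {S : Finset α} (hSB : S ⊆ B) (hSne : S.Nonempty)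
    (hSneB : S ≠ B) (hconv : ConvexIn B S) (hUOB : IsUOB σ S) :
    ∃ π' : Finpartition s, RelNC π' ∧ σ ≤ π' ∧ π' ≤ π ∧ π' ≠ π := by
  have hS0 : S ≠ ⊥ := by
    rw [Finset.bot_eq_empty]
    exact Finset.nonempty_iff_ne_empty.1 hSne
  have hCne : (B \ S).Nonempty := by
    obtain ⟨x, hxB, hxS⟩ := Finset.exists_of_ssubset (hSB.ssubset_of_ne hSneB)
    exact ⟨x, mem_sdiff.2 ⟨hxB, hxS⟩⟩
  have hC0 : (B \ S) ≠ ⊥ := by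
    rw [Finset.bot_eq_empty]
    exact Finset.nonempty_iff_ne_empty.1 hCne
  have hdisj : Disjoint S (B \ S) := disjoint_sdiff
  have hsup : S ⊔ (B \ S) = B := by
    rw [Finset.sup_eq_union]
    exact Finset.union_sdiff_of_subset hSB
  set ρ : Finpartition B := (Finpartition.indiscrete hS0).extend hC0 hdisj hsup with hρ
  have hρparts : ρ.parts = insert (B \ S) {S} := rfl
  set Q : ∀ D ∈ π.parts, Finpartition D := fun D hD =>
    if h : D = B then ρ.copy h.symm else Finpartition.indiscrete (π.ne_bot hD) with hQ
  set π' := π.bind Q with hπ'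
  have hmem : ∀ p, p ∈ π'.parts ↔ (p = S ∨ p = B \ S ∨ (p ∈ π.parts ∧ p ≠ B)) := by
    intro p
    rw [hπ', Finpartition.mem_bind]
    constructor
    · rintro ⟨D, hD, hp⟩
      by_cases h : D = B
      · subst h
        rw [hQ] at hp
        simp only [dif_pos rfl] at hp
        have : p ∈ ρ.parts := hp
        rw [hρparts, mem_insert, mem_singleton] at this
        rcases this with h | h
        · exact Or.inr (Or.inl h)
        · exact Or.inl h
      · rw [hQ] at hp
        simp only [dif_neg h] at hp
        have : p ∈ ({D} : Finset (Finset α)) := hp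
        rw [mem_singleton] at this
        subst this
        exact Or.inr (Or.inr ⟨hD, h⟩)
    · rintro (h | h | ⟨hp, hne⟩)
      · refine ⟨B, hB, ?_⟩
        rw [hQ]
        simp only [dif_pos rfl]
        show p ∈ ρ.parts
        rw [hρparts, h]
        simp
      · refine ⟨B, hB, ?_⟩
        rw [hQ]
        simp only [dif_pos rfl]
        show p ∈ ρ.parts
        rw [hρparts, h]
        simp
      · refine ⟨p, hp, ?_⟩
        rw [hQ]
        simp only [dif_neg hne]
        show p ∈ ({p} : Finset (Finset α))
        simp
  have hle : π' ≤ π := by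
    intro p hp
    rcases (hmem p).1 hp with rfl | rfl | ⟨h, -⟩
    · exact ⟨B, hB, hSB⟩
    · exact ⟨B, hB, sdiff_subset⟩
    · exact ⟨p, h, subset_rfl⟩
  have hσle : σ ≤ π' := by
    intro p hp
    obtain ⟨D, hD, hpD⟩ := hσπ hp
    by_cases h : D = B
    · rw [h] at hpD
      by_cases h2 : (p ∩ S).Nonempty
      · exact ⟨S, (hmem S).2 (Or.inl rfl), hUOB p hp h2⟩
      · refine ⟨B \ S, (hmem _).2 (Or.inr (Or.inl rfl)), ?_⟩
        intro x hx
        refine mem_sdiff.2 ⟨hpD hx, fun hxS => h2 ⟨x, mem_inter.2 ⟨hx, hxS⟩⟩⟩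
    · exact ⟨D, (hmem D).2 (Or.inr (Or.inr ⟨hD, h⟩)), hpD⟩
  have hne' : π' ≠ π := by
    intro hc
    have hSp : S ∈ π.parts := by
      rw [← hc]; exact (hmem S).2 (Or.inl rfl)
    obtain ⟨x, hx⟩ := hSne
    exact hSneB (π.eq_of_mem_parts hSp hB hx (hSB hx))
  refine ⟨π', ?_, hσle, hle, hne'⟩
  rintro ⟨B₁, h₁, B₂, h₂, hne, a, ha, b, hb, c, hc, d, hd, hab, hbc, hcd⟩
  obtain ⟨D₁, hD₁, hBD₁⟩ := hle h₁
  obtain ⟨D₂, hD₂, hBD₂⟩ := hle h₂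
  rcases eq_or_ne D₁ D₂ with rfl | hDne
  · have key : ∀ p, p ∈ π'.parts → p ⊆ D₁ → p ≠ S → p ≠ B \ S → p = D₁ := by
      intro p hp hpD hp1 hp2
      rcases (hmem p).1 hp with rfl | rfl | ⟨hpπ, -⟩
      · exact absurd rfl hp1
      · exact absurd rfl hp2
      · obtain ⟨x, hx⟩ := π'.nonempty_of_mem_parts hp
        exact π.eq_of_mem_parts hpπ hD₁ hx (hpD hx)
    have keyB : ∀ p, p ∈ π'.parts → p ⊆ D₁ → (p = S ∨ p = B \ S) → D₁ = B := by
      intro p hp hpD hps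
      obtain ⟨x, hx⟩ := π'.nonempty_of_mem_parts hp
      have hxB : x ∈ B := by
        rcases hps with rfl | rfl
        · exact hSB hx
        · exact (mem_sdiff.1 hx).1
      exact π.eq_of_mem_parts hD₁ hB (hpD hx) hxB
    have hcase : (B₁ = S ∧ B₂ = B \ S) ∨ (B₁ = B \ S ∧ B₂ = S) := by
      by_cases h1 : B₁ = S ∨ B₁ = B \ S
      · by_cases h2 : B₂ = S ∨ B₂ = B \ S
        · rcases h1 with rfl | rfl <;> rcases h2 with rfl | rfl
          · exact absurd rfl hne
          · exact Or.inl ⟨rfl, rfl⟩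
          · exact Or.inr ⟨rfl, rfl⟩
          · exact absurd rfl hne
        · push_neg at h2
          have hB₂D : B₂ = D₁ := key B₂ h₂ hBD₂ h2.1 h2.2
          have hD₁B : D₁ = B := keyB B₁ h₁ hBD₁ h1
          rcases (hmem B₂).1 h₂ with rfl | rfl | ⟨-, hne2⟩
          · exact absurd rfl h2.1
          · exact absurd rfl h2.2
          · exact absurd (hB₂D.trans hD₁B) hne2
      · push_neg at h1
        have hB₁D : B₁ = D₁ := key B₁ h₁ hBD₁ h1.1 h1.2
        by_cases h2 : B₂ = S ∨ B₂ = B \ S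
        · have hD₁B : D₁ = B := keyB B₂ h₂ hBD₂ h2
          rcases (hmem B₁).1 h₁ with rfl | rfl | ⟨-, hne1⟩
          · exact absurd rfl h1.1
          · exact absurd rfl h1.2
          · exact absurd (hB₁D.trans hD₁B) hne1
        · push_neg at h2
          have hB₂D : B₂ = D₁ := key B₂ h₂ hBD₂ h2.1 h2.2
          exact absurd (hB₁D.trans hB₂D.symm) hne
    rcases hcase with ⟨rfl, rfl⟩ | ⟨rfl, rfl⟩
    · exact (mem_sdiff.1 hb).2 (hconv ha hc (mem_sdiff.1 hb).1 hab.le hbc.le)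
    · exact (mem_sdiff.1 hc).2 (hconv hb hd (mem_sdiff.1 hc).1 hbc.le hcd.le)
  · exact hNC ⟨D₁, hD₁, D₂, hD₂, hDne, a, hBD₁ ha, b, hBD₂ hb, c, hBD₁ hc, d, hBD₂ hd,
      hab, hbc, hcd⟩


theorem existsUnique_fiber {s : Finset α} (σ : Finpartition s) :
    ∃! π : Finpartition s, RelNC π ∧ σ ≤ π ∧ ∀ B ∈ π.parts, RelConnOn σ B := by
  have hne : (univ.filter (fun π : Finpartition s => RelNC π ∧ σ ≤ π)).Nonempty :=
    ⟨⊤, mem_filter.2 ⟨mem_univ _, relNC_top, le_top⟩⟩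
  obtain ⟨π₀, hπ₀, hmin⟩ : ∃ m ∈ univ.filter (fun π : Finpartition s => RelNC π ∧ σ ≤ π),
      ∀ x ∈ univ.filter (fun π : Finpartition s => RelNC π ∧ σ ≤ π), ¬ x < m := by
    obtain ⟨m, hm⟩ := exists_minimal_of_wellFoundedLT
      (· ∈ univ.filter (fun π : Finpartition s => RelNC π ∧ σ ≤ π)) hne
    exact ⟨m, hm.1, fun x hx hlt => hlt.not_ge (hm.2 hx hlt.le)⟩
  rw [mem_filter] at hπ₀
  have hconn : ∀ B ∈ π₀.parts, RelConnOn σ B := by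
    by_contra h
    push_neg at h
    obtain ⟨B, hB, hnc⟩ := h
    rw [RelConnOn] at hnc
    push_neg at hnc
    obtain ⟨S, hSB, hSne, hSneB, hconv, hUOB⟩ := hnc
    obtain ⟨π', hNC', hσ', hle', hne'⟩ :=
      split_step hπ₀.2.1 hπ₀.2.2 hB hSB hSne hSneB hconv hUOB
    exact hmin π' (mem_filter.2 ⟨mem_univ _, hNC', hσ'⟩) (lt_of_le_of_ne hle' hne')
  refine ⟨π₀, ⟨hπ₀.2.1, hπ₀.2.2, hconn⟩, ?_⟩
  rintro π ⟨hNCπ, hσπ, hconnπ⟩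
  exact le_antisymm (le_of_relNC hσπ hconnπ hπ₀.2.1 hπ₀.2.2)
    (le_of_relNC hπ₀.2.2 hconn hNCπ hσπ)

theorem sup_filter_eq {s : Finset α} {σ π : Finpartition s} (hσπ : σ ≤ π) {B : Finset α}
    (hB : B ∈ π.parts) : (σ.parts.filter (· ⊆ B)).sup id = B := by
  apply le_antisymm
  · exact Finset.sup_le fun q hq => (mem_filter.1 hq).2
  · intro x hxB
    have hxs : x ∈ s := π.le hB hxB
    have hxq : x ∈ σ.part x := σ.mem_part hxs
    have hq : σ.part x ∈ σ.parts := σ.part_mem.2 hxs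
    obtain ⟨D, hD, hqD⟩ := hσπ hq
    have hDB : D = B := π.eq_of_mem_parts hD hB (hqD hxq) hxB
    have : σ.part x ∈ σ.parts.filter (· ⊆ B) := mem_filter.2 ⟨hq, hDB ▸ hqD⟩
    have h2 : σ.part x ⊆ (σ.parts.filter (· ⊆ B)).sup id :=
      Finset.le_sup (f := id) this
    exact h2 hxq

/-- Restriction of a refinement to a part. -/
def restrictP {s : Finset α} (σ : Finpartition s) {π : Finpartition s} (hσπ : σ ≤ π)
    {B : Finset α} (hB : B ∈ π.parts) : Finpartition B :=
  σ.ofSubset (filter_subset _ _) (sup_filter_eq hσπ hB)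

theorem restrictP_parts {s : Finset α} (σ : Finpartition s) {π : Finpartition s} (hσπ : σ ≤ π)
    {B : Finset α} (hB : B ∈ π.parts) :
    (restrictP σ hσπ hB).parts = σ.parts.filter (· ⊆ B) := rfl

theorem isUOB_restrictP_iff {s : Finset α} {σ π : Finpartition s} (hσπ : σ ≤ π) {B : Finset α}
    (hB : B ∈ π.parts) {S : Finset α} (hS : S ⊆ B) :
    IsUOB (restrictP σ hσπ hB) S ↔ IsUOB σ S := by
  constructor
  · intro h p hp hpS
    obtain ⟨x, hx⟩ := hpS
    obtain ⟨D, hD, hpD⟩ := hσπ hp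
    have hDB : D = B := π.eq_of_mem_parts hD hB (hpD (mem_inter.1 hx).1) (hS (mem_inter.1 hx).2)
    exact h p (mem_filter.2 ⟨hp, hDB ▸ hpD⟩) ⟨x, hx⟩
  · intro h p hp hpS
    exact h p (mem_filter.1 hp).1 hpS

theorem relConnOn_restrictP_iff {s : Finset α} {σ π : Finpartition s} (hσπ : σ ≤ π)
    {B : Finset α} (hB : B ∈ π.parts) :
    RelConnOn (restrictP σ hσπ hB) B ↔ RelConnOn σ B := by
  constructor <;> intro h S h1 h2 h3 h4 h5
  · exact h S h1 h2 h3 h4 ((isUOB_restrictP_iff hσπ hB h1).2 h5)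
  · exact h S h1 h2 h3 h4 ((isUOB_restrictP_iff hσπ hB h1).1 h5)

theorem bind_le {s : Finset α} (π : Finpartition s) (Q : ∀ B ∈ π.parts, Finpartition B) :
    π.bind Q ≤ π := by
  intro p hp
  rw [Finpartition.mem_bind] at hp
  obtain ⟨B, hB, hpB⟩ := hp
  exact ⟨B, hB, (Q B hB).le hpB⟩

theorem restrictP_bind {s : Finset α} (π : Finpartition s) (Q : ∀ B ∈ π.parts, Finpartition B)
    {B : Finset α} (hB : B ∈ π.parts) :
    restrictP (π.bind Q) (bind_le π Q) hB = Q B hB := by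
  ext q
  rw [restrictP_parts, mem_filter, Finpartition.mem_bind]
  constructor
  · rintro ⟨⟨B', hB', hq⟩, hqB⟩
    obtain ⟨x, hx⟩ := (Q B' hB').nonempty_of_mem_parts hq
    obtain rfl : B' = B := π.eq_of_mem_parts hB' hB ((Q B' hB').le hq hx) (hqB hx)
    exact hq
  · intro hq
    exact ⟨⟨B, hB, hq⟩, (Q B hB).le hq⟩

theorem bind_restrictP {s : Finset α} {σ π : Finpartition s} (hσπ : σ ≤ π) :
    π.bind (fun B hB => restrictP σ hσπ hB) = σ := by
  ext q
  rw [Finpartition.mem_bind]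
  constructor
  · rintro ⟨B, hB, hq⟩
    exact (mem_filter.1 hq).1
  · intro hq
    obtain ⟨B, hB, hqB⟩ := hσπ hq
    exact ⟨B, hB, mem_filter.2 ⟨hq, hqB⟩⟩

theorem fiber_sum (lam : ℝ) {s : Finset α} (π : Finpartition s) :
    ∑ σ ∈ univ.filter
        (fun σ : Finpartition s => σ ≤ π ∧ ∀ B ∈ π.parts, RelConnOn σ B),
      lam ^ σ.parts.card
    = ∏ B ∈ π.parts,
        ∑ τ ∈ univ.filter (fun τ : Finpartition B => RelConnOn τ B),
          lam ^ τ.parts.card := by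
  rw [Finset.prod_sum]
  refine Finset.sum_bij'
    (fun σ hσ => fun B hB => restrictP σ (mem_filter.1 hσ).2.1 hB)
    (fun p hp => π.bind (fun B hB => p B hB)) ?_ ?_ ?_ ?_ ?_
  · intro σ hσ
    rw [Finset.mem_pi]
    intro B hB
    rw [mem_filter]
    exact ⟨mem_univ _, (relConnOn_restrictP_iff (mem_filter.1 hσ).2.1 hB).2
      ((mem_filter.1 hσ).2.2 B hB)⟩
  · intro p hp
    rw [mem_filter]
    refine ⟨mem_univ _, bind_le π _, ?_⟩
    intro B hB
    have h1 := restrictP_bind π (fun B hB => p B hB) hB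
    have h2 : p B hB ∈ univ.filter (fun τ : Finpartition B => RelConnOn τ B) :=
      Finset.mem_pi.1 hp B hB
    rw [← relConnOn_restrictP_iff (bind_le π _) hB, h1]
    exact (mem_filter.1 h2).2
  · intro σ hσ
    exact bind_restrictP (mem_filter.1 hσ).2.1
  · intro p hp
    funext B hB
    exact restrictP_bind π _ hB
  · intro σ hσ
    have hc := Finpartition.card_bind (fun B hB => restrictP σ (mem_filter.1 hσ).2.1 hB)
    rw [bind_restrictP (mem_filter.1 hσ).2.1] at hc
    rw [hc, ← Finset.prod_pow_eq_pow_sum]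

theorem main_sum {s : Finset α} (lam : ℝ) :
    ∑ σ : Finpartition s, lam ^ σ.parts.card
    = ∑ π ∈ univ.filter (fun π : Finpartition s => RelNC π),
        ∏ B ∈ π.parts,
          ∑ τ ∈ univ.filter (fun τ : Finpartition B => RelConnOn τ B),
            lam ^ τ.parts.card := by
  have h1 : ∀ π ∈ univ.filter (fun π : Finpartition s => RelNC π),
      (∏ B ∈ π.parts,
          ∑ τ ∈ univ.filter (fun τ : Finpartition B => RelConnOn τ B),
            lam ^ τ.parts.card)
      = ∑ σ ∈ univ.filter
            (fun σ : Finpartition s => σ ≤ π ∧ ∀ B ∈ π.parts, RelConnOn σ B),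
          lam ^ σ.parts.card :=
    fun π _ => (fiber_sum lam π).symm
  rw [Finset.sum_congr rfl h1]
  have h2 : ∀ π : Finpartition s,
      (if RelNC π then
        (∑ σ ∈ univ.filter
            (fun σ : Finpartition s => σ ≤ π ∧ ∀ B ∈ π.parts, RelConnOn σ B),
          lam ^ σ.parts.card) else 0)
      = ∑ σ : Finpartition s,
          (if RelNC π ∧ σ ≤ π ∧ ∀ B ∈ π.parts, RelConnOn σ B then lam ^ σ.parts.card else 0) := by
    intro π
    by_cases h : RelNC π
    · rw [if_pos h, Finset.sum_filter]
      refine Finset.sum_congr rfl fun σ _ => ?_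
      by_cases h3 : σ ≤ π ∧ ∀ B ∈ π.parts, RelConnOn σ B
      · rw [if_pos h3, if_pos ⟨h, h3⟩]
      · rw [if_neg h3, if_neg (fun hc => h3 ⟨hc.2.1, hc.2.2⟩)]
    · rw [if_neg h]
      refine (Finset.sum_eq_zero fun σ _ => ?_).symm
      rw [if_neg (fun hc => h hc.1)]
  rw [Finset.sum_filter, Finset.sum_congr rfl (fun π _ => h2 π), Finset.sum_comm]
  refine Finset.sum_congr rfl fun σ _ => ?_
  obtain ⟨π₀, hπ₀, huniq⟩ := existsUnique_fiber σ
  have hset : (univ.filter (fun π : Finpartition s =>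
      RelNC π ∧ σ ≤ π ∧ ∀ B ∈ π.parts, RelConnOn σ B)) = {π₀} := by
    ext π
    rw [mem_filter, Finset.mem_singleton]
    constructor
    · intro h
      exact huniq π h.2
    · rintro rfl
      exact ⟨mem_univ _, hπ₀⟩
  rw [← Finset.sum_filter, hset, Finset.sum_singleton]

section Transport

variable {β : Type*} [LinearOrder β] [Fintype β] [DecidableEq β]

/-- Push a finpartition forward along a map injective on the ground set. -/
def mapP {s : Finset α} (σ : Finpartition s) (f : α → β) (hf : Set.InjOn f s) :
    Finpartition (s.image f) where
  parts := σ.parts.image (Finset.image f)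
  supIndep := by
    rw [Finset.supIndep_iff_pairwiseDisjoint]
    intro q₁ hq₁ q₂ hq₂ hne
    rw [Finset.mem_coe, Finset.mem_image] at hq₁ hq₂
    obtain ⟨p₁, hp₁, rfl⟩ := hq₁
    obtain ⟨p₂, hp₂, rfl⟩ := hq₂
    have hpne : p₁ ≠ p₂ := fun hc => hne (by rw [hc])
    have hdisj := σ.disjoint hp₁ hp₂ hpne
    simp only [Function.onFun, id_eq] at hdisj ⊢
    rw [Finset.disjoint_left] at hdisj ⊢
    intro x hx₁ hx₂
    rw [Finset.mem_image] at hx₁ hx₂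
    obtain ⟨a₁, ha₁, rfl⟩ := hx₁
    obtain ⟨a₂, ha₂, hfa⟩ := hx₂
    have : a₂ = a₁ := hf (σ.le hp₂ ha₂) (σ.le hp₁ ha₁) hfa
    exact hdisj ha₁ (this ▸ ha₂)
  sup_parts := by
    ext y
    rw [Finset.mem_sup]
    constructor
    · rintro ⟨q, hq, hy⟩
      simp only [id_eq] at hy
      rw [Finset.mem_image] at hq
      obtain ⟨p, hp, rfl⟩ := hq
      rw [Finset.mem_image] at hy ⊢
      obtain ⟨x, hx, rfl⟩ := hy
      exact ⟨x, σ.le hp hx, rfl⟩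
    · intro hy
      rw [Finset.mem_image] at hy
      obtain ⟨x, hx, rfl⟩ := hy
      have hxs := σ.mem_part hx
      exact ⟨(σ.part x).image f, Finset.mem_image.2 ⟨σ.part x, σ.part_mem.2 hx, rfl⟩,
        Finset.mem_image.2 ⟨x, hxs, rfl⟩⟩
  bot_notMem := by
    intro h
    rw [Finset.mem_image] at h
    obtain ⟨p, hp, hpe⟩ := h
    obtain ⟨x, hx⟩ := σ.nonempty_of_mem_parts hp
    have : f x ∈ (⊥ : Finset β) := hpe ▸ Finset.mem_image.2 ⟨x, hx, rfl⟩
    simp at this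

theorem mapP_parts {s : Finset α} (σ : Finpartition s) (f : α → β) (hf : Set.InjOn f s) :
    (mapP σ f hf).parts = σ.parts.image (Finset.image f) := rfl

theorem image_image_roundtrip {s : Finset α} {f : α → β} {g : β → α}
    (hgf : ∀ x ∈ s, g (f x) = x) {p : Finset α} (hp : p ⊆ s) :
    (p.image f).image g = p := by
  rw [Finset.image_image]
  have : p.image (g ∘ f) = p.image id := Finset.image_congr fun x hx => hgf x (hp hx)
  rw [this, Finset.image_id]

theorem parts_image_card {s : Finset α} (σ : Finpartition s) {f : α → β} {g : β → α}
    (hgf : ∀ x ∈ s, g (f x) = x) :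
    (σ.parts.image (Finset.image f)).card = σ.parts.card := by
  apply Finset.card_image_of_injOn
  intro p₁ hp₁ p₂ hp₂ heq
  have h₁ := image_image_roundtrip hgf (σ.le (Finset.mem_coe.1 hp₁))
  have h₂ := image_image_roundtrip hgf (σ.le (Finset.mem_coe.1 hp₂))
  rw [← h₁, ← h₂, heq]

theorem relConnOn_of_parts_image {s : Finset α} {t : Finset β} (σ : Finpartition s)
    (ρ : Finpartition t) (f : α → β) (g : β → α)
    (hparts : ρ.parts = σ.parts.image (Finset.image f))
    (hgf : ∀ x ∈ s, g (f x) = x)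
    (hg : ∀ y ∈ t, g y ∈ s ∧ f (g y) = y)
    (hmono : ∀ x ∈ s, ∀ y ∈ s, x ≤ y → f x ≤ f y)
    (hconn : RelConnOn σ s) : RelConnOn ρ t := by
  intro S hSt hSne hSneT hconv hUOB
  set S' := S.image g with hS'
  have hS's : S' ⊆ s := by
    intro x hx
    rw [hS', Finset.mem_image] at hx
    obtain ⟨y, hy, rfl⟩ := hx
    exact (hg y (hSt hy)).1
  have hfS' : ∀ y ∈ S, f (g y) = y := fun y hy => (hg y (hSt hy)).2
  have hS'ne : S'.Nonempty := hSne.image g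
  have hS'neS : S' ≠ s := by
    intro hc
    apply hSneT
    apply Finset.Subset.antisymm hSt
    intro y hyt
    have : g y ∈ S' := hc ▸ (hg y hyt).1
    rw [hS', Finset.mem_image] at this
    obtain ⟨z, hz, hgz⟩ := this
    have : f (g z) = f (g y) := by rw [hgz]
    rw [(hg z (hSt hz)).2, (hg y hyt).2] at this
    exact this ▸ hz
  have hS'conv : ConvexIn s S' := by
    intro a ha b hb x hx hax hxb
    rw [hS', Finset.mem_image] at ha hb
    obtain ⟨y₁, hy₁, rfl⟩ := ha
    obtain ⟨y₂, hy₂, rfl⟩ := hb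
    have h₁ : f (g y₁) ≤ f x := hmono _ (hg y₁ (hSt hy₁)).1 _ hx hax
    have h₂ : f x ≤ f (g y₂) := hmono _ hx _ (hg y₂ (hSt hy₂)).1 hxb
    rw [hfS' y₁ hy₁] at h₁
    rw [hfS' y₂ hy₂] at h₂
    have hfx : f x ∈ t := by
      obtain ⟨q, hq, hxq⟩ := σ.existsUnique_mem hx
      have : (Finset.image f q) ∈ ρ.parts := hparts ▸ Finset.mem_image.2 ⟨q, hq.1, rfl⟩
      exact ρ.le this (Finset.mem_image.2 ⟨x, hq.2, rfl⟩)
    have : f x ∈ S := hconv hy₁ hy₂ hfx h₁ h₂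
    have hgx : g (f x) = x := hgf x hx
    rw [hS']
    exact Finset.mem_image.2 ⟨f x, this, hgx⟩
  refine hconn S' hS's hS'ne hS'neS hS'conv ?_
  intro p hp hpS'
  obtain ⟨x, hx⟩ := hpS'
  have hxp : x ∈ p := (mem_inter.1 hx).1
  have hxS' : x ∈ S' := (mem_inter.1 hx).2
  have hpt : p.image f ∈ ρ.parts := hparts ▸ Finset.mem_image.2 ⟨p, hp, rfl⟩
  have hfxS : f x ∈ S := by
    rw [hS', Finset.mem_image] at hxS'
    obtain ⟨y, hy, rfl⟩ := hxS'
    rw [hfS' y hy]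
    exact hy
  have hsub : p.image f ⊆ S :=
    hUOB _ hpt ⟨f x, mem_inter.2 ⟨Finset.mem_image.2 ⟨x, hxp, rfl⟩, hfxS⟩⟩
  intro z hz
  have hfz : f z ∈ S := hsub (Finset.mem_image.2 ⟨z, hz, rfl⟩)
  rw [hS']
  exact Finset.mem_image.2 ⟨f z, hfz, hgf z (σ.le hp hz)⟩

end Transport

theorem finpartition_eq_of_parts {s : Finset α} {P Q : Finpartition s}
    (h : P.parts = Q.parts) : P = Q := by
  ext q
  rw [h]

set_option maxHeartbeats 1000000 in
theorem transport_sum (lam : ℝ) {n m : ℕ} (B : Finset (Fin n)) (hm : B.card = m)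
    (hB : B.Nonempty) :
    ∑ τ ∈ univ.filter (fun τ : Finpartition B => RelConnOn τ B), lam ^ τ.parts.card
    = ∑ τ ∈ univ.filter
        (fun τ : Finpartition (univ : Finset (Fin m)) => RelConnOn τ (univ : Finset (Fin m))),
        lam ^ τ.parts.card := by
  have hm0 : 0 < m := hm ▸ Finset.card_pos.2 hB
  set e := B.orderIsoOfFin hm with he
  set f : Fin m → Fin n := fun i => (e i : Fin n) with hf
  set g : Fin n → Fin m := fun x => if h : x ∈ B then e.symm ⟨x, h⟩ else ⟨0, hm0⟩ with hg
  have hfB : ∀ i, f i ∈ B := fun i => (e i).2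
  have hgf : ∀ i : Fin m, g (f i) = i := by
    intro i
    rw [hg]
    dsimp only
    rw [dif_pos (hfB i)]
    have h2 : (⟨f i, hfB i⟩ : {x // x ∈ B}) = e i := Subtype.ext rfl
    rw [h2, OrderIso.symm_apply_apply]
  have hfg : ∀ x ∈ B, f (g x) = x := by
    intro x hx
    rw [hg]
    dsimp only
    rw [dif_pos hx, hf]
    dsimp only
    rw [OrderIso.apply_symm_apply]
  have hmono : ∀ i ∈ (univ : Finset (Fin m)), ∀ j ∈ (univ : Finset (Fin m)),
      i ≤ j → f i ≤ f j := by
    intro i _ j _ hij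
    exact Subtype.coe_le_coe.2 (e.le_iff_le.2 hij)
  have hgmono : ∀ x ∈ B, ∀ y ∈ B, x ≤ y → g x ≤ g y := by
    intro x hx y hy hxy
    rw [hg]
    dsimp only
    rw [dif_pos hx, dif_pos hy]
    exact e.symm.le_iff_le.2 (Subtype.mk_le_mk.2 hxy)
  have himg : (univ : Finset (Fin m)).image f = B := by
    ext x
    rw [Finset.mem_image]
    constructor
    · rintro ⟨i, -, rfl⟩
      exact hfB i
    · intro hx
      exact ⟨g x, mem_univ _, hfg x hx⟩
  have himg2 : B.image g = (univ : Finset (Fin m)) := by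
    ext i
    simp only [Finset.mem_univ, iff_true, Finset.mem_image]
    exact ⟨f i, hfB i, hgf i⟩
  have hfinj : Set.InjOn f ↑(univ : Finset (Fin m)) := by
    intro x _ y _ hxy
    rw [← hgf x, ← hgf y, hxy]
  have hginj : Set.InjOn g ↑B := by
    intro x hx y hy hxy
    rw [← hfg x hx, ← hfg y hy, hxy]
  have hgmem : ∀ y ∈ B, g y ∈ (univ : Finset (Fin m)) ∧ f (g y) = y :=
    fun y hy => ⟨mem_univ _, hfg y hy⟩
  have hfmem : ∀ i ∈ (univ : Finset (Fin m)), f i ∈ B ∧ g (f i) = i :=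
    fun i _ => ⟨hfB i, hgf i⟩
  have hroundf : ∀ σ : Finpartition (univ : Finset (Fin m)),
      (σ.parts.image (Finset.image f)).image (Finset.image g) = σ.parts := by
    intro σ
    rw [Finset.image_image]
    have : σ.parts.image (Finset.image g ∘ Finset.image f) = σ.parts.image id :=
      Finset.image_congr fun p hp =>
        image_image_roundtrip (fun x _ => hgf x) (σ.le hp)
    rw [this, Finset.image_id]
  have hroundg : ∀ ρ : Finpartition B,
      (ρ.parts.image (Finset.image g)).image (Finset.image f) = ρ.parts := by
    intro ρ
    rw [Finset.image_image]
    have : ρ.parts.image (Finset.image f ∘ Finset.image g) = ρ.parts.image id :=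
      Finset.image_congr fun p hp => image_image_roundtrip hfg (ρ.le hp)
    rw [this, Finset.image_id]
  symm
  refine Finset.sum_bij'
    (fun τ _ => (mapP τ f hfinj).copy himg)
    (fun ρ _ => (mapP ρ g hginj).copy himg2) ?_ ?_ ?_ ?_ ?_
  · intro τ hτ
    rw [mem_filter]
    refine ⟨mem_univ _, ?_⟩
    exact relConnOn_of_parts_image τ _ f g rfl (fun x _ => hgf x) hgmem hmono
      (mem_filter.1 hτ).2
  · intro ρ hρ
    rw [mem_filter]
    refine ⟨mem_univ _, ?_⟩
    exact relConnOn_of_parts_image ρ _ g f rfl hfg hfmem hgmono (mem_filter.1 hρ).2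
  · intro τ _
    exact finpartition_eq_of_parts (hroundf τ)
  · intro ρ _
    exact finpartition_eq_of_parts (hroundg ρ)
  · intro τ _
    congr 1
    exact (parts_image_card τ (fun x _ => hgf x)).symm

theorem relNC_iff_isNoncrossing {k : ℕ} (π : Finpartition (univ : Finset (Fin k))) :
    RelNC π ↔ IsNoncrossing π := Iff.rfl

theorem isUOB_iff_isUnionOfBlocks {k : ℕ} (π : Finpartition (univ : Finset (Fin k)))
    (S : Finset (Fin k)) : IsUnionOfBlocks π S ↔ IsUOB π S := by
  constructor
  · rintro ⟨P, hP, rfl⟩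
    intro p hp hpS
    obtain ⟨x, hx⟩ := hpS
    have hx2 := (mem_inter.1 hx).2
    rw [Finset.mem_sup] at hx2
    obtain ⟨q, hq, hxq⟩ := hx2
    simp only [id_eq] at hxq
    have : p = q := π.eq_of_mem_parts hp (hP hq) (mem_inter.1 hx).1 hxq
    subst this
    exact Finset.le_sup (f := id) hq
  · intro h
    refine ⟨π.parts.filter (· ⊆ S), filter_subset _ _, ?_⟩
    apply le_antisymm
    · intro x hx
      have hq : π.part x ∈ π.parts.filter (· ⊆ S) :=
        mem_filter.2 ⟨π.part_mem.2 (mem_univ x),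
          h _ (π.part_mem.2 (mem_univ x)) ⟨x, mem_inter.2 ⟨π.mem_part (mem_univ x), hx⟩⟩⟩
      have h5 := Finset.le_sup (f := id) hq
      simp only [id_eq] at h5
      exact h5 (π.mem_part (mem_univ x))
    · exact Finset.sup_le fun q hq => (mem_filter.1 hq).2
  
theorem relConnOn_univ_iff {k : ℕ} (π : Finpartition (univ : Finset (Fin k))) :
    RelConnOn π univ ↔ IsConnectedPartition π := by
  constructor
  · intro h i j hij hne hUB
    refine h (Finset.Icc i j) (subset_univ _) ⟨i, mem_Icc.2 ⟨le_refl i, hij⟩⟩ hne ?_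
      ((isUOB_iff_isUnionOfBlocks π _).1 hUB)
    intro a ha b hb t _ hat htb
    rw [mem_Icc] at ha hb ⊢
    exact ⟨le_trans ha.1 hat, le_trans htb hb.2⟩
  · intro h S hsub hne hneU hconv hUOB
    have hij : S.min' hne ≤ S.max' hne := S.min'_le _ (S.max'_mem hne)
    have hS : S = Finset.Icc (S.min' hne) (S.max' hne) := by
      ext x
      rw [mem_Icc]
      constructor
      · intro hx
        exact ⟨S.min'_le x hx, S.le_max' x hx⟩
      · rintro ⟨h1, h2⟩
        exact hconv (S.min'_mem hne) (S.max'_mem hne) (mem_univ x) h1 h2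
    refine h (S.min' hne) (S.max' hne) hij (by rw [← hS]; exact hneU) ?_
    rw [← hS]
    exact (isUOB_iff_isUnionOfBlocks π S).2 hUOB

theorem parts_eq_top {k : ℕ} (hk : 0 < k) (σ : Finpartition (univ : Finset (Fin k)))
    (h : univ ∈ σ.parts) : σ = ⊤ := by
  haveI : Nonempty (Fin k) := ⟨⟨0, hk⟩⟩
  apply le_antisymm le_top
  intro p hp
  rw [top_parts Finset.univ_nonempty, Finset.mem_singleton] at hp
  subst hp
  exact ⟨univ, h, subset_rfl⟩

end NCPoisson

open NCPoisson

/-- The free cumulants of the Poisson distribution with parameter `λ` (classical cumulants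
`κ_n = λ`) are the generating functions of the numbers of blocks of connected partitions. -/
theorem free_cumulants_poisson_lambda (lam : ℝ) (c : ℕ → ℝ)
    (hfree : ∀ n : ℕ, 1 ≤ n →
      (∑ σ : Finpartition (Finset.univ : Finset (Fin n)),
          partWeight (fun _ => lam) σ)
        = ∑ σ ∈ Finset.univ.filter
            (fun σ : Finpartition (Finset.univ : Finset (Fin n)) => IsNoncrossing σ),
          partWeight c σ) :
    ∀ n : ℕ, 1 ≤ n →
      c n = ∑ π ∈ Finset.univ.filter
          (fun π : Finpartition (Finset.univ : Finset (Fin n)) => IsConnectedPartition π),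
        lam ^ π.parts.card := by
  intro n
  induction n using Nat.strong_induction_on with
  | _ n IH =>
    intro hn
    haveI : Nonempty (Fin n) := ⟨⟨0, hn⟩⟩
    set g : ℕ → ℝ := fun m =>
      ∑ π ∈ Finset.univ.filter
          (fun π : Finpartition (Finset.univ : Finset (Fin m)) => IsConnectedPartition π),
        lam ^ π.parts.card with hg
    show c n = g n
    -- step 1: all-partitions sum equals weight with constant lam
    have h1 : (∑ σ : Finpartition (Finset.univ : Finset (Fin n)),
        partWeight (fun _ => lam) σ)
        = ∑ σ : Finpartition (Finset.univ : Finset (Fin n)), lam ^ σ.parts.card := by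
      refine Finset.sum_congr rfl fun σ _ => ?_
      rw [partWeight, Finset.prod_const]
    -- step 2: main decomposition
    have h2 := main_sum (s := (Finset.univ : Finset (Fin n))) lam
    -- step 3: inner sums are g of the block size
    have h3 : ∀ π ∈ Finset.univ.filter
        (fun π : Finpartition (Finset.univ : Finset (Fin n)) => RelNC π),
        (∏ B ∈ π.parts,
          ∑ τ ∈ univ.filter (fun τ : Finpartition B => RelConnOn τ B),
            lam ^ τ.parts.card) = partWeight g π := by
      intro π _
      rw [partWeight]
      refine Finset.prod_congr rfl fun B hB => ?_
      rw [transport_sum lam B rfl (π.nonempty_of_mem_parts hB), hg]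
      refine Finset.sum_congr ?_ fun τ _ => rfl
      apply Finset.filter_congr
      intro τ _
      exact relConnOn_univ_iff τ
    rw [Finset.sum_congr rfl h3] at h2
    -- step 4: key identity between the two NC-weighted sums
    have hkey : (∑ σ ∈ Finset.univ.filter
          (fun σ : Finpartition (Finset.univ : Finset (Fin n)) => IsNoncrossing σ),
          partWeight c σ)
        = ∑ σ ∈ Finset.univ.filter
          (fun σ : Finpartition (Finset.univ : Finset (Fin n)) => IsNoncrossing σ),
          partWeight g σ := by
      rw [← hfree n hn, h1]
      exact h2
    -- step 5: peel off the top partition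
    have htopmem : (⊤ : Finpartition (Finset.univ : Finset (Fin n))) ∈
        Finset.univ.filter
          (fun σ : Finpartition (Finset.univ : Finset (Fin n)) => IsNoncrossing σ) :=
      mem_filter.2 ⟨mem_univ _, (relNC_iff_isNoncrossing _).1 relNC_top⟩
    have htail : ∀ σ ∈ (Finset.univ.filter
        (fun σ : Finpartition (Finset.univ : Finset (Fin n)) => IsNoncrossing σ)).erase ⊤,
        partWeight c σ = partWeight g σ := by
      intro σ hσ
      have hσne : σ ≠ ⊤ := (Finset.mem_erase.1 hσ).1
      rw [partWeight, partWeight]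
      refine Finset.prod_congr rfl fun B hB => ?_
      have hBne : B.Nonempty := σ.nonempty_of_mem_parts hB
      have hle : B.card ≤ n := by
        have h4 := Finset.card_le_card (subset_univ B)
        simpa using h4
      have hlt : B.card < n := by
        rcases lt_or_eq_of_le hle with h | h
        · exact h
        · exfalso
          have hBu : B = univ := Finset.eq_of_subset_of_card_le (subset_univ B)
            (by simp [h])
          exact hσne (parts_eq_top hn σ (hBu ▸ hB))
      exact IH B.card hlt (Finset.card_pos.2 hBne)
    have hsplit := Finset.add_sum_erase _ (partWeight c) htopmem
    have hsplit2 := Finset.add_sum_erase _ (partWeight g) htopmem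
    rw [← hsplit, ← hsplit2, Finset.sum_congr rfl htail] at hkey
    have hcancel : partWeight c (⊤ : Finpartition (Finset.univ : Finset (Fin n)))
        = partWeight g (⊤ : Finpartition (Finset.univ : Finset (Fin n))) := by
      have := add_right_cancel hkey
      exact this
    have htp : (⊤ : Finpartition (Finset.univ : Finset (Fin n))).parts = {univ} :=
      top_parts Finset.univ_nonempty
    rw [partWeight, partWeight, htp, Finset.prod_singleton, Finset.prod_singleton] at hcancel
    simpa using hcancel
end

section
/- For every n ≥ 1, the Bell number B_n (the number of all partitions of [n]) satisfies B_n = Σ_{σ ∈ NC_n} Π_{B ∈ σ} T_{|B|}, where the sum runs over all noncrossing partitions σ of [n], the product runs over the blocks B of σ, and T_k denotes the number of connected partitions of [k]. -/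
open Finset

open scoped Classical

/-- The number of connected partitions of `[k]`. -/
noncomputable def connCount (k : ℕ) : ℕ :=
  Nat.card {π : Finpartition (Finset.univ : Finset (Fin k)) // IsConnectedPartition π}


namespace NCB


variable {n : ℕ}

/-- Crossing of two finsets. -/
def Crossy (B C : Finset (Fin n)) : Prop :=
  ∃ a ∈ B, ∃ b ∈ C, ∃ c ∈ B, ∃ d ∈ C, a < b ∧ b < c ∧ c < d

lemma nc_iff (π : Finpartition (Finset.univ : Finset (Fin n))) :
    IsNoncrossing π ↔ ∀ B ∈ π.parts, ∀ C ∈ π.parts, B ≠ C → ¬ Crossy B C := by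
  constructor
  · rintro h B hB C hC hne ⟨a, ha, b, hb, c, hc, d, hd, h1, h2, h3⟩
    exact h ⟨B, hB, C, hC, hne, a, ha, b, hb, c, hc, d, hd, h1, h2, h3⟩
  · rintro h ⟨B, hB, C, hC, hne, a, ha, b, hb, c, hc, d, hd, h1, h2, h3⟩
    exact h B hB C hC hne ⟨a, ha, b, hb, c, hc, d, hd, h1, h2, h3⟩

lemma nc_top : IsNoncrossing (⊤ : Finpartition (Finset.univ : Finset (Fin n))) := by
  rw [nc_iff]
  intro B hB C hC hne
  exact absurd (Finpartition.parts_top_subsingleton _ hB hC) hne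

lemma nc_inf {τ₁ τ₂ : Finpartition (Finset.univ : Finset (Fin n))}
    (h₁ : IsNoncrossing τ₁) (h₂ : IsNoncrossing τ₂) : IsNoncrossing (τ₁ ⊓ τ₂) := by
  rw [nc_iff] at h₁ h₂ ⊢
  intro B hB C hC hne hcr
  rw [Finpartition.parts_inf] at hB hC
  obtain ⟨⟨B₁, B₂⟩, hB12, rfl⟩ := Finset.mem_image.1 (Finset.mem_of_mem_erase hB)
  obtain ⟨⟨C₁, C₂⟩, hC12, rfl⟩ := Finset.mem_image.1 (Finset.mem_of_mem_erase hC)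
  rw [Finset.mem_product] at hB12 hC12
  obtain ⟨a, ha, b, hb, c, hc, d, hd, h1, h2, h3⟩ := hcr
  simp only [Finset.inf_eq_inter, Finset.mem_inter] at ha hb hc hd
  rcases eq_or_ne B₁ C₁ with rfl | hne1
  · rcases eq_or_ne B₂ C₂ with rfl | hne2
    · exact hne rfl
    · exact h₂ B₂ hB12.2 C₂ hC12.2 hne2 ⟨a, ha.2, b, hb.2, c, hc.2, d, hd.2, h1, h2, h3⟩
  · exact h₁ B₁ hB12.1 C₁ hC12.1 hne1 ⟨a, ha.1, b, hb.1, c, hc.1, d, hd.1, h1, h2, h3⟩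

lemma top_mem_ncset (π : Finpartition (Finset.univ : Finset (Fin n))) :
    (⊤ : Finpartition (Finset.univ : Finset (Fin n))) ∈
      Finset.univ.filter (fun τ => IsNoncrossing τ ∧ π ≤ τ) := by
  simp only [Finset.mem_filter, Finset.mem_univ, true_and]
  exact ⟨nc_top, le_top⟩

/-- The noncrossing closure: the finest noncrossing partition refining-above `π`. -/
noncomputable def ncClosure (π : Finpartition (Finset.univ : Finset (Fin n))) :
    Finpartition (Finset.univ : Finset (Fin n)) :=
  (Finset.univ.filter (fun τ => IsNoncrossing τ ∧ π ≤ τ)).inf' ⟨⊤, top_mem_ncset π⟩ id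

lemma ncClosure_spec (π : Finpartition (Finset.univ : Finset (Fin n))) :
    IsNoncrossing (ncClosure π) ∧ π ≤ ncClosure π := by
  refine Finset.inf'_induction _ _ (p := fun τ => IsNoncrossing τ ∧ π ≤ τ) ?_ ?_
  · rintro τ₁ ⟨hnc1, hle1⟩ τ₂ ⟨hnc2, hle2⟩
    exact ⟨nc_inf hnc1 hnc2, le_inf hle1 hle2⟩
  · intro τ hτ
    simpa using (Finset.mem_filter.1 hτ).2

lemma ncClosure_le {π τ : Finpartition (Finset.univ : Finset (Fin n))}
    (h1 : IsNoncrossing τ) (h2 : π ≤ τ) : ncClosure π ≤ τ :=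
  Finset.inf'_le _ (by simp [h1, h2])




/-- `I` is convex inside `B`. -/
def ConvexIn (B I : Finset (Fin n)) : Prop :=
  ∀ a ∈ I, ∀ b ∈ I, ∀ x ∈ B, a ≤ x → x ≤ b → x ∈ I

/-- Connectivity of a family of blocks inside `B`: no proper nonempty convex subset of `B`
is a union of blocks. -/
def ConnParts (B : Finset (Fin n)) (ps : Finset (Finset (Fin n))) : Prop :=
  ∀ I, I ⊆ B → I.Nonempty → I ≠ B → ConvexIn B I → ¬ ∃ P ⊆ ps, I = P.sup id

lemma uob_iff {ps : Finset (Finset (Fin n))} {S : Finset (Fin n)} :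
    (∃ P ⊆ ps, S = P.sup id) ↔ S = (ps.filter (· ⊆ S)).sup id := by
  constructor
  · rintro ⟨P, hP, rfl⟩
    apply le_antisymm
    · exact Finset.sup_le fun A hA => Finset.le_sup (f := id)
        (Finset.mem_filter.2 ⟨hP hA, Finset.le_sup (f := id) hA⟩)
    · exact Finset.sup_le fun A hA => (Finset.mem_filter.1 hA).2
  · intro h
    exact ⟨_, Finset.filter_subset _ _, h⟩

/-- The "interval hull" of a finset. -/
def hull (D : Finset (Fin n)) : Finset (Fin n) :=
  Finset.univ.filter (fun x => ∃ a ∈ D, ∃ b ∈ D, a ≤ x ∧ x ≤ b)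

lemma subset_hull (D : Finset (Fin n)) : D ⊆ hull D := by
  intro x hx
  exact Finset.mem_filter.2 ⟨Finset.mem_univ _, x, hx, x, hx, le_rfl, le_rfl⟩

/-- In a pairwise disjoint, pairwise noncrossing family, some block is convex in the union. -/
lemma exists_convex_part {𝒟 : Finset (Finset (Fin n))} (hne : 𝒟.Nonempty)
    (hdisj : (𝒟 : Set (Finset (Fin n))).PairwiseDisjoint id)
    (hnc : ∀ D ∈ 𝒟, ∀ E ∈ 𝒟, D ≠ E → ¬ Crossy D E) :
    ∃ D ∈ 𝒟, ConvexIn (𝒟.sup id) D := by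
  obtain ⟨D, hD, hmin⟩ := Finset.exists_min_image 𝒟 (fun D => (hull D).card) hne
  refine ⟨D, hD, ?_⟩
  intro a ha b hb x hx hax hxb
  by_contra hxD
  obtain ⟨E, hE, hxE⟩ := Finset.mem_sup.1 hx
  have hDE : D ≠ E := by rintro rfl; exact hxD hxE
  have hdisjDE : ∀ y, y ∈ D → y ∈ E → False := by
    intro y h1 h2
    exact Finset.disjoint_left.1 (hdisj hD hE hDE) h1 h2
  have hax' : a < x := lt_of_le_of_ne hax (by rintro rfl; exact hxD ha)
  have hxb' : x < b := lt_of_le_of_ne hxb (by rintro rfl; exact hxD hb)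
  have hAne : (D.filter (· < x)).Nonempty := ⟨a, Finset.mem_filter.2 ⟨ha, hax'⟩⟩
  have hBne : (D.filter (x < ·)).Nonempty := ⟨b, Finset.mem_filter.2 ⟨hb, hxb'⟩⟩
  set a' := (D.filter (· < x)).max' hAne with ha'def
  set b' := (D.filter (x < ·)).min' hBne with hb'def
  have ha'D : a' ∈ D := (Finset.mem_filter.1 ((D.filter (· < x)).max'_mem hAne)).1
  have ha'x : a' < x := (Finset.mem_filter.1 ((D.filter (· < x)).max'_mem hAne)).2
  have hb'D : b' ∈ D := (Finset.mem_filter.1 ((D.filter (x < ·)).min'_mem hBne)).1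
  have hxb'' : x < b' := (Finset.mem_filter.1 ((D.filter (x < ·)).min'_mem hBne)).2
  have key : ∀ y ∈ E, a' < y ∧ y < b' := by
    intro y hy
    constructor
    · by_contra h
      push_neg at h
      have hy' : y < a' := lt_of_le_of_ne h (fun he => hdisjDE y (he ▸ ha'D) hy)
      exact hnc E hE D hD hDE.symm ⟨y, hy, a', ha'D, x, hxE, b', hb'D, hy', ha'x, hxb''⟩
    · by_contra h
      push_neg at h
      have hy' : b' < y := lt_of_le_of_ne h (fun he => hdisjDE y (he ▸ hb'D) hy)
      exact hnc D hD E hE hDE ⟨a', ha'D, x, hxE, b', hb'D, y, hy, ha'x, hxb'', hy'⟩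
  have hsub : hull E ⊆ hull D := by
    intro z hz
    obtain ⟨-, e₁, he₁, e₂, he₂, h1, h2⟩ := Finset.mem_filter.1 hz
    exact Finset.mem_filter.2 ⟨Finset.mem_univ _, a', ha'D, b', hb'D,
      le_of_lt (lt_of_lt_of_le (key e₁ he₁).1 h1), le_of_lt (lt_of_le_of_lt h2 (key e₂ he₂).2)⟩
  have ha'hE : a' ∉ hull E := by
    intro h
    obtain ⟨-, e₁, he₁, e₂, he₂, h1, h2⟩ := Finset.mem_filter.1 h
    exact absurd h1 (not_le_of_gt (key e₁ he₁).1)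
  have hlt : (hull E).card < (hull D).card :=
    Finset.card_lt_card ⟨hsub, fun hcon => ha'hE (hcon (subset_hull D ha'D))⟩
  exact absurd (hmin E hE) (not_le_of_gt hlt)

/-- If `π ≤ ρ` then every part of `ρ` is the union of the parts of `π` it contains. -/
lemma parts_filter_sup {π ρ : Finpartition (Finset.univ : Finset (Fin n))} (hle : π ≤ ρ)
    {D : Finset (Fin n)} (hD : D ∈ ρ.parts) : (π.parts.filter (· ⊆ D)).sup id = D := by
  apply le_antisymm
  · exact Finset.sup_le fun A hA => (Finset.mem_filter.1 hA).2
  · intro x hx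
    obtain ⟨A, hA, hxA⟩ := π.exists_mem (Finset.mem_univ x)
    obtain ⟨C, hC, hAC⟩ := hle hA
    have : C = D := ρ.eq_of_mem_parts hC hD (hAC hxA) hx
    subst this
    exact Finset.mem_sup.2 ⟨A, Finset.mem_filter.2 ⟨hA, hAC⟩, hxA⟩

section Stage3
variable {n : ℕ} {π σ : Finpartition (Finset.univ : Finset (Fin n))}

lemma split_aux {B I : Finset (Fin n)} (hIB : I ⊆ B) (hIne : I.Nonempty) (hInB : I ≠ B) :
    I ≠ (⊥ : Finset (Fin n)) ∧ B \ I ≠ (⊥ : Finset (Fin n)) ∧ Disjoint I (B \ I) ∧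
      I ⊔ (B \ I) = B := by
  refine ⟨Finset.nonempty_iff_ne_empty.1 hIne, ?_, Finset.disjoint_sdiff, ?_⟩
  · rw [Finset.bot_eq_empty, ← Finset.nonempty_iff_ne_empty, Finset.sdiff_nonempty]
    exact fun h => hInB (Finset.Subset.antisymm hIB h)
  · rw [Finset.sup_eq_union]
    exact Finset.union_sdiff_of_subset hIB

/-- Refine `σ` by splitting the part `B` into `I` and `B \ I`. -/
noncomputable def splitPart (σ : Finpartition (Finset.univ : Finset (Fin n)))
    {B I : Finset (Fin n)} (hB : B ∈ σ.parts) (hIB : I ⊆ B) (hIne : I.Nonempty) (hInB : I ≠ B) :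
    Finpartition (Finset.univ : Finset (Fin n)) :=
  σ.bind (fun C hC =>
    if h : C = B then
      (((Finpartition.indiscrete (split_aux hIB hIne hInB).1).extend
        (split_aux hIB hIne hInB).2.1 (split_aux hIB hIne hInB).2.2.1
        (split_aux hIB hIne hInB).2.2.2).copy h.symm)
    else Finpartition.indiscrete (σ.ne_bot hC))

lemma mem_splitPart {B I : Finset (Fin n)} (hB : B ∈ σ.parts) (hIB : I ⊆ B)
    (hIne : I.Nonempty) (hInB : I ≠ B) {A : Finset (Fin n)} :
    A ∈ (splitPart σ hB hIB hIne hInB).parts ↔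
      A = I ∨ A = B \ I ∨ (A ∈ σ.parts ∧ A ≠ B) := by
  rw [splitPart, Finpartition.mem_bind]
  constructor
  · rintro ⟨C, hC, hA⟩
    by_cases h : C = B
    · rw [dif_pos h] at hA
      simp only [Finpartition.copy_parts, Finpartition.extend_parts,
        Finpartition.indiscrete_parts, Finset.mem_insert, Finset.mem_singleton] at hA
      rcases hA with rfl | rfl
      · exact Or.inr (Or.inl rfl)
      · exact Or.inl rfl
    · rw [dif_neg h] at hA
      simp only [Finpartition.indiscrete_parts, Finset.mem_singleton] at hA
      subst hA
      exact Or.inr (Or.inr ⟨hC, h⟩)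
  · rintro (rfl | rfl | ⟨hA, hne⟩)
    · exact ⟨B, hB, by rw [dif_pos rfl]; simp⟩
    · exact ⟨B, hB, by rw [dif_pos rfl]; simp⟩
    · exact ⟨A, hA, by rw [dif_neg hne]; simp⟩

lemma conn_of_ncClosure_eq (hσ : ncClosure π = σ) :
    π ≤ σ ∧ ∀ B ∈ σ.parts, ConnParts B π.parts := by
  obtain ⟨hσnc, hle⟩ : IsNoncrossing σ ∧ π ≤ σ := hσ ▸ ncClosure_spec π
  refine ⟨hle, ?_⟩
  intro B hB I hIB hIne hInB hconv ⟨P, hP, hsup⟩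
  set τ := splitPart σ hB hIB hIne hInB with hτ
  have hmem : ∀ {A : Finset (Fin n)},
      A ∈ τ.parts ↔ A = I ∨ A = B \ I ∨ (A ∈ σ.parts ∧ A ≠ B) :=
    fun {A} => mem_splitPart hB hIB hIne hInB
  have hτnc : IsNoncrossing τ := by
    rw [nc_iff] at hσnc ⊢
    intro B₁ hB₁ B₂ hB₂ hne12 hcr
    obtain ⟨a, ha, b, hbb, c, hc, d, hd, h1, h2, h3⟩ := hcr
    rcases hmem.1 hB₁ with rfl | rfl | ⟨hp1, hne1⟩ <;>
      rcases hmem.1 hB₂ with rfl | rfl | ⟨hp2, hne2⟩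
    · exact hne12 rfl
    · exact (Finset.mem_sdiff.1 hbb).2
        (hconv a ha c hc b (Finset.mem_sdiff.1 hbb).1 h1.le h2.le)
    · exact hσnc B hB B₂ hp2 (Ne.symm hne2)
        ⟨a, hIB ha, b, hbb, c, hIB hc, d, hd, h1, h2, h3⟩
    · exact (Finset.mem_sdiff.1 hc).2
        (hconv b hbb d hd c (Finset.mem_sdiff.1 hc).1 h2.le h3.le)
    · exact hne12 rfl
    · exact hσnc B hB B₂ hp2 (Ne.symm hne2)
        ⟨a, (Finset.mem_sdiff.1 ha).1, b, hbb, c, (Finset.mem_sdiff.1 hc).1, d, hd, h1, h2, h3⟩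
    · exact hσnc B₁ hp1 B hB hne1 ⟨a, ha, b, hIB hbb, c, hc, d, hIB hd, h1, h2, h3⟩
    · exact hσnc B₁ hp1 B hB hne1
        ⟨a, ha, b, (Finset.mem_sdiff.1 hbb).1, c, hc, d, (Finset.mem_sdiff.1 hd).1, h1, h2, h3⟩
    · rcases eq_or_ne B₁ B₂ with rfl | hne'
      · exact hne12 rfl
      · exact hσnc B₁ hp1 B₂ hp2 hne' ⟨a, ha, b, hbb, c, hc, d, hd, h1, h2, h3⟩
  have hπτ : π ≤ τ := by
    intro A hA
    obtain ⟨C, hC, hAC⟩ := hle hA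
    by_cases hCB : C = B
    · subst hCB
      by_cases hAI : ∃ x ∈ A, x ∈ I
      · obtain ⟨x, hxA, hxI⟩ := hAI
        obtain ⟨A', hA'P, hxA'⟩ := Finset.mem_sup.1 (hsup ▸ hxI)
        have : A = A' := π.eq_of_mem_parts hA (hP hA'P) hxA hxA'
        subst this
        exact ⟨I, hmem.2 (Or.inl rfl), hsup ▸ Finset.le_sup (f := id) hA'P⟩
      · refine ⟨C \ I, hmem.2 (Or.inr (Or.inl rfl)), Finset.subset_sdiff.2 ⟨hAC, ?_⟩⟩
        exact Finset.disjoint_left.2 fun {x} hxA hxI => hAI ⟨x, hxA, hxI⟩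
    · exact ⟨C, hmem.2 (Or.inr (Or.inr ⟨hC, hCB⟩)), hAC⟩
  have hστ : σ ≤ τ := hσ ▸ ncClosure_le hτnc hπτ
  obtain ⟨C', hC', hBC'⟩ := hστ hB
  rcases hmem.1 hC' with rfl | rfl | ⟨hC'', hne'⟩
  · exact hInB (Finset.Subset.antisymm hIB hBC')
  · obtain ⟨x, hx⟩ := hIne
    exact (Finset.mem_sdiff.1 (hBC' (hIB hx))).2 hx
  · obtain ⟨y, hy⟩ := σ.nonempty_of_mem_parts hB
    exact hne' (σ.eq_of_mem_parts hC'' hB (hBC' hy) hy)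

set_option maxHeartbeats 1000000 in
lemma ncClosure_eq_of_conn (hσnc : IsNoncrossing σ) (hle : π ≤ σ)
    (hconn : ∀ B ∈ σ.parts, ConnParts B π.parts) : ncClosure π = σ := by
  have hρσ : ncClosure π ≤ σ := ncClosure_le hσnc hle
  have hπρ : π ≤ ncClosure π := (ncClosure_spec π).2
  have hρnc : IsNoncrossing (ncClosure π) := (ncClosure_spec π).1
  refine le_antisymm hρσ ?_
  intro B hB
  set 𝒟 := (ncClosure π).parts.filter (· ⊆ B) with h𝒟
  have hsup𝒟 : 𝒟.sup id = B := parts_filter_sup hρσ hB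
  obtain ⟨x₀, hx₀⟩ := σ.nonempty_of_mem_parts hB
  have hx₀' : x₀ ∈ 𝒟.sup id := by rw [hsup𝒟]; exact hx₀
  obtain ⟨D₀, hD₀, -⟩ := Finset.mem_sup.1 hx₀'
  have hne : 𝒟.Nonempty := ⟨D₀, hD₀⟩
  have hdisj : (𝒟 : Set (Finset (Fin n))).PairwiseDisjoint id :=
    (ncClosure π).disjoint.subset (Finset.coe_subset.2 (Finset.filter_subset _ _))
  have hnc𝒟 : ∀ D ∈ 𝒟, ∀ E ∈ 𝒟, D ≠ E → ¬ Crossy D E := by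
    intro D hD E hE hDE
    exact (nc_iff _).1 hρnc D (Finset.mem_of_mem_filter _ hD) E (Finset.mem_of_mem_filter _ hE) hDE
  obtain ⟨D, hD𝒟, hconv⟩ := exists_convex_part hne hdisj hnc𝒟
  rw [hsup𝒟] at hconv
  have hDρ : D ∈ (ncClosure π).parts := (Finset.mem_filter.1 hD𝒟).1
  have hDB : D ⊆ B := (Finset.mem_filter.1 hD𝒟).2
  rcases eq_or_ne D B with rfl | hDnB
  · exact ⟨D, hDρ, Finset.Subset.refl _⟩
  · exact absurd ⟨π.parts.filter (· ⊆ D), Finset.filter_subset _ _,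
      (parts_filter_sup hπρ hDρ).symm⟩
      (hconn B hB D hDB ((ncClosure π).nonempty_of_mem_parts hDρ) hDnB hconv)

theorem ncClosure_eq_iff (hσnc : IsNoncrossing σ) :
    ncClosure π = σ ↔ π ≤ σ ∧ ∀ B ∈ σ.parts, ConnParts B π.parts :=
  ⟨conn_of_ncClosure_eq, fun ⟨h1, h2⟩ => ncClosure_eq_of_conn hσnc h1 h2⟩

end Stage3
section Stage4
variable {n : ℕ}

lemma connParts_filter_iff {π : Finpartition (Finset.univ : Finset (Fin n))}
    {B : Finset (Fin n)} :
    ConnParts B (π.parts.filter (· ⊆ B)) ↔ ConnParts B π.parts := by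
  constructor
  · intro h I h1 h2 h3 h4 ⟨P, hP, hsup⟩
    refine h I h1 h2 h3 h4 ⟨P, ?_, hsup⟩
    intro A hA
    exact Finset.mem_filter.2 ⟨hP hA,
      (Finset.le_sup (f := id) hA).trans (le_of_eq (hsup.symm.trans (by rfl)) |>.trans h1)⟩
  · intro h I h1 h2 h3 h4 ⟨P, hP, hsup⟩
    exact h I h1 h2 h3 h4 ⟨P, hP.trans (Finset.filter_subset _ _), hsup⟩

/-- Restriction: partitions refining `σ` correspond to families of partitions of its parts. -/
noncomputable def restrictEquiv (σ : Finpartition (Finset.univ : Finset (Fin n))) :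
    {π : Finpartition (Finset.univ : Finset (Fin n)) // π ≤ σ} ≃
      ∀ B : σ.parts, Finpartition (B : Finset (Fin n)) where
  toFun p B := p.1.ofSubset (Finset.filter_subset (· ⊆ (B : Finset (Fin n))) p.1.parts)
    (parts_filter_sup p.2 B.2)
  invFun g := ⟨σ.bind (fun B hB => g ⟨B, hB⟩), fun A hA => by
    rw [Finpartition.mem_bind] at hA
    obtain ⟨C, hC, h⟩ := hA
    exact ⟨C, hC, (g ⟨C, hC⟩).le h⟩⟩
  left_inv p := by
    apply Subtype.ext
    apply Finpartition.ext
    ext A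
    rw [Finpartition.mem_bind]
    constructor
    · rintro ⟨C, hC, hA⟩
      exact Finset.mem_of_mem_filter _ hA
    · intro hA
      obtain ⟨C, hC, hAC⟩ := p.2 hA
      exact ⟨C, hC, Finset.mem_filter.2 ⟨hA, hAC⟩⟩
  right_inv g := by
    funext B
    apply Finpartition.ext
    ext A
    simp only [Finpartition.ofSubset_parts, Finset.mem_filter, Finpartition.mem_bind]
    constructor
    · rintro ⟨⟨C, hC, hA⟩, hAB⟩
      have hAC : A ⊆ C := (g ⟨C, hC⟩).le hA
      obtain ⟨x, hx⟩ := (g ⟨C, hC⟩).nonempty_of_mem_parts hA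
      have : C = (B : Finset (Fin n)) := σ.eq_of_mem_parts hC B.2 (hAC hx) (hAB hx)
      obtain ⟨Bv, hBv⟩ := B
      simp only at this
      subst this
      exact hA
    · intro hA
      exact ⟨⟨B, B.2, hA⟩, (g B).le hA⟩

variable {B : Finset (Fin n)}

/-- Transport a partition of `Fin B.card` to a partition of `B`. -/
noncomputable def mapPartition (B : Finset (Fin n))
    (Q : Finpartition (Finset.univ : Finset (Fin B.card))) : Finpartition B where
  parts := Q.parts.image (fun A => A.map (B.orderEmbOfFin rfl).toEmbedding)
  supIndep := by
    rw [Finset.supIndep_iff_pairwiseDisjoint]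
    rintro X hX Y hY hne
    obtain ⟨A₁, hA₁, rfl⟩ := Finset.mem_image.1 hX
    obtain ⟨A₂, hA₂, rfl⟩ := Finset.mem_image.1 hY
    have hA : A₁ ≠ A₂ := fun h => hne (by rw [h])
    exact Finset.disjoint_map _ |>.2 (Q.disjoint hA₁ hA₂ hA)
  sup_parts := by
    ext x
    simp only [Finset.sup_image, Finset.mem_sup, Finset.mem_map,
      RelEmbedding.coe_toEmbedding, Function.comp, id]
    constructor
    · rintro ⟨A, hA, a, ha, rfl⟩
      exact B.orderEmbOfFin_mem rfl a
    · intro hx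
      have : x ∈ Set.range (B.orderEmbOfFin rfl) := by
        rw [Finset.range_orderEmbOfFin]; exact hx
      obtain ⟨a, rfl⟩ := this
      obtain ⟨A, hA, haA⟩ := Q.exists_mem (Finset.mem_univ a)
      exact ⟨A, hA, a, haA, rfl⟩
  bot_notMem := by
    simp only [Finset.bot_eq_empty, Finset.mem_image]
    rintro ⟨A, hA, hAe⟩
    exact Q.ne_bot hA (Finset.map_eq_empty.1 hAe)

lemma mapPartition_injective (B : Finset (Fin n)) : Function.Injective (mapPartition B) := by
  intro Q₁ Q₂ h
  apply Finpartition.ext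
  have := congrArg Finpartition.parts h
  simp only [mapPartition] at this
  exact Finset.image_injective
    (Finset.map_injective (B.orderEmbOfFin rfl).toEmbedding) this

lemma mapPartition_surjective (B : Finset (Fin n)) : Function.Surjective (mapPartition B) := by
  intro R
  have hinj := (B.orderEmbOfFin rfl).injective
  have hrange : ∀ {x : Fin n}, x ∈ B → ∃ a, B.orderEmbOfFin rfl a = x := by
    intro x h
    have : x ∈ Set.range (B.orderEmbOfFin rfl) := by
      rw [Finset.range_orderEmbOfFin]; exact h
    exact this
  refine ⟨⟨R.parts.image (fun X => X.preimage (B.orderEmbOfFin rfl) (hinj.injOn)), ?_, ?_, ?_⟩, ?_⟩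
  · rw [Finset.supIndep_iff_pairwiseDisjoint]
    rintro X hX Y hY hne
    obtain ⟨X₁, hX₁, rfl⟩ := Finset.mem_image.1 hX
    obtain ⟨Y₁, hY₁, rfl⟩ := Finset.mem_image.1 hY
    have hXY : X₁ ≠ Y₁ := fun h => hne (by rw [h])
    exact Finset.disjoint_left.2 fun {a} ha ha' =>
      Finset.disjoint_left.1 (R.disjoint hX₁ hY₁ hXY) (Finset.mem_preimage.1 ha)
        (Finset.mem_preimage.1 ha')
  · apply Finset.Subset.antisymm (Finset.subset_univ _)
    intro a _
    have : B.orderEmbOfFin rfl a ∈ B := B.orderEmbOfFin_mem rfl a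
    obtain ⟨X, hX, hmem⟩ := R.exists_mem this
    exact Finset.mem_sup.2 ⟨X.preimage _ hinj.injOn,
      Finset.mem_image.2 ⟨X, hX, rfl⟩, Finset.mem_preimage.2 hmem⟩
  · simp only [Finset.bot_eq_empty, Finset.mem_image]
    rintro ⟨X, hX, hXe⟩
    obtain ⟨x, hx⟩ := R.nonempty_of_mem_parts hX
    have hxB : x ∈ B := R.le hX hx
    obtain ⟨a, rfl⟩ := hrange hxB
    have : a ∈ X.preimage (B.orderEmbOfFin rfl) hinj.injOn := Finset.mem_preimage.2 hx
    rw [hXe] at this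
    exact absurd this (Finset.notMem_empty a)
  · apply Finpartition.ext
    simp only [mapPartition, Finset.image_image]
    ext X
    simp only [Finset.mem_image, Function.comp]
    constructor
    · rintro ⟨Y, hY, rfl⟩
      convert hY using 1
      ext x
      simp only [Finset.mem_map, RelEmbedding.coe_toEmbedding, Finset.mem_preimage]
      constructor
      · rintro ⟨a, ha, rfl⟩; exact ha
      · intro hx
        obtain ⟨a, rfl⟩ := hrange (R.le hY hx)
        exact ⟨a, hx, rfl⟩
    · intro hX
      refine ⟨X, hX, ?_⟩
      ext x
      simp only [Finset.mem_map, RelEmbedding.coe_toEmbedding, Finset.mem_preimage]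
      constructor
      · rintro ⟨a, ha, rfl⟩; exact ha
      · intro hx
        obtain ⟨a, rfl⟩ := hrange (R.le hX hx)
        exact ⟨a, hx, rfl⟩

end Stage4
section Stage5
variable {n : ℕ}

lemma conn_univ_iff {k : ℕ} (Q : Finpartition (Finset.univ : Finset (Fin k))) :
    IsConnectedPartition Q ↔ ConnParts Finset.univ Q.parts := by
  constructor
  · intro h I hIsub hIne hInu hconv ⟨P, hP, hsup⟩
    have hmm : I.min' hIne ≤ I.max' hIne := I.min'_le _ (I.max'_mem hIne)
    have hI : I = Finset.Icc (I.min' hIne) (I.max' hIne) := by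
      ext x
      rw [Finset.mem_Icc]
      constructor
      · intro hx
        exact ⟨I.min'_le x hx, I.le_max' x hx⟩
      · rintro ⟨h1, h2⟩
        exact hconv _ (I.min'_mem hIne) _ (I.max'_mem hIne) x (Finset.mem_univ x) h1 h2
    exact h (I.min' hIne) (I.max' hIne) hmm (by rw [← hI]; exact hInu)
      ⟨P, hP, by rw [← hI]; exact hsup⟩
  · intro h i j hij hne hub
    obtain ⟨P, hP, hsup⟩ := hub
    refine h (Finset.Icc i j) (Finset.subset_univ _)
      ⟨i, Finset.mem_Icc.2 ⟨le_refl i, hij⟩⟩ hne ?_ ⟨P, hP, hsup⟩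
    intro a ha b hb x _ hax hxb
    exact Finset.mem_Icc.2 ⟨(Finset.mem_Icc.1 ha).1.trans hax, hxb.trans (Finset.mem_Icc.1 hb).2⟩

section MapConn

variable {B : Finset (Fin n)}

lemma mapF_sup (P : Finset (Finset (Fin B.card))) :
    (P.image (fun A => A.map (B.orderEmbOfFin rfl).toEmbedding)).sup id
      = (P.sup id).map (B.orderEmbOfFin rfl).toEmbedding := by
  ext x
  constructor
  · intro hx
    obtain ⟨X, hX, hxX⟩ := Finset.mem_sup.1 hx
    obtain ⟨A, hA, rfl⟩ := Finset.mem_image.1 hX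
    obtain ⟨a, ha, rfl⟩ := Finset.mem_map.1 hxX
    exact Finset.mem_map.2 ⟨a, Finset.mem_sup.2 ⟨A, hA, ha⟩, rfl⟩
  · intro hx
    obtain ⟨a, ha, rfl⟩ := Finset.mem_map.1 hx
    obtain ⟨A, hA, haA⟩ := Finset.mem_sup.1 ha
    exact Finset.mem_sup.2 ⟨_, Finset.mem_image.2 ⟨A, hA, rfl⟩, Finset.mem_map.2 ⟨a, haA, rfl⟩⟩
lemma mapF_univ : (Finset.univ : Finset (Fin B.card)).map (B.orderEmbOfFin rfl).toEmbedding
    = B := by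
  ext x
  constructor
  · intro hx
    obtain ⟨a, -, rfl⟩ := Finset.mem_map.1 hx
    exact B.orderEmbOfFin_mem rfl a
  · intro hx
    have : x ∈ Set.range (B.orderEmbOfFin rfl) := by
      rw [Finset.range_orderEmbOfFin]; exact hx
    obtain ⟨a, rfl⟩ := this
    exact Finset.mem_map.2 ⟨a, Finset.mem_univ a, rfl⟩

lemma conn_map_iff (Q : Finpartition (Finset.univ : Finset (Fin B.card))) :
    ConnParts B (mapPartition B Q).parts ↔ ConnParts Finset.univ Q.parts := by
  set e := B.orderEmbOfFin rfl with he
  have hinj : Function.Injective e := e.injective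
  have hmemB : ∀ {x : Fin n}, x ∈ B → ∃ a, e a = x := by
    intro x h
    have : x ∈ Set.range e := by rw [he, Finset.range_orderEmbOfFin]; exact h
    exact this
  have hmapinj : Function.Injective (fun A : Finset (Fin B.card) => A.map e.toEmbedding) :=
    Finset.map_injective e.toEmbedding
  constructor
  · intro h I hIsub hIne hInu hconv ⟨P, hP, hsup⟩
    refine h (I.map e.toEmbedding) ?_ ?_ ?_ ?_ ?_
    · exact (Finset.map_subset_map.2 hIsub).trans (le_of_eq mapF_univ)
    · obtain ⟨x, hx⟩ := hIne
      exact ⟨e x, Finset.mem_map.2 ⟨x, hx, rfl⟩⟩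
    · intro hcon
      exact hInu (hmapinj (hcon.trans mapF_univ.symm))
    · rintro a ha b hb x hx hax hxb
      obtain ⟨a₀, ha₀, rfl⟩ := Finset.mem_map.1 ha
      obtain ⟨b₀, hb₀, rfl⟩ := Finset.mem_map.1 hb
      obtain ⟨x₀, rfl⟩ := hmemB hx
      have h1 : a₀ ≤ x₀ := e.le_iff_le.1 hax
      have h2 : x₀ ≤ b₀ := e.le_iff_le.1 hxb
      exact Finset.mem_map.2 ⟨x₀, hconv a₀ ha₀ b₀ hb₀ x₀ (Finset.mem_univ _) h1 h2, rfl⟩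
    · refine ⟨P.image (fun A => A.map e.toEmbedding), ?_, ?_⟩
      · intro X hX
        obtain ⟨A, hA, rfl⟩ := Finset.mem_image.1 hX
        exact Finset.mem_image.2 ⟨A, hP hA, rfl⟩
      · rw [mapF_sup, ← hsup]
  · intro h J hJsub hJne hJnB hconv ⟨P', hP', hsup'⟩
    set I := J.preimage e hinj.injOn with hIdef
    have hJI : J = I.map e.toEmbedding := by
      ext x
      simp only [Finset.mem_map, hIdef, Finset.mem_preimage, RelEmbedding.coe_toEmbedding]
      constructor
      · intro hx
        obtain ⟨a, rfl⟩ := hmemB (hJsub hx)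
        exact ⟨a, hx, rfl⟩
      · rintro ⟨a, ha, rfl⟩
        exact ha
    set P₀ := Q.parts.filter (fun A => A.map e.toEmbedding ⊆ J) with hP₀
    have hsupP₀ : P₀.sup id = I := by
      apply le_antisymm
      · refine Finset.sup_le fun A hA => ?_
        have : A.map e.toEmbedding ⊆ I.map e.toEmbedding :=
          hJI ▸ (Finset.mem_filter.1 hA).2
        exact Finset.map_subset_map.1 this
      · intro x hx
        have hex : e x ∈ J := hJI ▸ Finset.mem_map.2 ⟨x, hx, rfl⟩
        rw [hsup'] at hex
        obtain ⟨X, hXP', hexX⟩ := Finset.mem_sup.1 hex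
        obtain ⟨A, hA, rfl⟩ := Finset.mem_image.1 (hP' hXP')
        have hAJ : A.map e.toEmbedding ⊆ J := by
          rw [hsup']
          exact Finset.le_sup (f := id) hXP'
        have hxA : x ∈ A := by
          obtain ⟨a, haA, hax⟩ := Finset.mem_map.1 hexX
          rwa [← hinj hax]
        exact Finset.mem_sup.2 ⟨A, Finset.mem_filter.2 ⟨hA, hAJ⟩, hxA⟩
    refine h I (Finset.subset_univ _) ?_ ?_ ?_ ⟨P₀, Finset.filter_subset _ _, hsupP₀.symm⟩
    · obtain ⟨y, hy⟩ := hJne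
      obtain ⟨a, rfl⟩ := hmemB (hJsub hy)
      exact ⟨a, Finset.mem_preimage.2 hy⟩
    · intro hcon
      apply hJnB
      rw [hJI, hcon, mapF_univ]
    · intro a ha b hb x _ hax hxb
      have : e x ∈ J := hconv (e a) (hJI ▸ Finset.mem_map.2 ⟨a, ha, rfl⟩)
        (e b) (hJI ▸ Finset.mem_map.2 ⟨b, hb, rfl⟩) (e x) (B.orderEmbOfFin_mem rfl x)
        (e.le_iff_le.2 hax) (e.le_iff_le.2 hxb)
      exact Finset.mem_preimage.2 this
end MapConn

lemma card_connBlock (B : Finset (Fin n)) :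
    Fintype.card {R : Finpartition B // ConnParts B R.parts} = connCount B.card := by
  rw [connCount, Nat.card_eq_fintype_card]
  exact Fintype.card_congr (Equiv.subtypeEquiv
    (Equiv.ofBijective (mapPartition B) ⟨mapPartition_injective B, mapPartition_surjective B⟩)
    (fun Q => (conn_univ_iff Q).trans (conn_map_iff Q).symm)).symm

lemma card_fiber {σ : Finpartition (Finset.univ : Finset (Fin n))} (hσnc : IsNoncrossing σ) :
    Fintype.card {π : Finpartition (Finset.univ : Finset (Fin n)) // ncClosure π = σ}
      = ∏ B ∈ σ.parts, connCount B.card := by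
  have e1 : {π : Finpartition (Finset.univ : Finset (Fin n)) // ncClosure π = σ} ≃
      {π : Finpartition (Finset.univ : Finset (Fin n)) //
        π ≤ σ ∧ ∀ B : σ.parts, ConnParts (B : Finset (Fin n)) π.parts} :=
    Equiv.subtypeEquivRight (fun π => (ncClosure_eq_iff hσnc).trans
      (and_congr Iff.rfl ⟨fun h B => h B B.2, fun h B hB => h ⟨B, hB⟩⟩))
  have e2 := (Equiv.subtypeSubtypeEquivSubtypeInter
    (fun π : Finpartition (Finset.univ : Finset (Fin n)) => π ≤ σ)
    (fun π => ∀ B : σ.parts, ConnParts (B : Finset (Fin n)) π.parts)).symm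
  have e3 := (restrictEquiv σ).subtypeEquiv
    (p := fun p : {π : Finpartition (Finset.univ : Finset (Fin n)) // π ≤ σ} =>
      ∀ B : σ.parts, ConnParts (B : Finset (Fin n)) p.1.parts)
    (q := fun g : ∀ B : σ.parts, Finpartition (B : Finset (Fin n)) =>
      ∀ B : σ.parts, ConnParts (B : Finset (Fin n)) (g B).parts)
    (fun p => forall_congr' fun B => (connParts_filter_iff (π := p.1)).symm)
  have e4 := Equiv.subtypePiEquivPi
    (p := fun (B : σ.parts) (R : Finpartition (B : Finset (Fin n))) =>
      ConnParts (B : Finset (Fin n)) R.parts)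
  rw [Fintype.card_congr (((e1.trans e2).trans e3).trans e4), Fintype.card_pi]
  rw [← Finset.prod_coe_sort σ.parts (fun B => connCount B.card)]
  exact Finset.prod_congr rfl fun B _ => card_connBlock (B : Finset (Fin n))

end Stage5

end NCB

/-- The Bell number `B_n` equals the sum over noncrossing partitions `σ` of `[n]` of the
product over blocks `B` of `σ` of the number of connected partitions of `[|B|]`. -/
theorem bell_eq_sum_noncrossing_prod_connected :
    ∀ n : ℕ, 1 ≤ n →
      Fintype.card (Finpartition (Finset.univ : Finset (Fin n)))
        = ∑ σ ∈ Finset.univ.filter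
            (fun σ : Finpartition (Finset.univ : Finset (Fin n)) => IsNoncrossing σ),
          ∏ B ∈ σ.parts, connCount B.card := by
  intro n _
  rw [← Finset.card_univ]
  rw [Finset.card_eq_sum_card_fiberwise (f := NCB.ncClosure)
    (t := Finset.univ.filter (fun σ => IsNoncrossing σ))
    (fun π _ => Finset.mem_filter.2 ⟨Finset.mem_univ _, (NCB.ncClosure_spec π).1⟩)]
  refine Finset.sum_congr rfl fun σ hσ => ?_
  have hσnc : IsNoncrossing σ := (Finset.mem_filter.1 hσ).2
  rw [← NCB.card_fiber hσnc, Fintype.card_subtype]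
end

section
/- For every n ≥ 1 and every partition σ of [n], the set of noncrossing partitions π of [n] with σ ≤ π has a least element (in the refinement order); this least element is called the noncrossing closure σ̄ of σ. -/
open Finset

open scoped Classical

/-!
Both noncrossing-ness and lying above `σ` are preserved by meets of partitions: a block of
`P ⊓ Q` is the intersection of a block of `P` with a block of `Q`, so a crossing of `P ⊓ Q`
is either a crossing of `P`, a crossing of `Q`, or no crossing at all. The noncrossing
partitions above `σ` thus form a finite, nonempty (it contains `⊤`), inf-closed set, and the
meet of all of them is its least element.
-/

lemma InfClosed.exists_isLeast_of_finite {α : Type*} [SemilatticeInf α] {s : Set α}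
    (hs : InfClosed s) (hfin : s.Finite) (hne : s.Nonempty) : ∃ c, IsLeast s c := by
  have hne' : hfin.toFinset.Nonempty := hfin.toFinset_nonempty.2 hne
  refine ⟨hfin.toFinset.inf' hne' id, ?_, fun b hb => ?_⟩
  · exact hs.finsetInf'_mem hne' fun _ => hfin.mem_toFinset.1
  · exact Finset.inf'_le id (hfin.mem_toFinset.2 hb)

namespace Finpartition

variable {α : Type*} [DecidableEq α] {s : Finset α}

lemma part_inf (P Q : Finpartition s) (a : α) : (P ⊓ Q).part a = P.part a ∩ Q.part a := by
  by_cases ha : a ∈ s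
  · refine part_eq_of_mem _ ?_ (mem_inter.2 ⟨P.mem_part ha, Q.mem_part ha⟩)
    rw [parts_inf]
    refine mem_erase.2 ⟨?_, mem_image.2 ⟨(P.part a, Q.part a), ?_, rfl⟩⟩
    · exact ne_empty_of_mem (mem_inter.2 ⟨P.mem_part ha, Q.mem_part ha⟩)
    · exact mem_product.2 ⟨P.part_mem.2 ha, Q.part_mem.2 ha⟩
  · rw [(P ⊓ Q).part_eq_empty.2 ha, P.part_eq_empty.2 ha, empty_inter]

end Finpartition

section Noncrossing

variable {n : ℕ}

lemma isNoncrossing_iff_part {π : Finpartition (univ : Finset (Fin n))} :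
    IsNoncrossing π ↔ ∀ a b c d : Fin n, a < b → b < c → c < d →
      c ∈ π.part a → d ∈ π.part b → π.part a = π.part b := by
  constructor
  · intro h a b c d hab hbc hcd hc hd
    by_contra hne
    exact h ⟨_, π.part_mem.2 (mem_univ a), _, π.part_mem.2 (mem_univ b), hne,
      a, π.mem_part (mem_univ a), b, π.mem_part (mem_univ b), c, hc, d, hd, hab, hbc, hcd⟩
  · rintro h ⟨B₁, hB₁, B₂, hB₂, hne, a, ha, b, hb, c, hc, d, hd, hab, hbc, hcd⟩
    obtain rfl := π.part_eq_of_mem hB₁ ha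
    obtain rfl := π.part_eq_of_mem hB₂ hb
    exact hne (h a b c d hab hbc hcd hc hd)

lemma isNoncrossing_top : IsNoncrossing (⊤ : Finpartition (univ : Finset (Fin n))) :=
  fun ⟨_, hB₁, _, hB₂, hne, _⟩ => hne (Finpartition.parts_top_subsingleton _ hB₁ hB₂)

lemma IsNoncrossing.inf {P Q : Finpartition (univ : Finset (Fin n))}
    (hP : IsNoncrossing P) (hQ : IsNoncrossing Q) : IsNoncrossing (P ⊓ Q) := by
  rw [isNoncrossing_iff_part] at hP hQ ⊢
  intro a b c d hab hbc hcd hc hd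
  simp only [Finpartition.part_inf, mem_inter] at hc hd ⊢
  rw [hP a b c d hab hbc hcd hc.1 hd.1, hQ a b c d hab hbc hcd hc.2 hd.2]

end Noncrossing

theorem exists_noncrossing_closure_general (n : ℕ)
    (σ : Finpartition (Finset.univ : Finset (Fin n))) :
    ∃ πbar : Finpartition (Finset.univ : Finset (Fin n)),
      IsNoncrossing πbar ∧ σ ≤ πbar ∧
        ∀ π : Finpartition (Finset.univ : Finset (Fin n)),
          IsNoncrossing π → σ ≤ π → πbar ≤ π := by
  have hclosed : InfClosed {π | IsNoncrossing π ∧ σ ≤ π} :=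
    fun P hP Q hQ => ⟨hP.1.inf hQ.1, le_inf hP.2 hQ.2⟩
  obtain ⟨πbar, ⟨hnc, hle⟩, hleast⟩ :=
    hclosed.exists_isLeast_of_finite (Set.toFinite _) ⟨⊤, isNoncrossing_top, le_top⟩
  exact ⟨πbar, hnc, hle, fun π hπ hσπ => hleast ⟨hπ, hσπ⟩⟩

/-- Every partition `σ` of `[n]` has a noncrossing closure: a least noncrossing partition
above `σ` in the refinement order. -/
theorem exists_noncrossing_closure (n : ℕ) (hn : 1 ≤ n)
    (σ : Finpartition (Finset.univ : Finset (Fin n))) :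
    ∃ πbar : Finpartition (Finset.univ : Finset (Fin n)),
      IsNoncrossing πbar ∧ σ ≤ πbar ∧
        ∀ π : Finpartition (Finset.univ : Finset (Fin n)),
          IsNoncrossing π → σ ≤ π → πbar ≤ π :=
  exists_noncrossing_closure_general n σ
end

section
/- Let (κ_k)_{k≥1} be any sequence of real numbers and n ≥ 1. For every noncrossing partition π of [n], Σ_{σ: σ̄ = π} κ_σ = Π_{B ∈ π} ( Σ_{τ ∈ Π^conn_{|B|}} κ_τ ), where the left-hand sum runs over all partitions σ of [n] whose noncrossing closure equals π, the product runs over the blocks B of π, and the inner sum runs over all connected partitions τ of [|B|]. -/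
open Finset
open scoped Classical


/-- `π` is the noncrossing closure of `σ`: the least noncrossing partition above `σ`. -/
def IsNoncrossingClosure {n : ℕ}
    (σ π : Finpartition (Finset.univ : Finset (Fin n))) : Prop :=
  IsNoncrossing π ∧ σ ≤ π ∧
    ∀ τ : Finpartition (Finset.univ : Finset (Fin n)), IsNoncrossing τ → σ ≤ τ → π ≤ τ


namespace NCAux

variable {β : Type*} [Fintype β] [DecidableEq β]

lemma part_subset_of_le {P Q : Finpartition (univ : Finset β)} (h : P ≤ Q) (x : β) :
    P.part x ⊆ Q.part x := by
  obtain ⟨T, hT, hsub⟩ := h (P.part_mem.mpr (mem_univ x))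
  have hx : x ∈ T := hsub (P.mem_part (mem_univ x))
  rw [Q.part_eq_of_mem hT hx]
  exact hsub

lemma le_of_part_subset {P Q : Finpartition (univ : Finset β)}
    (h : ∀ x, P.part x ⊆ Q.part x) : P ≤ Q := by
  intro b hb
  obtain ⟨x, hx⟩ := P.nonempty_of_mem_parts hb
  refine ⟨Q.part x, Q.part_mem.mpr (mem_univ x), ?_⟩
  rw [← P.part_eq_of_mem hb hx]; exact h x

lemma part_eq_part_of_le {P Q : Finpartition (univ : Finset β)} (h : P ≤ Q) {x y : β}
    (hxy : P.part x = P.part y) : Q.part x = Q.part y := by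
  have hy : y ∈ Q.part x := part_subset_of_le h x (hxy ▸ P.mem_part (mem_univ y))
  exact (Q.part_eq_of_mem (Q.part_mem.mpr (mem_univ x)) hy).symm

lemma parts_eq_image_part (P : Finpartition (univ : Finset β)) :
    P.parts = univ.image P.part := by
  ext T
  simp only [mem_image, mem_univ, true_and]
  constructor
  · intro hT
    obtain ⟨x, hx⟩ := P.nonempty_of_mem_parts hT
    exact ⟨x, P.part_eq_of_mem hT hx⟩
  · rintro ⟨x, rfl⟩
    exact P.part_mem.mpr (mem_univ x)

lemma ext_of_part {P Q : Finpartition (univ : Finset β)}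
    (h : ∀ x, P.part x = Q.part x) : P = Q := by
  have : P.parts = Q.parts := by
    rw [parts_eq_image_part, parts_eq_image_part]
    exact Finset.image_congr fun x _ => h x
  exact Finpartition.ext this


variable {n : ℕ}

/-- The increasing enumeration of a finset of `Fin n`. -/
noncomputable def emb (B : Finset (Fin n)) (i : Fin B.card) : Fin n :=
  B.orderEmbOfFin rfl i

lemma emb_mem (B : Finset (Fin n)) (i : Fin B.card) : emb B i ∈ B :=
  B.orderEmbOfFin_mem rfl i

lemma emb_strictMono (B : Finset (Fin n)) : StrictMono (emb B) :=
  (B.orderEmbOfFin rfl).strictMono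

lemma emb_injective (B : Finset (Fin n)) : Function.Injective (emb B) :=
  (emb_strictMono B).injective

lemma emb_lt_iff {B : Finset (Fin n)} {i j : Fin B.card} : emb B i < emb B j ↔ i < j :=
  (emb_strictMono B).lt_iff_lt

lemma emb_surj (B : Finset (Fin n)) {x : Fin n} (hx : x ∈ B) : ∃ i, emb B i = x := by
  have : x ∈ Set.range (B.orderEmbOfFin rfl) := by
    rw [range_orderEmbOfFin]; exact hx
  obtain ⟨i, hi⟩ := this
  exact ⟨i, hi⟩

/-- Restriction (trace) of a partition of `Fin n` to a finset `B`, as a partition of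
`Fin B.card` via the increasing enumeration. -/
noncomputable def restrict (σ : Finpartition (univ : Finset (Fin n))) (B : Finset (Fin n)) :
    Finpartition (univ : Finset (Fin B.card)) :=
  Finpartition.ofSetoid ⟨fun i j => σ.part (emb B i) = σ.part (emb B j),
    ⟨fun _ => rfl, Eq.symm, Eq.trans⟩⟩

lemma mem_restrict_part {σ : Finpartition (univ : Finset (Fin n))} {B : Finset (Fin n)}
    {i j : Fin B.card} :
    j ∈ (restrict σ B).part i ↔ σ.part (emb B i) = σ.part (emb B j) :=
  Finpartition.mem_part_ofSetoid_iff_rel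

lemma image_restrict_part (σ : Finpartition (univ : Finset (Fin n))) (B : Finset (Fin n))
    (i : Fin B.card) :
    ((restrict σ B).part i).image (emb B) = σ.part (emb B i) ∩ B := by
  ext y
  simp only [mem_image, mem_inter]
  constructor
  · rintro ⟨j, hj, rfl⟩
    rw [mem_restrict_part] at hj
    exact ⟨hj ▸ σ.mem_part (mem_univ _), emb_mem B j⟩
  · rintro ⟨hy, hyB⟩
    obtain ⟨j, rfl⟩ := emb_surj B hyB
    refine ⟨j, ?_, rfl⟩
    rw [mem_restrict_part]
    exact (σ.part_eq_of_mem (σ.part_mem.mpr (mem_univ _)) hy).symm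

lemma restrict_mono {σ τ : Finpartition (univ : Finset (Fin n))} (h : σ ≤ τ)
    (B : Finset (Fin n)) : restrict σ B ≤ restrict τ B := by
  apply le_of_part_subset
  intro i j hj
  rw [mem_restrict_part] at hj ⊢
  exact part_eq_part_of_le h hj



lemma noncrossing_restrict {τ : Finpartition (univ : Finset (Fin n))} (h : IsNoncrossing τ)
    (B : Finset (Fin n)) : IsNoncrossing (restrict τ B) := by
  rintro ⟨T₁, hT₁, T₂, hT₂, hne, a, ha, b, hb, c, hc, d, hd, hab, hbc, hcd⟩
  have e₁ : T₁ = (restrict τ B).part a := ((restrict τ B).part_eq_of_mem hT₁ ha).symm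
  have e₂ : T₂ = (restrict τ B).part b := ((restrict τ B).part_eq_of_mem hT₂ hb).symm
  have hac : τ.part (emb B a) = τ.part (emb B c) := mem_restrict_part.mp (e₁ ▸ hc)
  have hbd : τ.part (emb B b) = τ.part (emb B d) := mem_restrict_part.mp (e₂ ▸ hd)
  have hne' : τ.part (emb B a) ≠ τ.part (emb B b) := by
    intro hEq
    apply hne
    rw [e₁, e₂]
    ext x
    rw [mem_restrict_part, mem_restrict_part, hEq]
  apply h
  refine ⟨τ.part (emb B a), τ.part_mem.mpr (mem_univ _), τ.part (emb B b), τ.part_mem.mpr (mem_univ _),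
    hne', emb B a, τ.mem_part (mem_univ _), emb B b, τ.mem_part (mem_univ _),
    emb B c, hac ▸ τ.mem_part (mem_univ _), emb B d, hbd ▸ τ.mem_part (mem_univ _),
    emb_lt_iff.mpr hab, emb_lt_iff.mpr hbc, emb_lt_iff.mpr hcd⟩

lemma exists_interval_part {m : ℕ} (ρ : Finpartition (univ : Finset (Fin m)))
    (hnc : IsNoncrossing ρ) (hne : ∃ T ∈ ρ.parts, T ≠ univ) :
    ∃ i j : Fin m, i ≤ j ∧ Finset.Icc i j ≠ univ ∧ Finset.Icc i j ∈ ρ.parts := by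
  obtain ⟨T₀, hT₀, hT₀ne⟩ := hne
  obtain ⟨⟨P, hP⟩, -, hmin⟩ := Finset.exists_min_image ρ.parts.attach
    (fun Q => ((Q.1.max' (ρ.nonempty_of_mem_parts Q.2) : ℕ) -
      (Q.1.min' (ρ.nonempty_of_mem_parts Q.2) : ℕ)))
    (Finset.attach_nonempty_iff.mpr ⟨T₀, hT₀⟩)
  have hPne : P.Nonempty := ρ.nonempty_of_mem_parts hP
  set a := P.min' hPne with ha
  set b := P.max' hPne with hb
  have hPIcc : P = Finset.Icc a b := by
    apply Finset.Subset.antisymm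
    · intro x hx
      exact Finset.mem_Icc.mpr ⟨P.min'_le x hx, P.le_max' x hx⟩
    · intro y hy
      by_contra hyP
      rw [Finset.mem_Icc] at hy
      have hay : a < y := lt_of_le_of_ne hy.1 (fun h => hyP (h ▸ P.min'_mem hPne))
      have hyb : y < b := lt_of_le_of_ne hy.2 (fun h => hyP (h ▸ P.max'_mem hPne))
      set Q := ρ.part y with hQdef
      have hQ : Q ∈ ρ.parts := ρ.part_mem.mpr (mem_univ y)
      have hyQ : y ∈ Q := ρ.mem_part (mem_univ y)
      have hQP : Q ≠ P := fun h => hyP (h ▸ hyQ)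
      have hQsub : ∀ z ∈ Q, a < z ∧ z < b := by
        intro z hz
        have hzP : z ∉ P := fun hzP => hQP (ρ.eq_of_mem_parts hQ hP hz hzP)
        constructor
        · by_contra hza
          push_neg at hza
          have hza' : z < a := lt_of_le_of_ne hza (fun h => hzP (h ▸ P.min'_mem hPne))
          exact hnc ⟨Q, hQ, P, hP, hQP, z, hz, a, P.min'_mem hPne, y, hyQ, b, P.max'_mem hPne,
            hza', hay, hyb⟩
        · by_contra hzb
          push_neg at hzb
          have hzb'' : b ≤ z := hzb
          have hzb' : b < z := lt_of_le_of_ne hzb'' (fun h : b = z => hzP (h ▸ P.max'_mem hPne))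
          exact hnc ⟨P, hP, Q, hQ, fun h => hQP h.symm, a, P.min'_mem hPne, y, hyQ,
            b, P.max'_mem hPne, z, hz, hay, hyb, hzb'⟩
      have hQne : Q.Nonempty := ⟨y, hyQ⟩
      have h1 := hQsub _ (Q.min'_mem hQne)
      have h2 := hQsub _ (Q.max'_mem hQne)
      have h3 : Q.min' hQne ≤ Q.max' hQne := Q.min'_le _ (Q.max'_mem hQne)
      have := hmin ⟨Q, hQ⟩ (mem_attach _ _)
      simp only at this
      have hcast1 : (a : ℕ) < (Q.min' hQne : ℕ) := h1.1
      have hcast2 : ((Q.max' hQne : ℕ)) < (b : ℕ) := h2.2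
      have hcast3 : ((Q.min' hQne : ℕ)) ≤ (Q.max' hQne : ℕ) := h3
      omega
  have hPuniv : P ≠ univ := by
    intro h
    rcases eq_or_ne T₀ P with rfl | hTP
    · exact hT₀ne h
    · obtain ⟨t, ht⟩ := ρ.nonempty_of_mem_parts hT₀
      exact hTP (ρ.eq_of_mem_parts hT₀ hP ht (h ▸ mem_univ t))
  exact ⟨a, b, P.min'_le _ (P.max'_mem hPne), hPIcc ▸ hPuniv, hPIcc ▸ hP⟩


section Split

variable {σ π : Finpartition (univ : Finset (Fin n))} {B : Finset (Fin n)}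

lemma split_lemma (hπnc : IsNoncrossing π) (hσπ : σ ≤ π) (hB : B ∈ π.parts)
    {i j : Fin B.card} (hij : i ≤ j) (hneq : Finset.Icc i j ≠ univ)
    (hU : IsUnionOfBlocks (restrict σ B) (Finset.Icc i j)) :
    ∃ τ : Finpartition (univ : Finset (Fin n)), IsNoncrossing τ ∧ σ ≤ τ ∧ ¬ π ≤ τ := by
  classical
  set I : Finset (Fin n) := (Finset.Icc i j).image (emb B) with hIdef
  have hIB : I ⊆ B := by
    intro x hx
    obtain ⟨a, _, rfl⟩ := Finset.mem_image.mp hx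
    exact emb_mem B a
  have memI : ∀ {x : Fin n}, x ∈ I ↔ ∃ a ∈ Finset.Icc i j, emb B a = x := fun {x} =>
    Finset.mem_image
  set τ : Finpartition (univ : Finset (Fin n)) :=
    Finpartition.ofSetoid ⟨fun x y => π.part x = π.part y ∧ (x ∈ I ↔ y ∈ I),
      ⟨fun _ => ⟨rfl, Iff.rfl⟩, fun h => ⟨h.1.symm, h.2.symm⟩,
        fun h h' => ⟨h.1.trans h'.1, h.2.trans h'.2⟩⟩⟩ with hτdef
  have memτ : ∀ {x y : Fin n}, y ∈ τ.part x ↔ (π.part x = π.part y ∧ (x ∈ I ↔ y ∈ I)) :=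
    fun {x y} => Finpartition.mem_part_ofSetoid_iff_rel
  obtain ⟨P, hPsub, hPsup⟩ := hU
  -- σ.part-equal elements agree on membership in I
  have hsame : ∀ x y : Fin n, σ.part x = σ.part y → x ∈ I → y ∈ I := by
    intro x y hxy hxI
    obtain ⟨a, haIcc, rfl⟩ := memI.mp hxI
    have hxB : emb B a ∈ B := emb_mem B a
    have hπx : π.part (emb B a) = B := π.part_eq_of_mem hB hxB
    have hyB : y ∈ B := by
      have : y ∈ π.part y := π.mem_part (mem_univ y)
      rwa [← part_eq_part_of_le hσπ hxy, hπx] at this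
    obtain ⟨b, rfl⟩ := emb_surj B hyB
    obtain ⟨Q, hQP, haQ⟩ := Finset.mem_sup.mp (hPsup ▸ haIcc)
    have hQparts : Q ∈ (restrict σ B).parts := hPsub hQP
    have hQeq : Q = (restrict σ B).part a := ((restrict σ B).part_eq_of_mem hQparts haQ).symm
    have hbQ : b ∈ Q := by
      rw [hQeq, mem_restrict_part]; exact hxy
    have : b ∈ Finset.Icc i j := by
      rw [hPsup]
      exact Finset.mem_sup.mpr ⟨Q, hQP, hbQ⟩
    exact memI.mpr ⟨b, this, rfl⟩
  refine ⟨τ, ?_, ?_, ?_⟩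
  · -- noncrossing
    rintro ⟨T₁, hT₁, T₂, hT₂, hneT, a, ha, b, hb, c, hc, d, hd, hab, hbc, hcd⟩
    have e₁ : T₁ = τ.part a := (τ.part_eq_of_mem hT₁ ha).symm
    have e₂ : T₂ = τ.part b := (τ.part_eq_of_mem hT₂ hb).symm
    have rac := memτ.mp (e₁ ▸ hc)
    have rbd := memτ.mp (e₂ ▸ hd)
    have rab : ¬ (π.part a = π.part b ∧ (a ∈ I ↔ b ∈ I)) := by
      intro hr
      apply hneT
      rw [e₁, e₂]
      ext x
      rw [memτ, memτ, hr.1]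
      exact and_congr_right fun _ => iff_congr hr.2 Iff.rfl
    by_cases hpab : π.part a = π.part b
    · have hIab : ¬ (a ∈ I ↔ b ∈ I) := fun h => rab ⟨hpab, h⟩
      have hBI : ∀ {x : Fin n}, x ∈ I → π.part x = B := fun {x} hx =>
        π.part_eq_of_mem hB (hIB hx)
      rcases Classical.em (a ∈ I) with haI | haI
      · have hbI : b ∉ I := fun h => hIab ⟨fun _ => h, fun _ => haI⟩
        have hcI : c ∈ I := rac.2.mp haI
        have hbB : b ∈ B := by
          have : b ∈ π.part b := π.mem_part (mem_univ b)
          rwa [← hpab, hBI haI] at this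
        obtain ⟨aa, haa, rfl⟩ := memI.mp haI
        obtain ⟨cc, hcc, rfl⟩ := memI.mp hcI
        obtain ⟨bb, rfl⟩ := emb_surj B hbB
        rw [Finset.mem_Icc] at haa hcc
        have h1 : aa < bb := emb_lt_iff.mp hab
        have h2 : bb < cc := emb_lt_iff.mp hbc
        exact hbI (memI.mpr ⟨bb, Finset.mem_Icc.mpr ⟨le_trans haa.1 h1.le, le_trans h2.le hcc.2⟩,
          rfl⟩)
      · have hbI : b ∈ I := by
          by_contra hbI
          exact hIab ⟨fun h => absurd h haI, fun h => absurd h hbI⟩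
        have hcI : c ∉ I := fun h => haI (rac.2.mpr h)
        have hdI : d ∈ I := rbd.2.mp hbI
        have hcB : c ∈ B := by
          have : c ∈ π.part c := π.mem_part (mem_univ c)
          rwa [← rac.1, hpab, hBI hbI] at this
        obtain ⟨bb, hbb, rfl⟩ := memI.mp hbI
        obtain ⟨dd, hdd, rfl⟩ := memI.mp hdI
        obtain ⟨cc, rfl⟩ := emb_surj B hcB
        rw [Finset.mem_Icc] at hbb hdd
        have h1 : bb < cc := emb_lt_iff.mp hbc
        have h2 : cc < dd := emb_lt_iff.mp hcd
        exact hcI (memI.mpr ⟨cc, Finset.mem_Icc.mpr ⟨le_trans hbb.1 h1.le, le_trans h2.le hdd.2⟩,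
          rfl⟩)
    · refine hπnc ⟨π.part a, π.part_mem.mpr (mem_univ a), π.part b, π.part_mem.mpr (mem_univ b), hpab,
        a, π.mem_part (mem_univ a), b, π.mem_part (mem_univ b),
        c, rac.1 ▸ π.mem_part (mem_univ c), d, rbd.1 ▸ π.mem_part (mem_univ d),
        hab, hbc, hcd⟩
  · -- σ ≤ τ
    apply le_of_part_subset
    intro x y hy
    have hxy : σ.part x = σ.part y := ((σ.part_eq_of_mem (σ.part_mem.mpr (mem_univ x)) hy)).symm
    rw [memτ]
    exact ⟨part_eq_part_of_le hσπ hxy,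
      ⟨hsame x y hxy, hsame y x hxy.symm⟩⟩
  · -- ¬ π ≤ τ
    intro hle
    obtain ⟨T, hT, hBT⟩ := hle hB
    have hxI : emb B i ∈ I := memI.mpr ⟨i, Finset.mem_Icc.mpr ⟨le_refl i, hij⟩, rfl⟩
    obtain ⟨b, hb⟩ : ∃ b : Fin B.card, b ∉ Finset.Icc i j := by
      by_contra h
      push_neg at h
      exact hneq (Finset.eq_univ_iff_forall.mpr h)
    have hyI : emb B b ∉ I := by
      intro h
      obtain ⟨a, ha, hae⟩ := memI.mp h
      exact hb (emb_injective B hae ▸ ha)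
    have hxT : emb B i ∈ T := hBT (hIB hxI)
    have hyT : emb B b ∈ T := hBT (emb_mem B b)
    have : T = τ.part (emb B i) := (τ.part_eq_of_mem hT hxT).symm
    have := memτ.mp (this ▸ hyT)
    exact hyI (this.2.mp hxI)

lemma le_of_traces_connected {τ : Finpartition (univ : Finset (Fin n))} (hσπ : σ ≤ π)
    (hconn : ∀ B ∈ π.parts, IsConnectedPartition (restrict σ B))
    (hτnc : IsNoncrossing τ) (hστ : σ ≤ τ) : π ≤ τ := by
  intro B hB
  obtain ⟨x₀, hx₀⟩ := π.nonempty_of_mem_parts hB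
  refine ⟨τ.part x₀, τ.part_mem.mpr (mem_univ x₀), ?_⟩
  have key : ∀ T ∈ (restrict τ B).parts, T = univ := by
    by_contra hk
    push_neg at hk
    obtain ⟨T, hT, hTne⟩ := hk
    obtain ⟨i, j, hij, hneq, hmem⟩ :=
      exists_interval_part (restrict τ B) (noncrossing_restrict hτnc B) ⟨T, hT, hTne⟩
    apply hconn B hB i j hij hneq
    refine ⟨(restrict σ B).parts.filter (· ⊆ Finset.Icc i j), filter_subset _ _, ?_⟩
    apply Finset.Subset.antisymm
    · intro x hx
      have h1 : (restrict σ B).part x ⊆ (restrict τ B).part x :=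
        part_subset_of_le (restrict_mono hστ B) x
      have h2 : (restrict τ B).part x = Finset.Icc i j :=
        (restrict τ B).part_eq_of_mem hmem hx
      exact Finset.mem_sup.mpr ⟨(restrict σ B).part x,
        Finset.mem_filter.mpr ⟨(restrict σ B).part_mem.mpr (mem_univ x), h2 ▸ h1⟩,
        (restrict σ B).mem_part (mem_univ x)⟩
    · show _ ≤ Finset.Icc i j
      apply Finset.sup_le
      intro Q hQ
      exact (Finset.mem_filter.mp hQ).2
  intro y hy
  obtain ⟨a₀, ha₀⟩ := emb_surj B hx₀
  obtain ⟨b, rfl⟩ := emb_surj B hy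
  have : b ∈ (restrict τ B).part a₀ := by
    rw [key _ ((restrict τ B).part_mem.mpr (mem_univ a₀))]
    exact mem_univ b
  have heq : τ.part (emb B a₀) = τ.part (emb B b) := mem_restrict_part.mp this
  rw [← ha₀, heq] at *
  exact τ.mem_part (mem_univ _)

lemma closure_iff (hπ : IsNoncrossing π) :
    IsNoncrossingClosure σ π ↔
      σ ≤ π ∧ ∀ B ∈ π.parts, IsConnectedPartition (restrict σ B) := by
  constructor
  · rintro ⟨-, hσπ, hmin⟩
    refine ⟨hσπ, fun B hB => ?_⟩
    intro i j hij hneq hU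
    obtain ⟨τ, h1, h2, h3⟩ := split_lemma hπ hσπ hB hij hneq hU
    exact h3 (hmin τ h1 h2)
  · rintro ⟨hσπ, hconn⟩
    exact ⟨hπ, hσπ, fun τ h1 h2 => le_of_traces_connected hσπ hconn h1 h2⟩

end Split


section Glue

variable {π : Finpartition (univ : Finset (Fin n))}

/-- Push a partition of `Fin B.card` forward to a partition of `B`. -/
noncomputable def push (B : Finset (Fin n)) (ρ : Finpartition (univ : Finset (Fin B.card))) :
    Finpartition B where
  parts := ρ.parts.image fun Q => Q.image (emb B)
  supIndep := by
    rw [Finset.supIndep_iff_pairwiseDisjoint]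
    intro a ha b hb hab
    simp only [coe_image, Set.mem_image, mem_coe] at ha hb
    obtain ⟨Qa, hQa, rfl⟩ := ha
    obtain ⟨Qb, hQb, rfl⟩ := hb
    have hne : Qa ≠ Qb := fun h => hab (by rw [h])
    exact (Finset.disjoint_image (emb_injective B)).mpr (ρ.disjoint hQa hQb hne)
  sup_parts := by
    ext x
    simp only [Finset.sup_image, Finset.mem_sup, Function.comp]
    constructor
    · rintro ⟨Q, hQ, hx⟩
      obtain ⟨q, _, rfl⟩ := Finset.mem_image.mp hx
      exact emb_mem B q
    · intro hx
      obtain ⟨q, rfl⟩ := emb_surj B hx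
      obtain ⟨Q, hQ, hqQ⟩ := ρ.exists_mem (mem_univ q)
      exact ⟨Q, hQ, Finset.mem_image.mpr ⟨q, hqQ, rfl⟩⟩
  bot_notMem := by
    rw [Finset.mem_image]
    rintro ⟨Q, hQ, hbot⟩
    have : Q = ∅ := Finset.image_eq_empty.mp hbot
    rw [this] at hQ
    exact ρ.bot_notMem hQ

/-- Glue partitions of the blocks of `π` into a partition of `Fin n`. -/
noncomputable def glue (π : Finpartition (univ : Finset (Fin n)))
    (p : ∀ B ∈ π.parts, Finpartition (univ : Finset (Fin B.card))) :
    Finpartition (univ : Finset (Fin n)) :=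
  π.bind fun B hB => push B (p B hB)

lemma glue_le (p : ∀ B ∈ π.parts, Finpartition (univ : Finset (Fin B.card))) :
    glue π p ≤ π := by
  intro T hT
  obtain ⟨B, hB, hT'⟩ := Finpartition.mem_bind.mp hT
  exact ⟨B, hB, (push B (p B hB)).le hT'⟩

lemma glue_part (p : ∀ B ∈ π.parts, Finpartition (univ : Finset (Fin B.card)))
    {B : Finset (Fin n)} (hB : B ∈ π.parts) (a : Fin B.card) :
    (glue π p).part (emb B a) = ((p B hB).part a).image (emb B) := by
  apply (glue π p).part_eq_of_mem
  · apply Finpartition.mem_bind.mpr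
    exact ⟨B, hB, Finset.mem_image.mpr ⟨(p B hB).part a, (p B hB).part_mem.mpr (mem_univ a), rfl⟩⟩
  · exact Finset.mem_image.mpr ⟨a, (p B hB).mem_part (mem_univ a), rfl⟩

lemma restrict_glue (p : ∀ B ∈ π.parts, Finpartition (univ : Finset (Fin B.card)))
    {B : Finset (Fin n)} (hB : B ∈ π.parts) :
    restrict (glue π p) B = p B hB := by
  apply ext_of_part
  intro i
  ext j
  rw [mem_restrict_part, glue_part p hB, glue_part p hB]
  constructor
  · intro h
    have h2 := Finset.image_injective (emb_injective B) h
    rw [h2]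
    exact (p B hB).mem_part (mem_univ j)
  · intro hj
    rw [(p B hB).part_eq_of_mem ((p B hB).part_mem.mpr (mem_univ i)) hj]

lemma glue_restrict {σ : Finpartition (univ : Finset (Fin n))} (hσπ : σ ≤ π) :
    glue π (fun B _ => restrict σ B) = σ := by
  apply ext_of_part
  intro x
  have hBmem : π.part x ∈ π.parts := π.part_mem.mpr (mem_univ x)
  have hx : x ∈ π.part x := π.mem_part (mem_univ x)
  obtain ⟨a, ha⟩ := emb_surj (π.part x) hx
  rw [← ha, glue_part _ hBmem, image_restrict_part, ha]
  have hsub : σ.part x ⊆ π.part x := part_subset_of_le hσπ x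
  exact Finset.inter_eq_left.mpr hsub

end Glue

section Weight

variable {σ π : Finpartition (univ : Finset (Fin n))}

lemma weight_restrict (κ : ℕ → ℝ) (hσπ : σ ≤ π) {B : Finset (Fin n)} (hB : B ∈ π.parts) :
    partWeight κ (restrict σ B) = ∏ P ∈ σ.parts.filter (· ⊆ B), κ P.card := by
  unfold partWeight
  apply Finset.prod_bij (i := fun Q _ => Q.image (emb B))
  · intro Q hQ
    obtain ⟨a, haQ⟩ := (restrict σ B).nonempty_of_mem_parts hQ
    have hQa : Q = (restrict σ B).part a := ((restrict σ B).part_eq_of_mem hQ haQ).symm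
    have himg : Q.image (emb B) = σ.part (emb B a) ∩ B := by
      rw [hQa]; exact image_restrict_part σ B a
    have hsub : σ.part (emb B a) ⊆ B := by
      have h1 : σ.part (emb B a) ⊆ π.part (emb B a) := part_subset_of_le hσπ _
      rwa [π.part_eq_of_mem hB (emb_mem B a)] at h1
    rw [himg, Finset.inter_eq_left.mpr hsub]
    exact Finset.mem_filter.mpr ⟨σ.part_mem.mpr (mem_univ _), hsub⟩
  · intro Q₁ h₁ Q₂ h₂ h
    exact Finset.image_injective (emb_injective B) h
  · intro P hP
    obtain ⟨hPparts, hPB⟩ := Finset.mem_filter.mp hP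
    obtain ⟨x, hx⟩ := σ.nonempty_of_mem_parts hPparts
    obtain ⟨a, ha⟩ := emb_surj B (hPB hx)
    refine ⟨(restrict σ B).part a, by simp [(restrict σ B).part_mem], ?_⟩
    rw [image_restrict_part, ha, σ.part_eq_of_mem hPparts hx, Finset.inter_eq_left.mpr hPB]
  · intro Q hQ
    rw [Finset.card_image_of_injective _ (emb_injective B)]

lemma weight_eq_prod (κ : ℕ → ℝ) (hσπ : σ ≤ π) :
    partWeight κ σ = ∏ B ∈ π.parts, partWeight κ (restrict σ B) := by
  have hcov : σ.parts = π.parts.biUnion (fun B => σ.parts.filter (· ⊆ B)) := by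
    ext P
    simp only [Finset.mem_biUnion, Finset.mem_filter]
    constructor
    · intro hP
      obtain ⟨B, hB, hPB⟩ := hσπ hP
      exact ⟨B, hB, hP, hPB⟩
    · rintro ⟨B, hB, hP, -⟩
      exact hP
  calc partWeight κ σ = ∏ P ∈ π.parts.biUnion (fun B => σ.parts.filter (· ⊆ B)), κ P.card := by
        rw [partWeight, ← hcov]
    _ = ∏ B ∈ π.parts, ∏ P ∈ σ.parts.filter (· ⊆ B), κ P.card := by
        apply Finset.prod_biUnion
        intro B₁ h₁ B₂ h₂ hne
        simp only [Function.onFun]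
        rw [Finset.disjoint_left]
        intro P hP₁ hP₂
        have hd := π.disjoint h₁ h₂ hne
        obtain ⟨x, hx⟩ := σ.nonempty_of_mem_parts (Finset.mem_filter.mp hP₁).1
        exact Finset.disjoint_left.mp hd ((Finset.mem_filter.mp hP₁).2 hx)
          ((Finset.mem_filter.mp hP₂).2 hx)
    _ = ∏ B ∈ π.parts, partWeight κ (restrict σ B) := by
        apply Finset.prod_congr rfl
        intro B hB
        rw [weight_restrict κ hσπ hB]

end Weight

end NCAux

/-- For a noncrossing partition `π` of `[n]`, the sum of `κ_σ` over all partitions `σ` whose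
noncrossing closure is `π` factors as the product over the blocks `B` of `π` of the sums of
`κ_τ` over connected partitions `τ` of `[|B|]`. -/
theorem sum_over_closure_fiber_eq_prod (κ : ℕ → ℝ) (n : ℕ) (hn : 1 ≤ n)
    (π : Finpartition (Finset.univ : Finset (Fin n))) (hπ : IsNoncrossing π) :
    (∑ σ ∈ Finset.univ.filter
        (fun σ : Finpartition (Finset.univ : Finset (Fin n)) => IsNoncrossingClosure σ π),
      partWeight κ σ)
      = ∏ B ∈ π.parts,
          ∑ τ ∈ Finset.univ.filter
              (fun τ : Finpartition (Finset.univ : Finset (Fin B.card)) =>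
                IsConnectedPartition τ),
            partWeight κ τ := by
  classical
  rw [Finset.prod_sum]
  refine Finset.sum_nbij' (i := fun σ B hB => NCAux.restrict σ B)
    (j := fun p => NCAux.glue π p) ?_ ?_ ?_ ?_ ?_
  · intro σ hσ
    rw [Finset.mem_filter] at hσ
    obtain ⟨hσπ, hconn⟩ := (NCAux.closure_iff hπ).mp hσ.2
    rw [Finset.mem_pi]
    intro B hB
    rw [Finset.mem_filter]
    exact ⟨Finset.mem_univ _, hconn B hB⟩
  · intro p hp
    rw [Finset.mem_pi] at hp
    rw [Finset.mem_filter]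
    refine ⟨Finset.mem_univ _, (NCAux.closure_iff hπ).mpr ⟨NCAux.glue_le p, fun B hB => ?_⟩⟩
    rw [NCAux.restrict_glue p hB]
    exact (Finset.mem_filter.mp (hp B hB)).2
  · intro σ hσ
    rw [Finset.mem_filter] at hσ
    exact NCAux.glue_restrict ((NCAux.closure_iff hπ).mp hσ.2).1
  · intro p hp
    funext B hB
    exact NCAux.restrict_glue p hB
  · intro σ hσ
    rw [Finset.mem_filter] at hσ
    rw [NCAux.weight_eq_prod κ ((NCAux.closure_iff hπ).mp hσ.2).1, ← Finset.prod_attach]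
end

section
/- Dobinski's formula: for every n ≥ 0, the Bell number B_n (the number of partitions of an n-element set) satisfies B_n = e^{-1} · Σ_{k=0}^{∞} k^n / k!. -/
open Finset

private def bellAux : ℕ → ℕ
  | 0 => 1
  | n+1 => ∑ j ∈ Finset.range (n+1), n.choose j * bellAux (n - j)
decreasing_by exact Nat.lt_succ_of_le (Nat.sub_le n j)

private lemma bellAux_succ (n : ℕ) :
    bellAux (n+1) = ∑ j ∈ Finset.range (n+1), n.choose j * bellAux j := by
  rw [bellAux, ← Finset.sum_range_reflect]
  refine Finset.sum_congr rfl fun j hj => ?_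
  rw [Finset.mem_range, Nat.lt_succ_iff] at hj
  rw [Nat.add_sub_cancel, Nat.choose_symm hj, Nat.sub_sub_self hj]

private lemma expand_aux (n k : ℕ) : ((k+1 : ℕ) : ℝ) ^ (n+1) / (k+1).factorial
    = ∑ i ∈ Finset.range (n+1), (n.choose i : ℝ) * ((k : ℝ) ^ i / k.factorial) := by
  have hk : ((k:ℝ)+1) ≠ 0 := by positivity
  have hf : (k.factorial : ℝ) ≠ 0 := by positivity
  have h2 : ((k:ℝ)+1)/(((k:ℝ)+1)*(k.factorial:ℝ)) = (1:ℝ)/k.factorial := by field_simp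
  push_cast [Nat.factorial_succ]
  rw [pow_succ, mul_div_assoc, h2, add_pow, Finset.sum_mul]
  refine Finset.sum_congr rfl fun i hi => ?_
  ring

private lemma summable_aux : ∀ n : ℕ, Summable (fun k : ℕ => (k : ℝ) ^ n / k.factorial) := by
  intro n
  induction n using Nat.strong_induction_on with
  | _ n ih =>
    match n with
    | 0 =>
      simpa using Real.summable_pow_div_factorial 1
    | n+1 =>
      rw [← summable_nat_add_iff 1]
      simp only [expand_aux]
      exact summable_sum fun i hi => (ih i (Finset.mem_range.mp hi)).mul_left _

private lemma tsum_aux : ∀ n : ℕ, ∑' k : ℕ, (k : ℝ) ^ n / k.factorial = Real.exp 1 * bellAux n := by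
  intro n
  induction n using Nat.strong_induction_on with
  | _ n ih =>
    match n with
    | 0 =>
      have h : Real.exp 1 = ∑' k : ℕ, (1:ℝ) ^ k / k.factorial := by
        rw [Real.exp_eq_exp_ℝ, NormedSpace.exp_eq_tsum_div]
      simp [bellAux, h]
    | n+1 =>
      rw [Summable.tsum_eq_zero_add (summable_aux (n+1))]
      simp only [Nat.cast_zero, ne_eq, Nat.succ_ne_zero, not_false_eq_true, zero_pow,
        Nat.factorial_zero, Nat.cast_one, div_one, zero_add]
      have : ∀ k : ℕ, ((k+1 : ℕ) : ℝ) ^ (n+1) / (k+1).factorial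
          = ∑ i ∈ Finset.range (n+1), (n.choose i : ℝ) * ((k : ℝ) ^ i / k.factorial) :=
        expand_aux n
      calc ∑' k : ℕ, ((k+1:ℕ):ℝ) ^ (n+1) / (k+1).factorial
          = ∑' k : ℕ, ∑ i ∈ Finset.range (n+1), (n.choose i : ℝ) * ((k : ℝ) ^ i / k.factorial) := by
            refine tsum_congr fun k => ?_
            rw [this k]
        _ = ∑ i ∈ Finset.range (n+1), ∑' k : ℕ, (n.choose i : ℝ) * ((k : ℝ) ^ i / k.factorial) :=
            Summable.tsum_finsetSum fun i _ => (summable_aux i).mul_left _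
        _ = ∑ i ∈ Finset.range (n+1), (n.choose i : ℝ) * (Real.exp 1 * bellAux i) := by
            refine Finset.sum_congr rfl fun i hi => ?_
            rw [tsum_mul_left, ih i (Finset.mem_range.mp hi)]
        _ = Real.exp 1 * bellAux (n+1) := by
            rw [bellAux_succ]
            push_cast
            rw [Finset.mul_sum]
            refine Finset.sum_congr rfl fun i hi => ?_
            ring

variable {α : Type*} [DecidableEq α]

private lemma part_eq_insert {s : Finset α} (P : Finpartition s) {a : α} (ha : a ∈ s)
    {t : Finset α} (h : (P.part a).erase a = t) : P.part a = insert a t := by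
  rw [← h, Finset.insert_erase (P.mem_part ha)]

private lemma hb_aux (a : α) (t : Finset α) : (insert a t : Finset α) ≠ ⊥ := by
  simp

private lemma hab_aux {s : Finset α} (a : α) (t : Finset α) :
    Disjoint (s.erase a \ t) (insert a t) := by
  rw [Finset.disjoint_left]
  intro x hx hx'
  simp only [mem_sdiff, mem_erase] at hx
  simp only [mem_insert] at hx'
  rcases hx' with rfl | hx' <;> tauto

private lemma hc_aux {s : Finset α} {a : α} (ha : a ∈ s) {t : Finset α}
    (ht : t ⊆ s.erase a) : (s.erase a \ t) ⊔ insert a t = s := by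
  ext x
  simp only [sup_eq_union, mem_union, mem_sdiff, mem_erase, mem_insert]
  constructor
  · rintro ((⟨⟨-, hx⟩, -⟩) | (rfl | hx))
    · exact hx
    · exact ha
    · exact mem_of_mem_erase (ht hx)
  · intro hx
    by_cases hxa : x = a
    · exact Or.inr (Or.inl hxa)
    · by_cases hxt : x ∈ t
      · exact Or.inr (Or.inr hxt)
      · exact Or.inl ⟨⟨hxa, hx⟩, hxt⟩

private lemma part_extend {s : Finset α} {a : α} (ha : a ∈ s) {t : Finset α}
    (ht : t ⊆ s.erase a) (Q : Finpartition (s.erase a \ t)) :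
    (Q.extend (hb_aux a t) (hab_aux a t) (hc_aux ha ht)).part a = insert a t :=
  Finpartition.part_eq_of_mem _ (t := insert a t)
    (by rw [Finpartition.extend_parts]; exact mem_insert_self _ _) (mem_insert_self a t)

private lemma disj_part {s : Finset α} {a : α} {t : Finset α} (ht : t ⊆ s.erase a)
    (Q : Finpartition (s.erase a \ t)) {d : Finset α} (hd : d ∈ Q.parts) :
    Disjoint d (insert a t) := by
  rw [Finset.disjoint_left]
  intro x hx hx'
  have hmem := Q.le hd hx
  simp only [mem_sdiff, mem_erase] at hmem
  simp only [mem_insert] at hx'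
  rcases hx' with rfl | hx' <;> tauto

private def fiberEquiv {s : Finset α} (a : α) (ha : a ∈ s) (t : Finset α)
    (ht : t ⊆ s.erase a) :
    {P : Finpartition s // (P.part a).erase a = t} ≃ Finpartition (s.erase a \ t) where
  toFun := fun ⟨P, h⟩ => (P.avoid (P.part a)).copy (by
    rw [part_eq_insert P ha h]
    ext x
    simp only [mem_sdiff, mem_erase, mem_insert, not_or]
    tauto)
  invFun := fun Q => ⟨Q.extend (hb_aux a t) (hab_aux a t) (hc_aux ha ht), by
    have hat : a ∉ t := fun hc => (mem_erase.mp (ht hc)).1 rfl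
    rw [part_extend ha ht Q, Finset.erase_insert hat]⟩
  left_inv := fun ⟨P, h⟩ => by
    apply Subtype.ext
    apply Finpartition.ext
    ext c
    simp only [Finpartition.extend_parts, Finpartition.copy_parts, mem_insert,
      Finpartition.mem_avoid]
    have hpa : P.part a = insert a t := part_eq_insert P ha h
    constructor
    · rintro (rfl | ⟨d, hd, hdle, rfl⟩)
      · rw [← hpa]; exact P.part_mem.mpr ha
      · have hne : d ≠ P.part a := fun hc => hdle (hc ▸ le_refl _)
        have hdisj : Disjoint d (P.part a) := P.disjoint hd (P.part_mem.mpr ha) hne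
        rwa [Finset.sdiff_eq_self_iff_disjoint.mpr hdisj]
    · intro hc
      by_cases hcp : c = P.part a
      · exact Or.inl (hcp.trans hpa)
      · refine Or.inr ⟨c, hc, fun hle => hcp ?_, ?_⟩
        · exact P.disjoint.eq_of_le hc (P.part_mem.mpr ha) (P.ne_bot hc) hle
        · have hdisj : Disjoint c (P.part a) := P.disjoint hc (P.part_mem.mpr ha) hcp
          exact Finset.sdiff_eq_self_iff_disjoint.mpr hdisj
  right_inv := fun Q => by
    apply Finpartition.ext
    ext c
    simp only [Finpartition.copy_parts, Finpartition.mem_avoid, part_extend ha ht Q,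
      Finpartition.extend_parts, mem_insert]
    constructor
    · rintro ⟨d, (rfl | hd), hdle, rfl⟩
      · exact absurd le_rfl hdle
      · rwa [Finset.sdiff_eq_self_iff_disjoint.mpr (disj_part ht Q hd)]
    · intro hc
      refine ⟨c, Or.inr hc, ?_, Finset.sdiff_eq_self_iff_disjoint.mpr (disj_part ht Q hc)⟩
      intro hle
      obtain ⟨x, hx⟩ := Q.nonempty_of_mem_parts hc
      exact (Finset.disjoint_left.mp (disj_part ht Q hc)) hx (hle hx)

private lemma card_step {s : Finset α} {a : α} (ha : a ∈ s) :
    Fintype.card (Finpartition s)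
      = ∑ t ∈ (s.erase a).powerset, Fintype.card (Finpartition (s.erase a \ t)) := by
  classical
  rw [Fintype.card, Finset.card_eq_sum_card_fiberwise
    (f := fun P : Finpartition s => (P.part a).erase a) (t := (s.erase a).powerset)
    (fun P _ => mem_powerset.mpr (Finset.erase_subset_erase a (P.le (P.part_mem.mpr ha))))]
  refine Finset.sum_congr rfl fun t htm => ?_
  rw [← Fintype.card_subtype, Fintype.card_congr (fiberEquiv a ha t (mem_powerset.mp htm))]


private lemma card_finpartition : ∀ (n : ℕ) (s : Finset α), s.card = n →
    Fintype.card (Finpartition s) = bellAux n := by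
  intro n
  induction n using Nat.strong_induction_on with
  | _ n ih =>
    match n with
    | 0 =>
      intro s hs
      rw [Finset.card_eq_zero] at hs
      subst hs
      rw [bellAux]
      haveI : Unique (Finpartition (∅ : Finset α)) :=
        inferInstanceAs (Unique (Finpartition (⊥ : Finset α)))
      exact Fintype.card_unique
    | n+1 =>
      intro s hs
      obtain ⟨a, ha⟩ : s.Nonempty := Finset.card_pos.mp (by omega)
      have hcard : (s.erase a).card = n := by
        rw [Finset.card_erase_of_mem ha, hs]
        omega
      rw [card_step ha]
      have : ∀ t ∈ (s.erase a).powerset,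
          Fintype.card (Finpartition (s.erase a \ t)) = bellAux (n - t.card) := by
        intro t htm
        refine ih (n - t.card) (by omega) _ ?_
        rw [Finset.card_sdiff_of_subset (mem_powerset.mp htm), hcard]
      rw [Finset.sum_congr rfl this]
      rw [Finset.sum_powerset_apply_card (f := fun j => bellAux (n - j)) (x := s.erase a)]
      simp only [smul_eq_mul, hcard]
      rw [bellAux]

/-- Dobinski's formula: the Bell number `B_n`, i.e. the number of set partitions of an
`n`-element set, equals `e⁻¹ ∑_{k=0}^∞ k^n / k!`. -/
theorem dobinski (n : ℕ) :
    (Fintype.card (Finpartition (Finset.univ : Finset (Fin n))) : ℝ)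
      = Real.exp (-1) * ∑' k : ℕ, (k : ℝ) ^ n / (Nat.factorial k) := by
  rw [card_finpartition n Finset.univ (by simp), tsum_aux n, ← mul_assoc, ← Real.exp_add]
  norm_num
end

section
/- For every n ≥ 1, the n-th moment of the standard Gaussian distribution equals the number of pair partitions of [n]: ∫ x^n dγ(x) = #{pair partitions of [n]}, where γ is the Gaussian measure on ℝ with mean 0 and variance 1. In particular the moment is 0 for odd n and equals (2m)!/(2^m · m!) for n = 2m. -/
open MeasureTheory ProbabilityTheory
open scoped NNReal ENNReal

section Analysis
open Real Filter

lemma integrable_pow_exp (n : ℕ) :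
    Integrable fun x : ℝ => x ^ n * rexp (-(2⁻¹:ℝ) * x ^ 2) := by
  have h := integrable_rpow_mul_exp_neg_mul_sq (b := (2⁻¹:ℝ)) (by norm_num)
    (s := (n:ℝ)) (lt_of_lt_of_le neg_one_lt_zero (Nat.cast_nonneg n))
  simpa [Real.rpow_natCast] using h

lemma tendsto_pow_exp_top (k : ℕ) :
    Tendsto (fun x : ℝ => x ^ k * rexp (-(2⁻¹:ℝ) * x ^ 2)) atTop (nhds 0) := by
  have h := rpow_mul_exp_neg_mul_sq_isLittleO_exp_neg (b := (2⁻¹:ℝ)) (by norm_num) (k:ℝ)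
  have h3 : Tendsto (fun x : ℝ => -(1/2 : ℝ) * x) atTop atBot :=
    (tendsto_const_mul_atBot_of_neg (by norm_num : -(1/2:ℝ) < 0)).mpr tendsto_id
  have h2 : Tendsto (fun x : ℝ => rexp (-(1/2) * x)) atTop (nhds 0) :=
    Real.tendsto_exp_comp_nhds_zero.mpr h3
  have := h.isBigO.trans_tendsto h2
  simpa [Real.rpow_natCast] using this

lemma tendsto_pow_exp_bot (k : ℕ) :
    Tendsto (fun x : ℝ => x ^ k * rexp (-(2⁻¹:ℝ) * x ^ 2)) atBot (nhds 0) := by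
  have h := (tendsto_pow_exp_top k).comp tendsto_neg_atBot_atTop
  have heq : ((fun x : ℝ => x ^ k * rexp (-(2⁻¹:ℝ) * x ^ 2)) ∘ (fun x : ℝ => -x))
      = fun x : ℝ => (-1:ℝ)^k * (x ^ k * rexp (-(2⁻¹:ℝ) * x ^ 2)) := by
    funext x; simp only [Function.comp_apply]; rw [neg_pow, neg_sq]; ring
  rw [heq] at h
  have := h.const_mul ((-1:ℝ)^(k:ℕ))
  simp only [mul_zero, ← mul_assoc, ← mul_pow, neg_mul, neg_neg, one_mul, one_pow] at this
  simpa using this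

lemma J_rec (n : ℕ) :
    ∫ x : ℝ, x ^ (n+2) * rexp (-(2⁻¹:ℝ) * x ^ 2)
      = (n+1 : ℝ) * ∫ x : ℝ, x ^ n * rexp (-(2⁻¹:ℝ) * x ^ 2) := by
  set e : ℝ → ℝ := fun x => rexp (-(2⁻¹:ℝ) * x ^ 2) with he
  set f : ℝ → ℝ := fun x => x ^ (n+1) * e x with hf
  set f' : ℝ → ℝ := fun x => (n+1 : ℝ) * (x ^ n * e x) - x ^ (n+2) * e x with hf'
  have hderiv : ∀ x : ℝ, HasDerivAt f (f' x) x := by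
    intro x
    have h2 : HasDerivAt e (e x * (-(2⁻¹:ℝ) * (2 * x ^ 1))) x :=
      (((hasDerivAt_pow 2 x).const_mul (-(2⁻¹:ℝ))).exp)
    have h1 : HasDerivAt (fun x : ℝ => x ^ (n+1)) ((n+1 : ℝ) * x ^ n) x := by
      simpa using hasDerivAt_pow (n+1) x
    have : HasDerivAt f ((n+1 : ℝ) * x ^ n * e x + x ^ (n+1) * (e x * (-(2⁻¹:ℝ) * (2 * x ^ 1)))) x := h1.mul h2
    convert this using 1
    simp only [hf', he]
    ring
  have hint : Integrable f' := by
    exact ((integrable_pow_exp n).const_mul _).sub (integrable_pow_exp (n+2))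
  have h0 : ∫ x : ℝ, f' x = 0 := by
    have := integral_of_hasDerivAt_of_tendsto hderiv hint
      (tendsto_pow_exp_bot (n+1)) (tendsto_pow_exp_top (n+1))
    simpa using this
  have hsplit : ∫ x : ℝ, f' x
      = (n+1 : ℝ) * (∫ x : ℝ, x ^ n * e x) - ∫ x : ℝ, x ^ (n+2) * e x := by
    rw [hf']
    rw [integral_sub (((integrable_pow_exp n).const_mul _)) (integrable_pow_exp (n+2)),
      integral_const_mul]
  rw [hsplit] at h0
  simp only [he] at h0
  linarith

lemma moment_eq (n : ℕ) :
    ∫ x, x ^ n ∂(gaussianReal 0 1)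
      = (√(2*π))⁻¹ * ∫ x : ℝ, x ^ n * rexp (-(2⁻¹:ℝ) * x ^ 2) := by
  rw [gaussianReal_of_var_ne_zero _ one_ne_zero]
  have hd : (volume : Measure ℝ).withDensity (gaussianPDF 0 1)
      = (volume : Measure ℝ).withDensity (fun x => (((gaussianPDFReal 0 1 x).toNNReal : ℝ≥0) : ℝ≥0∞)) := rfl
  rw [hd, integral_withDensity_eq_integral_smul
    ((measurable_gaussianPDFReal 0 1).real_toNNReal), ← integral_const_mul]
  apply integral_congr_ae
  filter_upwards with x
  rw [NNReal.smul_def, smul_eq_mul, Real.coe_toNNReal _ (gaussianPDFReal_nonneg 0 1 x),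
    gaussianPDFReal]
  have h1 : -(x - 0)^2/(2*((1:ℝ≥0):ℝ)) = -(2⁻¹:ℝ) * x^2 := by
    push_cast; ring
  rw [h1]
  push_cast
  ring

lemma even_moment (m : ℕ) :
    ∫ x, x ^ (2*m) ∂(gaussianReal 0 1)
      = ((2*m).factorial : ℝ) / (2^m * m.factorial) := by
  induction m with
  | zero => simp
  | succ m ih =>
    have h1 : 2*(m+1) = (2*m)+2 := by ring
    rw [h1, moment_eq, J_rec, ← mul_assoc, mul_comm ((√(2*π))⁻¹) _, mul_assoc, ← moment_eq, ih]
    have h2 : (2*m)+2 = ((2*m)+1)+1 := by ring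
    rw [h2, Nat.factorial_succ ((2*m)+1), Nat.factorial_succ (2*m), Nat.factorial_succ m, pow_succ]
    have hm : (m.factorial : ℝ) ≠ 0 := Nat.cast_ne_zero.mpr m.factorial_ne_zero
    have h2m : ((2:ℝ))^m ≠ 0 := by positivity
    push_cast
    field_simp
    ring

lemma gaussian_map_neg : (gaussianReal 0 1).map (fun x => -x) = gaussianReal 0 1 := by
  have h := gaussianReal_map_const_mul (μ := 0) (v := 1) (-1)
  have h1 : (fun x : ℝ => -x) = (fun x : ℝ => (-1) * x) := by funext x; ring
  have h2 : NNReal.mk ((-1:ℝ)^2) (sq_nonneg _) * 1 = 1 := by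
    ext; norm_num
  rw [h1]
  rw [h] 
  rw [h2]
  norm_num

lemma odd_moment {n : ℕ} (hn : Odd n) : ∫ x, x ^ n ∂(gaussianReal 0 1) = 0 := by
  have h1 : ∫ x, x ^ n ∂(gaussianReal 0 1) = ∫ x, (-x) ^ n ∂(gaussianReal 0 1) := by
    conv_lhs => rw [← gaussian_map_neg]
    rw [integral_map measurable_neg.aemeasurable]
    exact (measurable_id.pow_const n).aestronglyMeasurable
  have h2 : ∫ x, (-x) ^ n ∂(gaussianReal 0 1) = - ∫ x, x ^ n ∂(gaussianReal 0 1) := by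
    rw [← integral_neg]
    apply integral_congr_ae
    filter_upwards with x
    exact hn.neg_pow x
  rw [h2] at h1
  linarith

end Analysis


abbrev invs (α : Type*) : Type _ := {f : α → α // Function.Involutive f ∧ ∀ x, f x ≠ x}

def invsCongr {α β : Type*} (e : α ≃ β) : invs α ≃ invs β where
  toFun F := ⟨e ∘ F.1 ∘ e.symm, fun x => by simp [F.2.1 (e.symm x)],
    fun x h => F.2.2 (e.symm x) (by simpa using congrArg e.symm h)⟩
  invFun G := ⟨e.symm ∘ G.1 ∘ e, fun x => by simp [G.2.1 (e x)],
    fun x h => G.2.2 (e x) (by simpa using congrArg e h)⟩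
  left_inv F := Subtype.ext (funext fun x => by simp)
  right_inv G := Subtype.ext (funext fun x => by simp)

variable {β : Type*} [DecidableEq β]

def extFun (b : β) (g : {x : β // x ≠ b} → {x : β // x ≠ b}) : Option β → Option β
  | none => some b
  | some x => if h : x = b then none else some (g ⟨x, h⟩)

lemma extFun_mem (b : β) (g : {x : β // x ≠ b} → {x : β // x ≠ b})
    (hginv : Function.Involutive g) (hgne : ∀ x, g x ≠ x) :
    Function.Involutive (extFun b g) ∧ ∀ x, extFun b g x ≠ x := by
  constructor
  · intro o
    match o with
    | none =>
        show extFun b g (some b) = none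
        simp [extFun]
    | some x =>
        by_cases h : x = b
        · simp [extFun, h]
        · have h2 : ((g ⟨x, h⟩ : {x : β // x ≠ b}) : β) ≠ b := (g ⟨x, h⟩).2
          simp only [extFun, dif_neg h, dif_neg h2, Option.some.injEq]
          rw [show (⟨(g ⟨x, h⟩ : {x : β // x ≠ b}), h2⟩ : {x : β // x ≠ b}) = g ⟨x, h⟩ from rfl,
            hginv ⟨x, h⟩]
  · intro o
    match o with
    | none => simp [extFun]
    | some x =>
        by_cases h : x = b
        · simp [extFun, h]
        · simp only [extFun, dif_neg h, ne_eq, Option.some.injEq]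
          intro hc
          exact hgne ⟨x, h⟩ (Subtype.ext hc)

def psi : (Σ b : β, invs {x : β // x ≠ b}) → invs (Option β) :=
  fun p => ⟨extFun p.1 p.2.1, extFun_mem p.1 p.2.1 p.2.2.1 p.2.2.2⟩

lemma psi_bijective : Function.Bijective (psi (β := β)) := by
  constructor
  · rintro ⟨b, g, hg⟩ ⟨b', g', hg'⟩ h
    have h1 := congrFun (congrArg Subtype.val h)
    have hb : b = b' := by
      have := h1 none
      simpa [psi, extFun] using this
    subst hb
    have hgg : g = g' := by
      funext x
      have := h1 (some x.1)
      simp only [psi, extFun, dif_neg x.2, Option.some.injEq] at this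
      exact Subtype.ext (by rw [show (⟨x.1, x.2⟩ : {y : β // y ≠ b}) = x from Subtype.ext rfl] at this; exact this)
    subst hgg
    rfl
  · rintro ⟨f, hinv, hne⟩
    obtain ⟨b, hb⟩ : ∃ b, f none = some b := by
      cases h : f none with
      | none => exact absurd h (hne none)
      | some b => exact ⟨b, rfl⟩
    have hex : ∀ x : {x : β // x ≠ b}, ∃ y : {x : β // x ≠ b}, f (some x.1) = some y.1 := by
      intro ⟨x, hx⟩
      cases h : f (some x) with
      | none =>
          exfalso
          have : f (f (some x)) = some x := hinv (some x)
          rw [h, hb] at this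
          exact hx (Option.some_injective β this).symm
      | some y =>
          have hyb : y ≠ b := by
            intro hyb
            subst hyb
            have : f (f (some x)) = f (f none) := by rw [h, hb]
            rw [hinv, hinv] at this
            exact Option.some_ne_none _ this
          exact ⟨⟨y, hyb⟩, by simp [h]⟩
    choose g hg using hex
    have hginv : Function.Involutive g := by
      intro x
      have h1 := hg x
      have h2 := hg (g x)
      have := hinv (some x.1)
      rw [h1, h2] at this
      exact Subtype.ext (Option.some_injective β this)
    have hgne : ∀ x, g x ≠ x := by
      intro x hx
      have h1 := hg x
      rw [hx] at h1
      exact hne (some x.1) h1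
    refine ⟨⟨b, g, hginv, hgne⟩, ?_⟩
    apply Subtype.ext
    funext o
    match o with
    | none => simp [psi, extFun, hb]
    | some x =>
        by_cases h : x = b
        · have h2 : f (some b) = none := by
            have := hinv none
            rwa [hb] at this
          simp [psi, extFun, h, h2]
        · simp only [psi, extFun, dif_neg h]
          exact (hg ⟨x, h⟩).symm

instance : Unique (invs (Fin 0)) where
  default := ⟨id, fun x => x.elim0, fun x => x.elim0⟩
  uniq := fun F => Subtype.ext (funext fun x => x.elim0)

lemma invs_fin_zero : Nat.card (invs (Fin 0)) = 1 := Nat.card_unique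

lemma invs_rec (n : ℕ) :
    Nat.card (invs (Fin (n+2))) = (n+1) * Nat.card (invs (Fin n)) := by
  have e1 : invs (Fin (n+2)) ≃ invs (Option (Fin (n+1))) := invsCongr (finSuccEquiv (n+1))
  have h2 : Nat.card (Σ b : Fin (n+1), invs {x : Fin (n+1) // x ≠ b})
      = Nat.card (invs (Option (Fin (n+1)))) :=
    Nat.card_eq_of_bijective _ psi_bijective
  have e3 : ∀ b : Fin (n+1), {x : Fin (n+1) // x ≠ b} ≃ Fin n := fun b =>
    Fintype.equivFinOfCardEq (by
      have := Fintype.card_subtype_compl (fun x : Fin (n+1) => x = b)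
      simpa using this)
  have e4 : (Σ b : Fin (n+1), invs {x : Fin (n+1) // x ≠ b})
      ≃ (Fin (n+1)) × invs (Fin n) :=
    (Equiv.sigmaCongrRight fun b => invsCongr (e3 b)).trans (Equiv.sigmaEquivProd _ _)
  rw [Nat.card_congr e1, ← h2, Nat.card_congr e4, Nat.card_prod, Nat.card_eq_fintype_card,
    Fintype.card_fin]

lemma invs_even (m : ℕ) :
    (Nat.card (invs (Fin (2*m))) : ℝ) = ((2*m).factorial : ℝ) / (2^m * m.factorial) := by
  induction m with
  | zero => simpa using invs_fin_zero
  | succ m ih =>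
    have h1 : 2*(m+1) = (2*m)+2 := by ring
    rw [h1, invs_rec]
    push_cast
    rw [ih]
    have h2 : (2*m)+2 = ((2*m)+1)+1 := by ring
    rw [h2, Nat.factorial_succ ((2*m)+1), Nat.factorial_succ (2*m), Nat.factorial_succ m, pow_succ]
    have hm : (m.factorial : ℝ) ≠ 0 := Nat.cast_ne_zero.mpr m.factorial_ne_zero
    have h2m : ((2:ℝ))^m ≠ 0 := by positivity
    push_cast
    field_simp
    ring

variable {α : Type*} [Fintype α] [DecidableEq α]

def pairSetoid (f : α → α) (hinv : Function.Involutive f) : Setoid α where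
  r a b := b = a ∨ b = f a
  iseqv := by
    constructor
    · exact fun a => Or.inl rfl
    · rintro a b (rfl | rfl)
      · exact Or.inl rfl
      · exact Or.inr (hinv a).symm
    · rintro a b c (rfl | rfl) h
      · exact h
      · rcases h with rfl | rfl
        · exact Or.inr rfl
        · exact Or.inl (hinv a)

instance pairSetoidDec (f : α → α) (hinv : Function.Involutive f) :
    DecidableRel (pairSetoid f hinv).r :=
  fun a b => inferInstanceAs (Decidable (b = a ∨ b = f a))

def invToPart (f : α → α) (hinv : Function.Involutive f) :
    Finpartition (Finset.univ : Finset α) :=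
  Finpartition.ofSetoid (pairSetoid f hinv)

lemma part_invToPart (f : α → α) (hinv : Function.Involutive f) (a : α) :
    (invToPart f hinv).part a = {a, f a} := by
  ext b
  rw [invToPart, Finpartition.mem_part_ofSetoid_iff_rel]
  show (b = a ∨ b = f a) ↔ _
  simp [Finset.mem_insert, eq_comm]

lemma invToPart_parts_card (f : α → α) (hinv : Function.Involutive f)
    (hne : ∀ x, f x ≠ x) {B : Finset α} (hB : B ∈ (invToPart f hinv).parts) : B.card = 2 := by
  obtain ⟨a, ha⟩ := Finpartition.nonempty_of_mem_parts _ hB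
  have h1 : (invToPart f hinv).part a = B := Finpartition.part_eq_of_mem _ hB ha
  rw [← h1, part_invToPart]
  exact Finset.card_pair (hne a).symm

def phi (n : ℕ) (F : invs (Fin n)) :
    {π : Finpartition (Finset.univ : Finset (Fin n)) // ∀ B ∈ π.parts, B.card = 2} :=
  ⟨invToPart F.1 F.2.1, fun _ hB => invToPart_parts_card F.1 F.2.1 F.2.2 hB⟩

lemma phi_bijective (n : ℕ) : Function.Bijective (phi n) := by
  constructor
  · rintro ⟨f, hfinv, hfne⟩ ⟨g, hginv, hgne⟩ h
    have h1 : invToPart f hfinv = invToPart g hginv := congrArg Subtype.val h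
    apply Subtype.ext
    funext a
    have h2 : ({a, f a} : Finset (Fin n)) = {a, g a} := by
      rw [← part_invToPart f hfinv a, ← part_invToPart g hginv a, h1]
    have h3 : f a ∈ ({a, g a} : Finset (Fin n)) := by
      rw [← h2]; simp
    rcases Finset.mem_insert.mp h3 with h4 | h4
    · exact absurd h4 (hfne a)
    · simpa using h4
  · rintro ⟨π, hπ⟩
    have hex : ∀ a : Fin n, ∃ b, b ∈ π.part a ∧ b ≠ a := fun a =>
      Finset.exists_mem_ne
        (by rw [hπ _ (π.part_mem.mpr (Finset.mem_univ a))]; norm_num) a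
    choose f hf1 hf2 using hex
    have hpart : ∀ a, π.part a = {a, f a} := by
      intro a
      refine (Finset.eq_of_subset_of_card_le ?_ ?_).symm
      · intro b hb
        rcases Finset.mem_insert.mp hb with rfl | hb
        · exact π.mem_part (Finset.mem_univ b)
        · rw [Finset.mem_singleton.mp hb]; exact hf1 a
      · rw [hπ _ (π.part_mem.mpr (Finset.mem_univ a)), Finset.card_pair (hf2 a).symm]
    have hinv : Function.Involutive f := by
      intro a
      have hpfa : π.part (f a) = π.part a :=
        (π.mem_part_iff_part_eq_part (Finset.mem_univ (f a)) (Finset.mem_univ a)).mp (hf1 a)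
      have h5 : f (f a) ∈ π.part a := by rw [← hpfa]; exact hf1 (f a)
      rw [hpart a] at h5
      rcases Finset.mem_insert.mp h5 with h6 | h6
      · exact h6
      · exact absurd (Finset.mem_singleton.mp h6) (hf2 (f a))
    refine ⟨⟨f, hinv, hf2⟩, ?_⟩
    apply Subtype.ext
    show invToPart f hinv = π
    apply Finpartition.ext
    ext B
    constructor
    · intro hB
      obtain ⟨a, ha⟩ := Finpartition.nonempty_of_mem_parts _ hB
      have h1 : (invToPart f hinv).part a = B := Finpartition.part_eq_of_mem _ hB ha
      rw [← h1, part_invToPart, ← hpart a]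
      exact π.part_mem.mpr (Finset.mem_univ a)
    · intro hB
      obtain ⟨a, ha⟩ := Finpartition.nonempty_of_mem_parts _ hB
      have h1 : π.part a = B := Finpartition.part_eq_of_mem _ hB ha
      rw [← h1, hpart a, ← part_invToPart f hinv a]
      exact (invToPart f hinv).part_mem.mpr (Finset.mem_univ a)

lemma card_pairings (n : ℕ) :
    Nat.card {π : Finpartition (Finset.univ : Finset (Fin n)) // ∀ B ∈ π.parts, B.card = 2}
      = Nat.card (invs (Fin n)) :=
  (Nat.card_eq_of_bijective _ (phi_bijective n)).symm

lemma odd_no_pairing {n : ℕ} (hn : Odd n) :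
    IsEmpty {π : Finpartition (Finset.univ : Finset (Fin n)) // ∀ B ∈ π.parts, B.card = 2} := by
  constructor
  rintro ⟨π, hπ⟩
  have h1 := π.sum_card_parts
  rw [Finset.sum_congr rfl hπ, Finset.sum_const, Finset.card_univ, Fintype.card_fin,
    smul_eq_mul] at h1
  obtain ⟨k, hk⟩ := hn
  omega

/-- The `n`-th moment of the standard Gaussian distribution equals the number of pair
partitions of `[n]`; in particular it vanishes for odd `n` and equals `(2m)!/(2^m m!)`
for `n = 2m`. -/
theorem gaussian_moment_eq_card_pairings (n : ℕ) (hn : 1 ≤ n) :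
    (∫ x, x ^ n ∂(gaussianReal 0 1))
        = Nat.card {π : Finpartition (Finset.univ : Finset (Fin n)) //
            ∀ B ∈ π.parts, B.card = 2}
      ∧ (Odd n → (∫ x, x ^ n ∂(gaussianReal 0 1)) = 0)
      ∧ (∀ m : ℕ, n = 2 * m →
          (∫ x, x ^ n ∂(gaussianReal 0 1))
            = ((2 * m).factorial : ℝ) / (2 ^ m * m.factorial)) := by
  rcases Nat.even_or_odd n with he | ho
  · obtain ⟨m, hm⟩ := he
    have hn2 : n = 2 * m := by omega
    subst hn2
    refine ⟨?_, ?_, ?_⟩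
    · rw [even_moment m, card_pairings, invs_even m]
    · intro hodd
      exact absurd hodd (Nat.not_odd_iff_even.mpr ⟨m, by ring⟩)
    · intro m' hm'
      have hmm : m' = m := by omega
      subst hmm
      exact even_moment m'
  · haveI := odd_no_pairing ho
    refine ⟨?_, fun _ => odd_moment ho, ?_⟩
    · rw [odd_moment ho, Nat.card_of_isEmpty]
      simp
    · intro m hm
      rcases ho with ⟨k, hk⟩
      omega
end
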